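/- arXiv:math/0611932 — 8 statements merged into one kernel-verified Lean document; each statement's English description precedes it below -/
import Mathlib

section
/- Consider the asynchronous delayed consensus system. If there exists T ≥ 0 such that for every t0 ≥ 0 the union of the communication topology G^0 over the interval [t0, t0+T] contains a spanning tree, then the system solves a consensus problem: there exists c ∈ ℝ such that lim_{t→∞} x_i(t) = c for every agent i. -/
open Filter Topology

section ADCdev
open Set
set_option linter.unusedVariables false
structure ADCSys (n : ℕ) (τlo τhi alo ahi : ℝ) (K : ℕ) (T : ℝ) where
  x : Fin n → ℝ → ℝ
  t : Fin n → ℕ → ℝ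
  N : Fin n → ℕ → Finset (Fin n)
  a : Fin n → ℕ → Fin n → ℝ
  τd : Fin n → ℕ → Fin n → ℝ
  hn : 1 ≤ n
  hτlo : 0 < τlo
  hττ : τlo ≤ τhi
  halo : 0 < alo
  haa : alo ≤ ahi
  hcont : ∀ i, Continuous (x i)
  ht0 : ∀ i, t i 0 = 0
  hstep : ∀ i k, τlo ≤ t i (k + 1) - t i k ∧ t i (k + 1) - t i k ≤ τhi
  hweight : ∀ i k, ∀ j ∈ N i k, a i k j ∈ Set.Icc alo ahi
  hdelay : ∀ i k, ∀ j ∈ N i k, τd i k j ∈ Set.Icc (0 : ℝ) ((K : ℝ) * τlo)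
  M0 : ℝ
  hbdd : ∀ i, ∀ s : ℝ, s ≤ 0 → |x i s| ≤ M0
  hode : ∀ i k, ∀ s ∈ Set.Ico (t i k) (t i (k + 1)),
      HasDerivWithinAt (x i)
        (if (N i k).Nonempty then
            ∑ j ∈ N i k, a i k j / (∑ l ∈ N i k, a i k l) *
              (x j (t i k - τd i k j) - x i s)
          else 0)
        (Set.Ici s) s
  hT : 0 ≤ T
  hspan : ∀ t0 : ℝ, 0 ≤ t0 → ∃ root : Fin n, ∀ v : Fin n,
      Relation.ReflTransGen
        (fun p q : Fin n => ∃ s ∈ Set.Icc t0 (t0 + T), ∃ k : ℕ,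
          s ∈ Set.Ico (t q k) (t q (k + 1)) ∧ p ∈ N q k)
        root v

/-- look-back horizon -/
noncomputable def ADCSys.Dd (τlo τhi : ℝ) (K : ℕ) : ℝ := (K : ℝ) * τlo + τhi

namespace ADCSys

variable {n : ℕ} {τlo τhi alo ahi : ℝ} {K : ℕ} {T : ℝ}
variable (S : ADCSys n τlo τhi alo ahi K T)

lemma Dd_nonneg (S : ADCSys n τlo τhi alo ahi K T) : 0 ≤ Dd τlo τhi K := by
  have h1 : (0:ℝ) ≤ (K:ℝ) * τlo := mul_nonneg (Nat.cast_nonneg K) S.hτlo.le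
  have := S.hτlo; have := S.hττ
  simp only [Dd]; linarith

lemma Dd_ge_τhi (S : ADCSys n τlo τhi alo ahi K T) : τhi ≤ Dd τlo τhi K := by
  have h1 : (0:ℝ) ≤ (K:ℝ) * τlo := mul_nonneg (Nat.cast_nonneg K) S.hτlo.le
  simp only [Dd]; linarith

lemma t_mono (j : Fin n) : StrictMono (S.t j) := by
  apply strictMono_nat_of_lt_succ
  intro k
  have := (S.hstep j k).1
  have := S.hτlo
  linarith

lemma t_succ_le (j : Fin n) (k : ℕ) : S.t j k + τlo ≤ S.t j (k+1) := by
  have := (S.hstep j k).1; linarith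

lemma t_succ_ge (j : Fin n) (k : ℕ) : S.t j (k+1) ≤ S.t j k + τhi := by
  have := (S.hstep j k).2; linarith

lemma t_ge (j : Fin n) (k : ℕ) : (k : ℝ) * τlo ≤ S.t j k := by
  induction k with
  | zero => simp [S.ht0]
  | succ m ih =>
      have := S.t_succ_le j m
      push_cast
      linarith

lemma t_nonneg (j : Fin n) (k : ℕ) : 0 ≤ S.t j k := by
  have := S.t_ge j k
  have h2 : (0:ℝ) ≤ (k:ℝ) * τlo := mul_nonneg (Nat.cast_nonneg k) S.hτlo.le
  linarith [S.t_ge j k]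

/-- every nonnegative time belongs to some update interval -/
lemma exists_interval (j : Fin n) (s : ℝ) (hs : 0 ≤ s) :
    ∃ k, S.t j k ≤ s ∧ s < S.t j (k + 1) := by
  by_contra h
  push_neg at h
  have hall : ∀ k, S.t j k ≤ s := by
    intro k
    induction k with
    | zero => simpa [S.ht0] using hs
    | succ m ih => exact h m ih
  obtain ⟨k, hk⟩ := exists_nat_gt (s / τlo)
  have h1 : s < (k : ℝ) * τlo := by
    rw [div_lt_iff₀ S.hτlo] at hk; linarith
  have := S.t_ge j k
  have := hall k
  linarith

/-- the constant target value on update interval `k` of agent `j` -/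
noncomputable def yc (j : Fin n) (k : ℕ) : ℝ :=
  ∑ l ∈ S.N j k, S.a j k l / (∑ l' ∈ S.N j k, S.a j k l') * S.x l (S.t j k - S.τd j k l)

lemma sumw_pos (j : Fin n) (k : ℕ) (hne : (S.N j k).Nonempty) :
    0 < ∑ l ∈ S.N j k, S.a j k l := by
  apply Finset.sum_pos (fun l hl => lt_of_lt_of_le S.halo (S.hweight j k l hl).1) hne

lemma w_nonneg (j : Fin n) (k : ℕ) (l : Fin n) (hl : l ∈ S.N j k) :
    0 ≤ S.a j k l / (∑ l' ∈ S.N j k, S.a j k l') := by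
  have hne : (S.N j k).Nonempty := ⟨l, hl⟩
  exact div_nonneg (le_of_lt (lt_of_lt_of_le S.halo (S.hweight j k l hl).1))
    (S.sumw_pos j k hne).le

lemma sum_w (j : Fin n) (k : ℕ) (hne : (S.N j k).Nonempty) :
    ∑ l ∈ S.N j k, S.a j k l / (∑ l' ∈ S.N j k, S.a j k l') = 1 := by
  rw [← Finset.sum_div]
  exact div_self (S.sumw_pos j k hne).ne'

/-- minimal weight -/
noncomputable def wmin (n : ℕ) (alo ahi : ℝ) : ℝ := alo / ((n : ℝ) * ahi)

lemma wmin_pos (S : ADCSys n τlo τhi alo ahi K T) : 0 < wmin n alo ahi := by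
  have hn : (0:ℝ) < n := by exact_mod_cast Nat.lt_of_lt_of_le Nat.zero_lt_one S.hn
  have : (0:ℝ) < ahi := lt_of_lt_of_le S.halo S.haa
  exact div_pos S.halo (by positivity)

lemma wmin_le_one (S : ADCSys n τlo τhi alo ahi K T) : wmin n alo ahi ≤ 1 := by
  have hn : (1:ℝ) ≤ n := by exact_mod_cast S.hn
  have hahi : (0:ℝ) < ahi := lt_of_lt_of_le S.halo S.haa
  rw [wmin, div_le_one (by positivity)]
  nlinarith [S.haa, S.halo]

lemma w_ge_wmin (j : Fin n) (k : ℕ) (l : Fin n) (hl : l ∈ S.N j k) :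
    wmin n alo ahi ≤ S.a j k l / (∑ l' ∈ S.N j k, S.a j k l') := by
  have hne : (S.N j k).Nonempty := ⟨l, hl⟩
  have hs := S.sumw_pos j k hne
  have hn : (0:ℝ) < n := by exact_mod_cast Nat.lt_of_lt_of_le Nat.zero_lt_one S.hn
  have hahi : (0:ℝ) < ahi := lt_of_lt_of_le S.halo S.haa
  rw [wmin, div_le_div_iff₀ (by positivity) hs]
  have hcard : ((S.N j k).card : ℝ) ≤ n := by
    have := Finset.card_le_univ (S.N j k)
    simp only [Finset.card_univ, Fintype.card_fin] at this
    exact_mod_cast this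
  have hsum_le : (∑ l' ∈ S.N j k, S.a j k l') ≤ (S.N j k).card * ahi := by
    calc (∑ l' ∈ S.N j k, S.a j k l') ≤ ∑ l' ∈ S.N j k, ahi :=
          Finset.sum_le_sum (fun i hi => (S.hweight j k i hi).2)
      _ = (S.N j k).card * ahi := by rw [Finset.sum_const, nsmul_eq_mul]
  have hal : alo ≤ S.a j k l := (S.hweight j k l hl).1
  have h1 : alo * (∑ l' ∈ S.N j k, S.a j k l') ≤ alo * ((S.N j k).card * ahi) :=
    mul_le_mul_of_nonneg_left hsum_le S.halo.le
  have h2 : alo * ((S.N j k).card * ahi) ≤ alo * ((n:ℝ) * ahi) := by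
    apply mul_le_mul_of_nonneg_left _ S.halo.le
    exact mul_le_mul_of_nonneg_right hcard hahi.le
  have h3 : alo * ((n:ℝ) * ahi) ≤ S.a j k l * ((n:ℝ) * ahi) :=
    mul_le_mul_of_nonneg_right hal (by positivity)
  linarith

/-- solution formula on one update interval (valid on the closed interval) -/
lemma formula (j : Fin n) (k : ℕ) (s : ℝ) (hs : s ∈ Icc (S.t j k) (S.t j (k+1))) :
    S.x j s = if (S.N j k).Nonempty then
        S.yc j k + (S.x j (S.t j k) - S.yc j k) * Real.exp (S.t j k - s)
      else S.x j (S.t j k) := by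
  by_cases hne : (S.N j k).Nonempty
  · simp only [hne, if_true]
    -- g s = (x j s - yc) * exp (s - t j k) is constant on the interval
    set c := S.yc j k with hc
    set tk := S.t j k with htk
    have key : ∀ u ∈ Icc tk (S.t j (k+1)),
        (S.x j u - c) * Real.exp (u - tk) = (S.x j tk - c) * Real.exp (tk - tk) := by
      apply constant_of_has_deriv_right_zero
      · exact ((S.hcont j).sub continuous_const).mul
          ((Real.continuous_exp.comp (continuous_id.sub continuous_const))) |>.continuousOn
      · intro u hu
        have hder := S.hode j k u hu
        rw [if_pos hne] at hder
        have hder' : HasDerivWithinAt (S.x j) (c - S.x j u) (Ici u) u := by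
          convert hder using 1
          rw [hc, yc]
          simp only [mul_sub]
          rw [Finset.sum_sub_distrib, ← Finset.sum_mul, S.sum_w j k hne, one_mul]
        have hexp : HasDerivWithinAt (fun u : ℝ => Real.exp (u - tk))
            (Real.exp (u - tk)) (Ici u) u := by
          simpa using (((hasDerivAt_id u).sub_const tk).exp).hasDerivWithinAt
        have := (hder'.sub_const c).mul hexp
        exact this.congr_deriv (by ring)
    have := key s hs
    rw [sub_self, Real.exp_zero, mul_one] at this
    have h2 : (S.x j s - c) * (Real.exp (s - tk) * Real.exp (tk - s))
        = (S.x j tk - c) * Real.exp (tk - s) := by rw [← mul_assoc, this]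
    rw [← Real.exp_add] at h2
    have h0 : (s - tk) + (tk - s) = 0 := by ring
    rw [h0, Real.exp_zero, mul_one] at h2
    linarith
  · simp only [hne, if_false]
    have key : ∀ u ∈ Icc (S.t j k) (S.t j (k+1)), S.x j u = S.x j (S.t j k) := by
      apply constant_of_has_deriv_right_zero (S.hcont j).continuousOn
      intro u hu
      have hder := S.hode j k u hu
      rwa [if_neg hne] at hder
    exact key s hs

lemma yc_le (j : Fin n) (k : ℕ) (hne : (S.N j k).Nonempty) (B : ℝ)
    (hB : ∀ l ∈ S.N j k, S.x l (S.t j k - S.τd j k l) ≤ B) : S.yc j k ≤ B := by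
  rw [yc]
  calc ∑ l ∈ S.N j k, S.a j k l / (∑ l' ∈ S.N j k, S.a j k l') * S.x l (S.t j k - S.τd j k l)
      ≤ ∑ l ∈ S.N j k, S.a j k l / (∑ l' ∈ S.N j k, S.a j k l') * B := by
        apply Finset.sum_le_sum
        intro l hl
        exact mul_le_mul_of_nonneg_left (hB l hl) (S.w_nonneg j k l hl)
    _ = B := by rw [← Finset.sum_mul, S.sum_w j k hne, one_mul]

lemma yc_ge (j : Fin n) (k : ℕ) (hne : (S.N j k).Nonempty) (B : ℝ)
    (hB : ∀ l ∈ S.N j k, B ≤ S.x l (S.t j k - S.τd j k l)) : B ≤ S.yc j k := by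
  rw [yc]
  calc B = ∑ l ∈ S.N j k, S.a j k l / (∑ l' ∈ S.N j k, S.a j k l') * B := by
        rw [← Finset.sum_mul, S.sum_w j k hne, one_mul]
    _ ≤ _ := by
        apply Finset.sum_le_sum
        intro l hl
        exact mul_le_mul_of_nonneg_left (hB l hl) (S.w_nonneg j k l hl)

lemma yc_ge_strong (j : Fin n) (k : ℕ) (p : Fin n) (hp : p ∈ S.N j k) (m β : ℝ)
    (hβ : 0 ≤ β)
    (hall : ∀ l ∈ S.N j k, m ≤ S.x l (S.t j k - S.τd j k l))
    (hpv : m + β ≤ S.x p (S.t j k - S.τd j k p)) :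
    m + wmin n alo ahi * β ≤ S.yc j k := by
  have hne : (S.N j k).Nonempty := ⟨p, hp⟩
  have key : ∑ l ∈ S.N j k, S.a j k l / (∑ l' ∈ S.N j k, S.a j k l') *
      (S.x l (S.t j k - S.τd j k l) - m) ≥ wmin n alo ahi * β := by
    have h1 : S.a j k p / (∑ l' ∈ S.N j k, S.a j k l') *
        (S.x p (S.t j k - S.τd j k p) - m) ≥ wmin n alo ahi * β := by
      apply mul_le_mul (S.w_ge_wmin j k p hp) (by linarith) hβ
        (S.w_nonneg j k p hp)
    have h2 := Finset.single_le_sum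
      (f := fun l => S.a j k l / (∑ l' ∈ S.N j k, S.a j k l') *
        (S.x l (S.t j k - S.τd j k l) - m))
      (fun l hl => mul_nonneg (S.w_nonneg j k l hl) (by linarith [hall l hl])) hp
    linarith
  have expand : ∑ l ∈ S.N j k, S.a j k l / (∑ l' ∈ S.N j k, S.a j k l') *
      (S.x l (S.t j k - S.τd j k l) - m) = S.yc j k - m := by
    simp only [mul_sub]
    rw [Finset.sum_sub_distrib, ← Finset.sum_mul, S.sum_w j k hne, one_mul, yc]
  linarith [key, expand ▸ key]

/-- key invariance lemma: a bound over one look-back window propagates forever -/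
lemma invariance (t1 : ℝ) (ht1 : 0 ≤ t1) (B : ℝ)
    (hB : ∀ j s, t1 - Dd τlo τhi K ≤ s → s ≤ t1 → S.x j s ≤ B) :
    ∀ j s, t1 - Dd τlo τhi K ≤ s → S.x j s ≤ B := by
  have hτlo := S.hτlo; have hττ := S.hττ
  set D := Dd τlo τhi K with hD
  have hDτ : τhi ≤ D := S.Dd_ge_τhi
  have hDK : (K:ℝ) * τlo + τhi = D := rfl
  -- Q u : bound holds up to time u
  set Q : ℝ → Prop := fun u => ∀ j s, t1 - D ≤ s → s ≤ u → S.x j s ≤ B with hQ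
  have hQmono : ∀ u u', u ≤ u' → Q u' → Q u := by
    intro u u' huu h j s h1 h2
    exact h j s h1 (le_trans h2 huu)
  have hQt1 : Q t1 := hB
  have main : ∀ u, t1 ≤ u → Q u := by
    by_contra hcon
    push_neg at hcon
    set W : Set ℝ := {u | t1 ≤ u ∧ ¬ Q u} with hW
    have hWne : W.Nonempty := by
      obtain ⟨u, hu1, hu2⟩ := hcon
      exact ⟨u, hu1, hu2⟩
    have hWbdd : BddBelow W := ⟨t1, fun u hu => hu.1⟩
    set u₀ := sInf W with hu₀
    have hu₀ge : t1 ≤ u₀ := le_csInf hWne (fun u hu => hu.1)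
    have hbelow : ∀ u, t1 ≤ u → u < u₀ → Q u := by
      intro u h1 h2
      by_contra hq
      exact absurd (csInf_le hWbdd (⟨h1, hq⟩ : u ∈ W)) (not_le.mpr h2)
    have hQu₀ : Q u₀ := by
      intro j s h1 h2
      rcases lt_or_eq_of_le h2 with h2' | h2'
      · -- s < u₀
        rcases le_or_gt s t1 with h3 | h3
        · exact hB j s h1 h3
        · exact hbelow s h3.le h2' j s h1 le_rfl
      · -- s = u₀ : continuity
        rw [h2']
        rcases eq_or_lt_of_le hu₀ge with he | hlt
        · exact hB j u₀ (h2' ▸ h1) he.ge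
        · have htend : Tendsto (S.x j) (𝓝[<] u₀) (𝓝 (S.x j u₀)) :=
            ((S.hcont j).tendsto u₀).mono_left nhdsWithin_le_nhds
          apply le_of_tendsto htend
          filter_upwards [Ioo_mem_nhdsLT_of_mem (show u₀ ∈ Ioc t1 u₀ from ⟨hlt, le_rfl⟩)]
            with u hu
          exact hbelow u hu.1.le hu.2 j u (by linarith [ADCSys.Dd_nonneg S, hu.1]) le_rfl
    -- extension beyond u₀
    have hext : ∀ j : Fin n, ∃ e : ℝ, u₀ < e ∧ ∀ s, u₀ < s → s ≤ e → S.x j s ≤ B := by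
      intro j
      obtain ⟨k, hk1, hk2⟩ := S.exists_interval j u₀ (le_trans ht1 hu₀ge)
      refine ⟨S.t j (k+1), hk2, ?_⟩
      have htk_lb : t1 - τhi ≤ S.t j k := by
        have := S.t_succ_ge j k
        linarith
      have hxtk : S.x j (S.t j k) ≤ B := hQu₀ j (S.t j k) (by linarith) hk1
      have hycB : (S.N j k).Nonempty → S.yc j k ≤ B := by
        intro hne
        apply S.yc_le j k hne B
        intro l hl
        have hd := S.hdelay j k l hl
        apply hQu₀ l (S.t j k - S.τd j k l)
        · have := hd.2; linarith
        · have := hd.1; linarith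
      intro s h3 h4
      have hs : s ∈ Icc (S.t j k) (S.t j (k+1)) := ⟨by linarith, h4⟩
      have hform := S.formula j k s hs
      by_cases hne : (S.N j k).Nonempty
      · rw [if_pos hne] at hform
        have hE1 : Real.exp (S.t j k - s) ≤ 1 := by
          rw [show (1:ℝ) = Real.exp 0 by simp]
          exact Real.exp_le_exp.mpr (by linarith)
        have hE0 : 0 < Real.exp (S.t j k - s) := Real.exp_pos _
        have hy := hycB hne
        nlinarith [hform, hE0, hE1, hxtk, hy]
      · rw [if_neg hne] at hform
        linarith [hform, hxtk]
    -- derive a contradiction with u₀ = sInf W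
    choose e he1 he2 using hext
    have hnn : Nonempty (Fin n) := ⟨⟨0, S.hn⟩⟩
    set ε := Finset.univ.inf' (Finset.univ_nonempty) e with hε
    have hεgt : u₀ < ε := by
      rw [hε, Finset.lt_inf'_iff]
      exact fun j _ => he1 j
    have hQε : Q ε := by
      intro j s h1 h2
      rcases le_or_gt s u₀ with h3 | h3
      · exact hQu₀ j s h1 h3
      · have hje : ε ≤ e j := Finset.inf'_le _ (Finset.mem_univ j)
        exact he2 j s h3 (le_trans h2 hje)
    have : ε ≤ u₀ := by
      apply le_csInf hWne
      intro w hw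
      by_contra hlt
      push_neg at hlt
      exact hw.2 (hQmono w ε hlt.le hQε)
    linarith
  intro j s h1
  rcases le_or_gt s t1 with h2 | h2
  · exact hB j s h1 h2
  · exact main s h2.le j s h1 le_rfl

/-- the negated system -/
noncomputable def neg : ADCSys n τlo τhi alo ahi K T where
  x := fun i s => -(S.x i s)
  t := S.t
  N := S.N
  a := S.a
  τd := S.τd
  hn := S.hn
  hτlo := S.hτlo
  hττ := S.hττ
  halo := S.halo
  haa := S.haa
  hcont := fun i => (S.hcont i).neg
  ht0 := S.ht0
  hstep := S.hstep
  hweight := S.hweight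
  hdelay := S.hdelay
  M0 := S.M0
  hbdd := fun i s hs => by rw [abs_neg]; exact S.hbdd i s hs
  hode := by
    intro i k s hs
    have h := (S.hode i k s hs).neg
    refine h.congr_deriv ?_
    by_cases hne : (S.N i k).Nonempty
    · rw [if_pos hne, if_pos hne, ← Finset.sum_neg_distrib]
      apply Finset.sum_congr rfl
      intro l hl
      ring
    · rw [if_neg hne, if_neg hne, neg_zero]
  hT := S.hT
  hspan := S.hspan

@[simp] lemma neg_x (i : Fin n) (s : ℝ) : S.neg.x i s = -(S.x i s) := rfl
@[simp] lemma neg_t : S.neg.t = S.t := rfl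
@[simp] lemma neg_N : S.neg.N = S.N := rfl

/-- global upper bound -/
lemma glob_ub : ∀ j s, S.x j s ≤ S.M0 := by
  have h := S.invariance 0 le_rfl S.M0 (by
    intro j s _ h2
    exact (abs_le.mp (S.hbdd j s h2)).2)
  intro j s
  rcases le_or_gt s (0 - Dd τlo τhi K) with h1 | h1
  · exact (abs_le.mp (S.hbdd j s (by linarith [ADCSys.Dd_nonneg S]))).2
  · exact h j s h1.le

lemma glob_lb : ∀ j s, -S.M0 ≤ S.x j s := by
  intro j s
  have h := S.neg.glob_ub j s
  have hM : S.neg.M0 = S.M0 := rfl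
  simp only [neg_x, hM] at h
  linarith

/-- set of uniform upper bounds over the look-back window ending at `t` -/
def ubSet (t : ℝ) : Set ℝ :=
  {B | ∀ j s, t - Dd τlo τhi K ≤ s → s ≤ t → S.x j s ≤ B}

lemma ubSet_nonempty (t : ℝ) : (S.ubSet t).Nonempty :=
  ⟨S.M0, fun j s _ _ => S.glob_ub j s⟩

lemma ubSet_bddBelow (t : ℝ) : BddBelow (S.ubSet t) := by
  refine ⟨-S.M0, fun B hB => ?_⟩
  have := hB ⟨0, S.hn⟩ t (by linarith [ADCSys.Dd_nonneg S]) le_rfl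
  linarith [S.glob_lb ⟨0, S.hn⟩ t]

noncomputable def Mbar (t : ℝ) : ℝ := sInf (S.ubSet t)

lemma Mbar_isUB (t : ℝ) : ∀ j s, t - Dd τlo τhi K ≤ s → s ≤ t → S.x j s ≤ S.Mbar t := by
  intro j s h1 h2
  exact le_csInf (S.ubSet_nonempty t) (fun B hB => hB j s h1 h2)

lemma Mbar_le_of_mem (t B : ℝ) (hB : B ∈ S.ubSet t) : S.Mbar t ≤ B :=
  csInf_le (S.ubSet_bddBelow t) hB

lemma Mbar_le_M0 (t : ℝ) : S.Mbar t ≤ S.M0 :=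
  S.Mbar_le_of_mem t S.M0 (fun j s _ _ => S.glob_ub j s)

lemma Mbar_ge (t : ℝ) : -S.M0 ≤ S.Mbar t := by
  apply le_csInf (S.ubSet_nonempty t)
  intro B hB
  have := hB ⟨0, S.hn⟩ t (by linarith [ADCSys.Dd_nonneg S]) le_rfl
  linarith [S.glob_lb ⟨0, S.hn⟩ t]

/-- the windowed bound propagates to all later times -/
lemma Mbar_glb (t : ℝ) (ht : 0 ≤ t) : ∀ j s, t - Dd τlo τhi K ≤ s → S.x j s ≤ S.Mbar t :=
  S.invariance t ht (S.Mbar t) (S.Mbar_isUB t)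

lemma Mbar_antitone (t t' : ℝ) (ht : 0 ≤ t) (htt : t ≤ t') : S.Mbar t' ≤ S.Mbar t := by
  apply S.Mbar_le_of_mem
  intro j s h1 h2
  exact S.Mbar_glb t ht j s (by linarith)

lemma Mbar_negneg (t : ℝ) : S.neg.neg.Mbar t = S.Mbar t := by
  unfold Mbar
  congr 1
  unfold ubSet
  ext B
  constructor <;> intro h j s h1 h2
  · have := h j s h1 h2
    simpa using this
  · simpa using h j s h1 h2

noncomputable def mbar (t : ℝ) : ℝ := -(S.neg.Mbar t)

lemma mbar_glb (t : ℝ) (ht : 0 ≤ t) : ∀ j s, t - Dd τlo τhi K ≤ s → S.mbar t ≤ S.x j s := by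
  intro j s h1
  have := S.neg.Mbar_glb t ht j s h1
  simp only [neg_x] at this
  unfold mbar
  linarith

lemma mbar_mono (t t' : ℝ) (ht : 0 ≤ t) (htt : t ≤ t') : S.mbar t ≤ S.mbar t' := by
  unfold mbar
  have := S.neg.Mbar_antitone t t' ht htt
  linarith

lemma mbar_ge_of_window (t B : ℝ)
    (hB : ∀ j s, t - Dd τlo τhi K ≤ s → s ≤ t → B ≤ S.x j s) : B ≤ S.mbar t := by
  unfold mbar
  have : S.neg.Mbar t ≤ -B := by
    apply S.neg.Mbar_le_of_mem
    intro j s h1 h2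
    have := hB j s h1 h2
    simp only [neg_x]
    linarith
  linarith

lemma mbar_le_Mbar (t : ℝ) : S.mbar t ≤ S.Mbar t := by
  have h1 := S.Mbar_isUB t ⟨0, S.hn⟩ t (by linarith [ADCSys.Dd_nonneg S]) le_rfl
  have h2 : S.mbar t ≤ S.x ⟨0, S.hn⟩ t := by
    have := S.neg.Mbar_isUB t ⟨0, S.hn⟩ t (by linarith [ADCSys.Dd_nonneg S]) le_rfl
    simp only [neg_x] at this
    unfold mbar; linarith
  linarith

lemma mbar_neg (t : ℝ) : S.neg.mbar t = -(S.Mbar t) := by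
  unfold mbar
  rw [S.Mbar_negneg]

lemma Mbar_neg (t : ℝ) : S.neg.Mbar t = -(S.mbar t) := by
  unfold mbar; ring

lemma mbar_ge_negM0 (t : ℝ) : -S.M0 ≤ S.mbar t := by
  unfold mbar
  have := S.neg.Mbar_le_M0 t
  simp only [show S.neg.M0 = S.M0 from rfl] at this
  linarith

end ADCSys

namespace ADCSys

noncomputable def Pw (τlo τhi : ℝ) (K : ℕ) (T : ℝ) : ℝ := T + 2*τhi + (K:ℝ)*τlo
noncomputable def Hh (n : ℕ) (τlo τhi : ℝ) (K : ℕ) (T : ℝ) : ℝ :=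
  (n*n : ℕ) * Pw τlo τhi K T + Dd τlo τhi K
noncomputable def c1 (n : ℕ) (τlo τhi alo ahi : ℝ) (K : ℕ) (T : ℝ) : ℝ :=
  Real.exp (-(Hh n τlo τhi K T)) * (1 - Real.exp (-τlo)) * wmin n alo ahi
noncomputable def ηc (n : ℕ) (τlo τhi alo ahi : ℝ) (K : ℕ) (T : ℝ) : ℝ :=
  (1/2) * Real.exp (-(Hh n τlo τhi K T)) * c1 n τlo τhi alo ahi K T ^ n

variable {n : ℕ} {τlo τhi alo ahi : ℝ} {K : ℕ} {T : ℝ}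
variable (S : ADCSys n τlo τhi alo ahi K T)

lemma Pw_ge (S : ADCSys n τlo τhi alo ahi K T) : T + τhi ≤ Pw τlo τhi K T := by
  have h1 : (0:ℝ) ≤ (K:ℝ) * τlo := mul_nonneg (Nat.cast_nonneg K) S.hτlo.le
  have := S.hτlo; have := S.hττ
  unfold Pw; linarith

lemma Pw_pos (S : ADCSys n τlo τhi alo ahi K T) : 0 < Pw τlo τhi K T := by
  have := S.Pw_ge; have := S.hT; have := S.hτlo; have := S.hττ
  linarith

lemma Hh_nonneg (S : ADCSys n τlo τhi alo ahi K T) : 0 ≤ Hh n τlo τhi K T := by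
  have h1 := S.Pw_pos
  have h2 := ADCSys.Dd_nonneg S
  have h3 : (0:ℝ) ≤ (n*n : ℕ) := Nat.cast_nonneg _
  unfold Hh; nlinarith

lemma c1_pos (S : ADCSys n τlo τhi alo ahi K T) : 0 < c1 n τlo τhi alo ahi K T := by
  unfold c1
  have h1 : Real.exp (-τlo) < 1 := by
    rw [show (1:ℝ) = Real.exp 0 by simp]
    exact Real.exp_lt_exp.mpr (by linarith [S.hτlo])
  exact mul_pos (mul_pos (Real.exp_pos _) (by linarith)) S.wmin_pos

lemma c1_le_one (S : ADCSys n τlo τhi alo ahi K T) : c1 n τlo τhi alo ahi K T ≤ 1 := by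
  unfold c1
  have h1 : Real.exp (-(Hh n τlo τhi K T)) ≤ 1 := by
    rw [show (1:ℝ) = Real.exp 0 by simp]
    exact Real.exp_le_exp.mpr (by linarith [S.Hh_nonneg])
  have h2 : (0:ℝ) < Real.exp (-τlo) := Real.exp_pos _
  have h3 : 1 - Real.exp (-τlo) ≤ 1 := by linarith
  have h4 : 0 ≤ 1 - Real.exp (-τlo) := by
    have : Real.exp (-τlo) ≤ 1 := by
      rw [show (1:ℝ) = Real.exp 0 by simp]
      exact Real.exp_le_exp.mpr (by linarith [S.hτlo])
    linarith
  have h5 := S.wmin_pos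
  have h6 := S.wmin_le_one
  have h7 : Real.exp (-(Hh n τlo τhi K T)) * (1 - Real.exp (-τlo)) ≤ 1 :=
    mul_le_one₀ h1 h4 h3
  exact mul_le_one₀ h7 h5.le h6

lemma ηc_pos (S : ADCSys n τlo τhi alo ahi K T) : 0 < ηc n τlo τhi alo ahi K T := by
  unfold ηc
  have := S.c1_pos
  positivity

lemma ηc_le_half (S : ADCSys n τlo τhi alo ahi K T) : ηc n τlo τhi alo ahi K T ≤ 1/2 := by
  unfold ηc
  have h1 : Real.exp (-(Hh n τlo τhi K T)) ≤ 1 := by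
    rw [show (1:ℝ) = Real.exp 0 by simp]
    exact Real.exp_le_exp.mpr (by linarith [S.Hh_nonneg])
  have h2 : c1 n τlo τhi alo ahi K T ^ n ≤ 1 :=
    pow_le_one₀ S.c1_pos.le S.c1_le_one
  have h3 : (0:ℝ) < c1 n τlo τhi alo ahi K T ^ n := pow_pos S.c1_pos n
  nlinarith

/-- decay on a single update interval -/
lemma decay_single (t0 m : ℝ) (ht0 : 0 ≤ t0)
    (glb : ∀ i s, t0 - Dd τlo τhi K ≤ s → m ≤ S.x i s)
    (j : Fin n) (k : ℕ) (u s : ℝ)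
    (hu : u ∈ Icc (S.t j k) (S.t j (k+1))) (hs : s ∈ Icc (S.t j k) (S.t j (k+1)))
    (hus : u ≤ s) (hut : t0 ≤ u) :
    Real.exp (u - s) * (S.x j u - m) ≤ S.x j s - m := by
  have htk_lb : t0 - τhi ≤ S.t j k := by
    have := S.t_succ_ge j k
    have := hu.2
    linarith
  have hA1 : Real.exp (u - s) ≤ 1 := by
    rw [show (1:ℝ) = Real.exp 0 by simp]
    exact Real.exp_le_exp.mpr (by linarith)
  have hA0 : 0 < Real.exp (u - s) := Real.exp_pos _
  have hformu := S.formula j k u hu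
  have hforms := S.formula j k s hs
  by_cases hne : (S.N j k).Nonempty
  · rw [if_pos hne] at hformu hforms
    have hyc : m ≤ S.yc j k := by
      apply S.yc_ge j k hne
      intro l hl
      have hd := S.hdelay j k l hl
      apply glb
      have hD : (K:ℝ)*τlo + τhi = Dd τlo τhi K := rfl
      have := hd.2
      linarith
    have hEs : Real.exp (u - s) * Real.exp (S.t j k - u) = Real.exp (S.t j k - s) := by
      rw [← Real.exp_add]; ring_nf
    rw [hformu, hforms]
    have hz : (S.x j (S.t j k) - S.yc j k) * (Real.exp (u - s) * Real.exp (S.t j k - u))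
        = (S.x j (S.t j k) - S.yc j k) * Real.exp (S.t j k - s) := by rw [hEs]
    nlinarith [hz, mul_nonneg (sub_nonneg.mpr hA1) (sub_nonneg.mpr hyc)]
  · rw [if_neg hne] at hformu hforms
    have hm : m ≤ S.x j (S.t j k) := by
      apply glb
      linarith [ADCSys.Dd_ge_τhi S]
    rw [hformu, hforms]
    nlinarith [mul_nonneg (sub_nonneg.mpr hA1) (sub_nonneg.mpr hm)]

/-- exponential decay of lower bounds: chained version -/
lemma decay (t0 m : ℝ) (ht0 : 0 ≤ t0)
    (glb : ∀ i s, t0 - Dd τlo τhi K ≤ s → m ≤ S.x i s)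
    (j : Fin n) (u s : ℝ) (hu : t0 ≤ u) (hus : u ≤ s) :
    Real.exp (u - s) * (S.x j u - m) ≤ S.x j s - m := by
  have key : ∀ k : ℕ, ∀ s : ℝ, S.t j k ≤ s → s ≤ S.t j (k+1) → u ≤ s →
      Real.exp (u - s) * (S.x j u - m) ≤ S.x j s - m := by
    intro k
    induction k with
    | zero =>
        intro s h1 h2 h3
        apply S.decay_single t0 m ht0 glb j 0 u s _ ⟨h1, h2⟩ h3 hu
        constructor
        · rw [S.ht0 j]; linarith
        · linarith
    | succ k ih =>
        intro s h1 h2 h3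
        rcases le_or_gt (S.t j (k+1)) u with h | h
        · exact S.decay_single t0 m ht0 glb j (k+1) u s ⟨h, by linarith⟩ ⟨h1, h2⟩ h3 hu
        · have hmid := ih (S.t j (k+1)) (S.t_mono j (Nat.lt_succ_self k)).le le_rfl h.le
          have hlast' : Real.exp (S.t j (k+1) - s) * (S.x j (S.t j (k+1)) - m)
              ≤ S.x j s - m := by
            apply S.decay_single t0 m ht0 glb j (k+1) (S.t j (k+1)) s
              ⟨le_rfl, by linarith [S.t_succ_le j (k+1), S.hτlo]⟩ ⟨h1, h2⟩ h1 (by linarith)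
          have hEmul : Real.exp (S.t j (k+1) - s) * Real.exp (u - S.t j (k+1))
              = Real.exp (u - s) := by rw [← Real.exp_add]; ring_nf
          have step : Real.exp (S.t j (k+1) - s) * (Real.exp (u - S.t j (k+1)) * (S.x j u - m))
              ≤ Real.exp (S.t j (k+1) - s) * (S.x j (S.t j (k+1)) - m) :=
            mul_le_mul_of_nonneg_left hmid (Real.exp_pos _).le
          calc Real.exp (u - s) * (S.x j u - m)
              = Real.exp (S.t j (k+1) - s) * (Real.exp (u - S.t j (k+1)) * (S.x j u - m)) := by
                rw [← mul_assoc, hEmul]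
            _ ≤ Real.exp (S.t j (k+1) - s) * (S.x j (S.t j (k+1)) - m) := step
            _ ≤ S.x j s - m := hlast'
  have hsnn : 0 ≤ s := by linarith
  obtain ⟨k, hk1, hk2⟩ := S.exists_interval j s hsnn
  exact key k s hk1 hk2.le hus

/-- a pointwise lower bound at a time `u ≥ t0` propagates forward with decay -/
lemma decay_bound (t0 m : ℝ) (ht0 : 0 ≤ t0)
    (glb : ∀ i s, t0 - Dd τlo τhi K ≤ s → m ≤ S.x i s)
    (j : Fin n) (u : ℝ) (hu : t0 ≤ u) (β : ℝ) (hβ : 0 ≤ β)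
    (hval : m + β ≤ S.x j u) :
    ∀ s, u ≤ s → s ≤ t0 + Hh n τlo τhi K T →
      m + Real.exp (-(Hh n τlo τhi K T)) * β ≤ S.x j s := by
  intro s h1 h2
  have hd := S.decay t0 m ht0 glb j u s hu h1
  have hE : Real.exp (-(Hh n τlo τhi K T)) ≤ Real.exp (u - s) :=
    Real.exp_le_exp.mpr (by linarith)
  have h3 : Real.exp (-(Hh n τlo τhi K T)) * β ≤ Real.exp (u - s) * (S.x j u - m) := by
    apply mul_le_mul hE (by linarith) hβ (Real.exp_pos _).le
  linarith

/-- influence propagation along one edge -/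
lemma edge_propagate (t0 m : ℝ) (ht0 : 0 ≤ t0)
    (glb : ∀ i s, t0 - Dd τlo τhi K ≤ s → m ≤ S.x i s)
    (p q : Fin n) (k : ℕ) (hpq : p ∈ S.N q k)
    (u β : ℝ) (hβ : 0 ≤ β) (hu : t0 ≤ u)
    (hp : ∀ s, u ≤ s → s ≤ t0 + Hh n τlo τhi K T → m + β ≤ S.x p s)
    (href : u + (K:ℝ) * τlo ≤ S.t q k)
    (hend : S.t q (k+1) ≤ t0 + Hh n τlo τhi K T) :
    ∀ s, S.t q (k+1) ≤ s → s ≤ t0 + Hh n τlo τhi K T →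
      m + c1 n τlo τhi alo ahi K T * β ≤ S.x q s := by
  have hne : (S.N q k).Nonempty := ⟨p, hpq⟩
  have hKτ : (0:ℝ) ≤ (K:ℝ) * τlo := mul_nonneg (Nat.cast_nonneg K) S.hτlo.le
  -- the referenced value of p is above m + β
  have hrefp : m + β ≤ S.x p (S.t q k - S.τd q k p) := by
    apply hp
    · have := (S.hdelay q k p hpq).2; linarith
    · have := (S.hdelay q k p hpq).1
      have := S.t_succ_le q k
      have := S.hτlo
      linarith
  have hall : ∀ l ∈ S.N q k, m ≤ S.x l (S.t q k - S.τd q k l) := by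
    intro l hl
    apply glb
    have := (S.hdelay q k l hl).2
    have hD : (K:ℝ)*τlo + τhi = Dd τlo τhi K := rfl
    have := S.hττ; have := S.hτlo
    linarith
  have hyc : m + wmin n alo ahi * β ≤ S.yc q k := S.yc_ge_strong q k p hpq m β hβ hall hrefp
  -- value at end of the interval
  have hxtk : m ≤ S.x q (S.t q k) := glb q (S.t q k) (by linarith [ADCSys.Dd_nonneg S])
  have hform := S.formula q k (S.t q (k+1)) ⟨(S.t_mono q (Nat.lt_succ_self k)).le, le_rfl⟩
  rw [if_pos hne] at hform
  have hE : Real.exp (S.t q k - S.t q (k+1)) ≤ Real.exp (-τlo) :=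
    Real.exp_le_exp.mpr (by linarith [S.t_succ_le q k])
  have hE0 : 0 < Real.exp (S.t q k - S.t q (k+1)) := Real.exp_pos _
  have hτE : Real.exp (-τlo) < 1 := by
    rw [show (1:ℝ) = Real.exp 0 by simp]
    exact Real.exp_lt_exp.mpr (by linarith [S.hτlo])
  have hwβ : 0 ≤ wmin n alo ahi * β := mul_nonneg S.wmin_pos.le hβ
  have hendval : m + (1 - Real.exp (-τlo)) * (wmin n alo ahi * β) ≤ S.x q (S.t q (k+1)) := by
    rw [hform]
    nlinarith [mul_le_mul_of_nonneg_right hE (by nlinarith : (0:ℝ) ≤ S.x q (S.t q k) - m),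
      mul_nonneg (sub_nonneg.mpr hE) hwβ, hE0, hxtk,
      mul_le_mul_of_nonneg_left hE hwβ]
  -- now decay from t q (k+1)
  intro s h1 h2
  have hu' : t0 ≤ S.t q (k+1) := by
    have := S.t_succ_le q k; have := S.hτlo; linarith
  have := S.decay_bound t0 m ht0 glb q (S.t q (k+1)) hu'
    ((1 - Real.exp (-τlo)) * (wmin n alo ahi * β))
    (mul_nonneg (by linarith) hwβ) hendval s h1 h2
  have heq : Real.exp (-(Hh n τlo τhi K T)) * ((1 - Real.exp (-τlo)) * (wmin n alo ahi * β))
      = c1 n τlo τhi alo ahi K T * β := by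
    unfold c1; ring
  linarith [heq ▸ this]

/-- extract a boundary edge from reachability -/
lemma exists_boundary_edge {α : Type*} (R : α → α → Prop) (Sf : Finset α)
    (r v : α) (h : Relation.ReflTransGen R r v) (hr : r ∈ Sf) (hv : v ∉ Sf) :
    ∃ p ∈ Sf, ∃ q, q ∉ Sf ∧ R p q := by
  induction h with
  | refl => exact absurd hr hv
  | @tail b c hab hbc ih =>
      by_cases hb : b ∈ Sf
      · exact ⟨b, hb, c, hv, hbc⟩
      · exact ih hb

set_option maxHeartbeats 2000000 in
/-- the core propagation lemma: if the (repeated) root starts above the midpoint,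
then after the horizon `Hh` every agent is bounded away from the bottom. -/
lemma raise (t0 : ℝ) (ht0 : 0 ≤ t0) (r : Fin n) (l : ℕ → ℕ)
    (hmono : ∀ j, j + 1 < n → l j + 1 ≤ l (j+1))
    (hlt : ∀ j, j < n → l j < n*n)
    (hroot : ∀ j, j < n → ∀ v : Fin n, Relation.ReflTransGen
        (fun p q : Fin n => ∃ s ∈ Set.Icc (t0 + (l j : ℝ) * Pw τlo τhi K T)
            (t0 + (l j : ℝ) * Pw τlo τhi K T + T), ∃ k : ℕ,
          s ∈ Set.Ico (S.t q k) (S.t q (k + 1)) ∧ p ∈ S.N q k) r v)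
    (hval : S.mbar t0 + (S.Mbar t0 - S.mbar t0)/2
        ≤ S.x r (t0 + (l 0 : ℝ) * Pw τlo τhi K T)) :
    S.mbar t0 + ηc n τlo τhi alo ahi K T * (S.Mbar t0 - S.mbar t0)
      ≤ S.mbar (t0 + Hh n τlo τhi K T) := by
  set m := S.mbar t0 with hm
  set Δ := S.Mbar t0 - S.mbar t0 with hΔdef
  set P := Pw τlo τhi K T with hP
  set H := Hh n τlo τhi K T with hH
  set D := Dd τlo τhi K with hD
  set c := c1 n τlo τhi alo ahi K T with hc
  have hΔ : 0 ≤ Δ := by rw [hΔdef]; linarith [S.mbar_le_Mbar t0]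
  have glb : ∀ i s, t0 - D ≤ s → m ≤ S.x i s := S.mbar_glb t0 ht0
  have hPpos : 0 < P := S.Pw_pos
  have hHnn : 0 ≤ H := S.Hh_nonneg
  have hDnn : 0 ≤ D := ADCSys.Dd_nonneg S
  have hτlo := S.hτlo
  have hττ := S.hττ
  have hT := S.hT
  have hc0 := S.c1_pos
  have hc1 := S.c1_le_one
  have hHsplit : H = (n*n : ℕ) * P + D := rfl
  have hKτ : (0:ℝ) ≤ (K:ℝ) * τlo := mul_nonneg (Nat.cast_nonneg K) S.hτlo.le
  have hPTτ : T + 2*τhi + (K:ℝ)*τlo = P := rfl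
  -- β sequence
  set βc : ℕ → ℝ := fun j => Δ/2 * Real.exp (-H) * c ^ j with hβc
  have hβnn : ∀ j, 0 ≤ βc j := by
    intro j
    apply mul_nonneg (mul_nonneg (by linarith) (Real.exp_pos _).le) (pow_nonneg hc0.le j)
  have hβmono : ∀ j, βc (j+1) ≤ βc j := by
    intro j
    apply mul_le_mul_of_nonneg_left _ (mul_nonneg (by linarith) (Real.exp_pos _).le)
    calc c ^ (j+1) = c ^ j * c := by ring
      _ ≤ c ^ j * 1 := mul_le_mul_of_nonneg_left hc1 (pow_nonneg hc0.le j)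
      _ = c ^ j := by ring
  -- window end bound
  have hwend : ∀ j, j < n → t0 + (l j : ℝ) * P + T + τhi ≤ t0 + H - D := by
    intro j hj
    have h1 : (l j : ℝ) ≤ (n*n : ℕ) - 1 := by
      have := hlt j hj
      have : (l j : ℝ) + 1 ≤ ((n*n : ℕ) : ℝ) := by exact_mod_cast this
      linarith
    have h2 : (l j : ℝ) * P ≤ ((n*n : ℕ) - 1) * P := mul_le_mul_of_nonneg_right h1 hPpos.le
    rw [hHsplit]
    have := S.Pw_ge
    nlinarith
  have hwstart : ∀ j, 0 ≤ (l j : ℝ) * P :=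
    fun j => mul_nonneg (Nat.cast_nonneg _) hPpos.le
  -- main induction
  have claim : ∀ j, j < n → ∃ Sf : Finset (Fin n), r ∈ Sf ∧ j + 1 ≤ Sf.card ∧
      ∀ i ∈ Sf, ∀ s : ℝ, t0 + (l j : ℝ) * P + T + τhi ≤ s → s ≤ t0 + H →
        m + βc j ≤ S.x i s := by
    intro j
    induction j with
    | zero =>
        intro hj
        refine ⟨{r}, Finset.mem_singleton_self r, by simp, ?_⟩
        intro i hi s h1 h2
        rw [Finset.mem_singleton] at hi
        subst hi
        have hb := S.decay_bound t0 m ht0 glb i (t0 + (l 0 : ℝ) * P)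
          (by linarith [hwstart 0]) (Δ/2) (by linarith) hval s (by linarith) h2
        have : Real.exp (-H) * (Δ/2) = βc 0 := by rw [hβc]; simp; ring
        linarith [this ▸ hb]
    | succ j ih =>
        intro hj1
        obtain ⟨Sf, hrS, hcard, hbound⟩ := ih (by omega)
        have hmj := hmono j hj1
        have hll : (l j : ℝ) + 1 ≤ (l (j+1) : ℝ) := by exact_mod_cast hmj
        have hajle : t0 + (l j : ℝ) * P + T + τhi + ((K:ℝ)*τlo + τhi)
            ≤ t0 + (l (j+1) : ℝ) * P := by nlinarith
        by_cases hall : ∀ v : Fin n, v ∈ Sf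
        · refine ⟨Sf, hrS, ?_, ?_⟩
          · have : Sf = Finset.univ := Finset.eq_univ_iff_forall.mpr hall
            rw [this, Finset.card_univ, Fintype.card_fin]
            omega
          · intro i hi s h1 h2
            have := hbound i hi s (by nlinarith) h2
            linarith [hβmono j]
        · push_neg at hall
          obtain ⟨v, hv⟩ := hall
          obtain ⟨p, hpS, q, hqS, hedge⟩ :=
            exists_boundary_edge _ Sf r v (hroot (j+1) hj1 v) hrS hv
          obtain ⟨sw, hsw, k, hsk, hpN⟩ := hedge
          have hswk1 : sw < S.t q (k+1) := hsk.2
          have hswk0 : S.t q k ≤ sw := hsk.1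
          have htk_lb : t0 + (l (j+1) : ℝ) * P - τhi ≤ S.t q k := by
            have := S.t_succ_ge q k
            have := hsw.1
            linarith
          have htk_ub : S.t q k ≤ t0 + (l (j+1) : ℝ) * P + T := le_trans hswk0 hsw.2
          have hend : S.t q (k+1) ≤ t0 + H := by
            have := S.t_succ_ge q k
            have := hwend (j+1) hj1
            linarith
          have hprop := S.edge_propagate t0 m ht0 glb p q k hpN
            (t0 + (l j : ℝ) * P + T + τhi) (βc j) (hβnn j)
            (by linarith [hwstart j]) (hbound p hpS)
            (by linarith) hend
          refine ⟨insert q Sf, Finset.mem_insert_of_mem hrS, ?_, ?_⟩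
          · rw [Finset.card_insert_of_notMem hqS]
            omega
          · intro i hi s h1 h2
            rcases Finset.mem_insert.mp hi with hiq | hiS
            · have hq := hprop s (by linarith [S.t_succ_ge q k]) h2
              have hcb : c * βc j = βc (j+1) := by rw [hβc]; ring
              rw [hiq]
              linarith [hcb ▸ hq]
            · have := hbound i hiS s (by nlinarith) h2
              linarith [hβmono j]
  -- conclude
  have hn1 : n - 1 < n := Nat.sub_lt (Nat.lt_of_lt_of_le Nat.zero_lt_one S.hn) Nat.zero_lt_one
  obtain ⟨Sf, hrS, hcard, hbound⟩ := claim (n-1) hn1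
  have hSuniv : Sf = Finset.univ := by
    apply Finset.eq_univ_of_card
    have hle : Sf.card ≤ n := by
      have := Finset.card_le_univ Sf
      simpa using this
    rw [Fintype.card_fin]
    have hn' := S.hn
    omega
  have hfinal : ∀ i : Fin n, ∀ s : ℝ, t0 + H - D ≤ s → s ≤ t0 + H → m + βc (n-1) ≤ S.x i s := by
    intro i s h1 h2
    apply hbound i (hSuniv ▸ Finset.mem_univ i) s _ h2
    have := hwend (n-1) hn1
    linarith
  have hmb : m + βc (n-1) ≤ S.mbar (t0 + H) := by
    apply S.mbar_ge_of_window
    intro i s h1 h2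
    exact hfinal i s (by linarith) h2
  have hβη : ηc n τlo τhi alo ahi K T * Δ ≤ βc (n-1) := by
    rw [hβc]
    have hpow : c ^ n ≤ c ^ (n-1) :=
      pow_le_pow_of_le_one hc0.le hc1 (Nat.sub_le n 1)
    have : ηc n τlo τhi alo ahi K T = 1/2 * Real.exp (-H) * c ^ n := rfl
    rw [this]
    have h1 : 0 ≤ Δ/2 * Real.exp (-H) := mul_nonneg (by linarith) (Real.exp_pos _).le
    nlinarith [mul_nonneg (mul_nonneg hΔ (Real.exp_pos (-H)).le) (pow_nonneg hc0.le n)]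
  linarith

set_option maxHeartbeats 2000000 in
/-- contraction of the gap over one horizon -/
lemma gap_contract (t0 : ℝ) (ht0 : 0 ≤ t0) :
    S.Mbar (t0 + Hh n τlo τhi K T) - S.mbar (t0 + Hh n τlo τhi K T)
      ≤ (1 - ηc n τlo τhi alo ahi K T) * (S.Mbar t0 - S.mbar t0) := by
  set P := Pw τlo τhi K T with hPdef
  set H := Hh n τlo τhi K T with hHdef
  set η := ηc n τlo τhi alo ahi K T with hηdef
  have hPpos := S.Pw_pos
  have hHnn := S.Hh_nonneg
  have hΔ : 0 ≤ S.Mbar t0 - S.mbar t0 := by linarith [S.mbar_le_Mbar t0]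
  have hn0 : 0 < n := Nat.lt_of_lt_of_le Nat.zero_lt_one S.hn
  -- choose a root for each window
  have hwstart : ∀ lw : ℕ, (0:ℝ) ≤ t0 + (lw:ℝ) * P := by
    intro lw
    have : (0:ℝ) ≤ (lw:ℝ) * P := mul_nonneg (Nat.cast_nonneg _) hPpos.le
    linarith
  have hwin : ∀ lw : ℕ, ∃ root : Fin n, ∀ v : Fin n,
      Relation.ReflTransGen
        (fun p q : Fin n => ∃ s ∈ Set.Icc (t0 + (lw:ℝ) * P) (t0 + (lw:ℝ) * P + T), ∃ k : ℕ,
          s ∈ Set.Ico (S.t q k) (S.t q (k + 1)) ∧ p ∈ S.N q k) root v :=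
    fun lw => S.hspan (t0 + (lw:ℝ) * P) (hwstart lw)
  choose root hrootspec using hwin
  -- pigeonhole: some agent is the root of at least n windows
  have hcard : (Finset.univ : Finset (Fin n)).card * (n-1) < (Finset.range (n*n)).card := by
    rw [Finset.card_range, Finset.card_univ, Fintype.card_fin]
    have h1 : n - 1 < n := Nat.sub_lt hn0 Nat.zero_lt_one
    exact mul_lt_mul_of_pos_left h1 hn0
  obtain ⟨r, _, hrcard⟩ := Finset.exists_lt_card_fiber_of_mul_lt_card_of_maps_to
    (fun a _ => Finset.mem_univ (root a)) hcard
  set F := Finset.filter (fun x => root x = r) (Finset.range (n*n)) with hF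
  have hFcard : n ≤ F.card := by omega
  set emb := F.orderEmbOfCardLe hFcard with hemb
  set l : ℕ → ℕ := fun j => if h : j < n then emb ⟨j, h⟩ else 0 with hl
  have hlmem : ∀ j, ∀ h : j < n, l j ∈ F := by
    intro j h
    simp only [hl, dif_pos h]
    exact F.orderEmbOfCardLe_mem hFcard ⟨j, h⟩
  have hmono : ∀ j, j + 1 < n → l j + 1 ≤ l (j+1) := by
    intro j hj
    have hj' : j < n := by omega
    simp only [hl, dif_pos hj, dif_pos hj']
    have : emb ⟨j, hj'⟩ < emb ⟨j+1, hj⟩ :=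
      emb.strictMono (by exact Fin.mk_lt_mk.mpr (Nat.lt_succ_self j))
    omega
  have hlt : ∀ j, j < n → l j < n*n := by
    intro j h
    have := hlmem j h
    rw [hF, Finset.mem_filter, Finset.mem_range] at this
    exact this.1
  have hlroot : ∀ j, j < n → root (l j) = r := by
    intro j h
    have := hlmem j h
    rw [hF, Finset.mem_filter] at this
    exact this.2
  have hroot' : ∀ j, j < n → ∀ v : Fin n, Relation.ReflTransGen
      (fun p q : Fin n => ∃ s ∈ Set.Icc (t0 + (l j : ℝ) * P)
          (t0 + (l j : ℝ) * P + T), ∃ k : ℕ,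
        s ∈ Set.Ico (S.t q k) (S.t q (k + 1)) ∧ p ∈ S.N q k) r v := by
    intro j h v
    have := hrootspec (l j) v
    rwa [hlroot j h] at this
  -- case split on the position of the root's value
  rcases le_or_gt (S.x r (t0 + (l 0 : ℝ) * P))
      (S.mbar t0 + (S.Mbar t0 - S.mbar t0)/2) with hcase | hcase
  · -- root is low: raise the negated system, i.e. lower Mbar
    have hvalneg : S.neg.mbar t0 + (S.neg.Mbar t0 - S.neg.mbar t0)/2
        ≤ S.neg.x r (t0 + (l 0 : ℝ) * P) := by
      rw [S.mbar_neg, S.Mbar_neg]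
      simp only [neg_x]
      linarith
    have hrootneg : ∀ j, j < n → ∀ v : Fin n, Relation.ReflTransGen
        (fun p q : Fin n => ∃ s ∈ Set.Icc (t0 + (l j : ℝ) * P)
            (t0 + (l j : ℝ) * P + T), ∃ k : ℕ,
          s ∈ Set.Ico (S.neg.t q k) (S.neg.t q (k + 1)) ∧ p ∈ S.neg.N q k) r v :=
      hroot'
    have hres := S.neg.raise t0 ht0 r l hmono hlt hrootneg hvalneg
    rw [S.mbar_neg, S.Mbar_neg, S.mbar_neg] at hres
    have h1 : S.mbar t0 ≤ S.mbar (t0 + H) := S.mbar_mono t0 (t0+H) ht0 (by linarith)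
    nlinarith [hres, h1]
  · -- root is high: raise the system itself
    have hres := S.raise t0 ht0 r l hmono hlt hroot' hcase.le
    have h1 : S.Mbar (t0 + H) ≤ S.Mbar t0 := S.Mbar_antitone t0 (t0+H) ht0 (by linarith)
    nlinarith [hres, h1]

lemma gap_pow (k : ℕ) :
    S.Mbar ((k:ℝ) * Hh n τlo τhi K T) - S.mbar ((k:ℝ) * Hh n τlo τhi K T)
      ≤ (1 - ηc n τlo τhi alo ahi K T)^k * (S.Mbar 0 - S.mbar 0) := by
  have hHnn := S.Hh_nonneg
  have hη1 := S.ηc_le_half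
  have hη0 := S.ηc_pos
  induction k with
  | zero => simp
  | succ k ih =>
      have hk : (0:ℝ) ≤ (k:ℝ) * Hh n τlo τhi K T :=
        mul_nonneg (Nat.cast_nonneg _) hHnn
      have hstep := S.gap_contract ((k:ℝ) * Hh n τlo τhi K T) hk
      have hcast : ((k+1 : ℕ):ℝ) * Hh n τlo τhi K T
          = (k:ℝ) * Hh n τlo τhi K T + Hh n τlo τhi K T := by push_cast; ring
      rw [hcast]
      calc S.Mbar _ - S.mbar _ ≤ (1 - ηc n τlo τhi alo ahi K T) *
            (S.Mbar ((k:ℝ) * Hh n τlo τhi K T) - S.mbar ((k:ℝ) * Hh n τlo τhi K T)) := hstep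
        _ ≤ (1 - ηc n τlo τhi alo ahi K T) *
            ((1 - ηc n τlo τhi alo ahi K T)^k * (S.Mbar 0 - S.mbar 0)) :=
          mul_le_mul_of_nonneg_left ih (by linarith)
        _ = (1 - ηc n τlo τhi alo ahi K T)^(k+1) * (S.Mbar 0 - S.mbar 0) := by ring

/-- the consensus theorem for the bundled system -/
theorem consensus : ∃ c : ℝ, ∀ i, Tendsto (S.x i) atTop (𝓝 c) := by
  have hHnn := S.Hh_nonneg
  have hη1 := S.ηc_le_half
  have hη0 := S.ηc_pos
  have hHpos : 0 < Hh n τlo τhi K T := by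
    have h1 := S.Pw_pos
    have h2 := ADCSys.Dd_nonneg S
    have h3 : (1:ℝ) ≤ ((n*n : ℕ):ℝ) := by
      have : 1 ≤ n*n := Nat.one_le_iff_ne_zero.mpr (by
        have := S.hn; positivity)
      exact_mod_cast this
    unfold Hh
    nlinarith
  set Mb : ℝ → ℝ := fun u => S.Mbar (max u 0) with hMb
  set mb : ℝ → ℝ := fun u => S.mbar (max u 0) with hmb
  have hMbanti : Antitone Mb := by
    intro u1 u2 h
    exact S.Mbar_antitone (max u1 0) (max u2 0) (le_max_right _ _) (max_le_max h le_rfl)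
  have hmbmono : Monotone mb := by
    intro u1 u2 h
    exact S.mbar_mono (max u1 0) (max u2 0) (le_max_right _ _) (max_le_max h le_rfl)
  have hMbbdd : BddBelow (Set.range Mb) := by
    refine ⟨-S.M0, ?_⟩
    rintro _ ⟨u, rfl⟩
    exact S.Mbar_ge _
  have hmbbdd : BddAbove (Set.range mb) := by
    refine ⟨S.M0, ?_⟩
    rintro _ ⟨u, rfl⟩
    calc mb u ≤ Mb u := S.mbar_le_Mbar _
      _ ≤ S.M0 := S.Mbar_le_M0 _
  set cM := ⨅ u, Mb u with hcM
  set cm := ⨆ u, mb u with hcm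
  have htM : Tendsto Mb atTop (𝓝 cM) := tendsto_atTop_ciInf hMbanti hMbbdd
  have htm : Tendsto mb atTop (𝓝 cm) := tendsto_atTop_ciSup hmbmono hmbbdd
  -- the gap vanishes
  have hgapk : ∀ k : ℕ, cM - cm ≤ (1 - ηc n τlo τhi alo ahi K T)^k * (S.Mbar 0 - S.mbar 0) := by
    intro k
    have hk : (0:ℝ) ≤ (k:ℝ) * Hh n τlo τhi K T := mul_nonneg (Nat.cast_nonneg _) hHnn
    have h1 : cM ≤ Mb ((k:ℝ) * Hh n τlo τhi K T) := ciInf_le hMbbdd _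
    have h2 : mb ((k:ℝ) * Hh n τlo τhi K T) ≤ cm := le_ciSup hmbbdd _
    have h3 : Mb ((k:ℝ) * Hh n τlo τhi K T) = S.Mbar ((k:ℝ) * Hh n τlo τhi K T) := by
      rw [hMb]; simp [max_eq_left hk]
    have h4 : mb ((k:ℝ) * Hh n τlo τhi K T) = S.mbar ((k:ℝ) * Hh n τlo τhi K T) := by
      rw [hmb]; simp [max_eq_left hk]
    have := S.gap_pow k
    rw [h3] at h1
    rw [h4] at h2
    linarith
  have hgap : cM ≤ cm := by
    have htz : Tendsto (fun k : ℕ => (1 - ηc n τlo τhi alo ahi K T)^k * (S.Mbar 0 - S.mbar 0))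
        atTop (𝓝 0) := by
      have := (tendsto_pow_atTop_nhds_zero_of_lt_one (by linarith) (by linarith :
        1 - ηc n τlo τhi alo ahi K T < 1)).mul_const (S.Mbar 0 - S.mbar 0)
      simpa using this
    have := ge_of_tendsto htz (Eventually.of_forall hgapk)
    linarith
  have hgap' : cm ≤ cM := by
    apply le_of_tendsto_of_tendsto htm htM
    filter_upwards with u
    exact S.mbar_le_Mbar _
  have hceq : cm = cM := le_antisymm hgap' hgap
  refine ⟨cM, fun i => ?_⟩
  apply tendsto_of_tendsto_of_tendsto_of_le_of_le' (hceq ▸ htm) htM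
  · filter_upwards [eventually_ge_atTop (0:ℝ)] with u hu
    have h1 : max u 0 = u := max_eq_left hu
    have := S.mbar_glb u hu i u (by linarith [ADCSys.Dd_nonneg S])
    rw [hmb]; simp only [h1]; exact this
  · filter_upwards [eventually_ge_atTop (0:ℝ)] with u hu
    have h1 : max u 0 = u := max_eq_left hu
    have := S.Mbar_glb u hu i u (by linarith [ADCSys.Dd_nonneg S])
    rw [hMb]; simp only [h1]; exact this

end ADCSys

end ADCdev

/-- Asynchronous delayed consensus: if there is `T ≥ 0` such that the union of the
communication topology `G⁰` over every interval `[t0, t0 + T]` (with `t0 ≥ 0`)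
contains a spanning tree, then the system solves a consensus problem. -/
theorem asynchronous_delayed_consensus
    (n : ℕ) (hn : 1 ≤ n)
    (τlo τhi : ℝ) (hτlo : 0 < τlo) (hττ : τlo ≤ τhi)
    (alo ahi : ℝ) (halo : 0 < alo) (haa : alo ≤ ahi)
    (K : ℕ)
    (x : Fin n → ℝ → ℝ)
    (t : Fin n → ℕ → ℝ)
    (N : Fin n → ℕ → Finset (Fin n))
    (a : Fin n → ℕ → Fin n → ℝ)
    (τd : Fin n → ℕ → Fin n → ℝ)
    (hcont : ∀ i, Continuous (x i))
    (ht0 : ∀ i, t i 0 = 0)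
    (hstep : ∀ i k, τlo ≤ t i (k + 1) - t i k ∧ t i (k + 1) - t i k ≤ τhi)
    (hNself : ∀ i k, i ∉ N i k)
    (hweight : ∀ i k, ∀ j ∈ N i k, a i k j ∈ Set.Icc alo ahi)
    (hdelay : ∀ i k, ∀ j ∈ N i k, τd i k j ∈ Set.Icc (0 : ℝ) ((K : ℝ) * τlo))
    (hbdd : ∃ M : ℝ, ∀ i, ∀ s : ℝ, s ≤ 0 → |x i s| ≤ M)
    (hode : ∀ i k, ∀ s ∈ Set.Ico (t i k) (t i (k + 1)),
      HasDerivWithinAt (x i)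
        (if (N i k).Nonempty then
            ∑ j ∈ N i k, a i k j / (∑ l ∈ N i k, a i k l) *
              (x j (t i k - τd i k j) - x i s)
          else 0)
        (Set.Ici s) s)
    (T : ℝ) (hT : 0 ≤ T)
    (hspan : ∀ t0 : ℝ, 0 ≤ t0 → ∃ root : Fin n, ∀ v : Fin n,
      Relation.ReflTransGen
        (fun p q : Fin n => ∃ s ∈ Set.Icc t0 (t0 + T), ∃ k : ℕ,
          s ∈ Set.Ico (t q k) (t q (k + 1)) ∧ p ∈ N q k)
        root v) :
    ∃ c : ℝ, ∀ i, Tendsto (x i) atTop (𝓝 c) := by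
  obtain ⟨M, hM⟩ := hbdd
  exact ADCSys.consensus
    { x := x, t := t, N := N, a := a, τd := τd,
      hn := hn, hτlo := hτlo, hττ := hττ, halo := halo, haa := haa,
      hcont := hcont, ht0 := ht0, hstep := hstep,
      hweight := hweight, hdelay := hdelay,
      M0 := M, hbdd := hM, hode := hode, hT := hT, hspan := hspan }
end

section
/- Consider the asynchronous delay-free consensus system. If there exists T ≥ 0 such that for every t0 ≥ 0 the union of the communication topology G^0 over the interval [t0, t0+T] contains a spanning tree, then the system solves a consensus problem: there exists c ∈ ℝ such that lim_{t→∞} x_i(t) = c for every agent i. -/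
open Filter Topology


section Times
variable {τlo τhi : ℝ} (tt : ℕ → ℝ)

lemma times_lb (ht0 : tt 0 = 0) (hstep : ∀ k, τlo ≤ tt (k + 1) - tt k) :
    ∀ k : ℕ, (k : ℝ) * τlo ≤ tt k := by
  intro k
  induction k with
  | zero => simp [ht0]
  | succ k ih =>
    have := hstep k
    push_cast
    nlinarith

lemma times_strictMono (hτlo : 0 < τlo) (hstep : ∀ k, τlo ≤ tt (k + 1) - tt k) :
    StrictMono tt := by
  apply strictMono_nat_of_lt_succ
  intro k
  have := hstep k
  linarith

open scoped Classical in
/-- index of interval containing `s` -/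
noncomputable def Kidx (tt : ℕ → ℝ) (s : ℝ) : ℕ :=
  if h : ∃ k, s < tt (k + 1) then Nat.find h else 0

lemma Kidx_exists (hτlo : 0 < τlo) (ht0 : tt 0 = 0)
    (hstep : ∀ k, τlo ≤ tt (k + 1) - tt k) (s : ℝ) : ∃ k, s < tt (k + 1) := by
  obtain ⟨k, hk⟩ := exists_nat_gt (s / τlo)
  refine ⟨k, ?_⟩
  have h1 : ((k : ℝ) + 1) * τlo ≤ tt (k + 1) := by
    have := times_lb tt ht0 hstep (k + 1); push_cast at this ⊢; linarith
  have : s < (k : ℝ) * τlo := by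
    rw [div_lt_iff₀ hτlo] at hk; linarith
  nlinarith [hτlo.le]

lemma Kidx_spec (hτlo : 0 < τlo) (ht0 : tt 0 = 0)
    (hstep : ∀ k, τlo ≤ tt (k + 1) - tt k) {s : ℝ} (hs : 0 ≤ s) :
    tt (Kidx tt s) ≤ s ∧ s < tt (Kidx tt s + 1) := by
  have h := Kidx_exists tt hτlo ht0 hstep s
  classical
  rw [Kidx, dif_pos h]
  refine ⟨?_, Nat.find_spec h⟩
  rcases Nat.eq_zero_or_eq_succ_pred (Nat.find h) with h0 | h0
  · rw [h0, ht0]; exact hs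
  · rw [h0]
    have := Nat.find_min h (m := Nat.find h - 1) (by omega)
    push_neg at this
    simpa [Nat.succ_eq_add_one] using this

lemma Kidx_mono (hτlo : 0 < τlo) (ht0 : tt 0 = 0)
    (hstep : ∀ k, τlo ≤ tt (k + 1) - tt k) {s s' : ℝ} (hs : 0 ≤ s) (hss : s ≤ s') :
    Kidx tt s ≤ Kidx tt s' := by
  have h1 := Kidx_spec tt hτlo ht0 hstep hs
  have h2 := Kidx_spec tt hτlo ht0 hstep (hs.trans hss)
  by_contra hlt
  push_neg at hlt
  have : tt (Kidx tt s' + 1) ≤ tt (Kidx tt s) :=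
    (times_strictMono tt hτlo hstep).monotone (by omega)
  linarith

lemma Kidx_ge (hτlo : 0 < τlo) (ht0 : tt 0 = 0)
    (hstep : ∀ k, τlo ≤ tt (k + 1) - tt k) {s : ℝ} (hs : 0 ≤ s) {k : ℕ}
    (hk : tt k ≤ s) : k ≤ Kidx tt s := by
  by_contra hlt
  push_neg at hlt
  have h1 := Kidx_spec tt hτlo ht0 hstep hs
  have : tt (Kidx tt s + 1) ≤ tt k :=
    (times_strictMono tt hτlo hstep).monotone (by omega)
  linarith

lemma Kidx_start_lb (hτlo : 0 < τlo) (ht0 : tt 0 = 0)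
    (hstep : ∀ k, τlo ≤ tt (k + 1) - tt k) (hstep' : ∀ k, tt (k + 1) - tt k ≤ τhi)
    {s : ℝ} (hs : 0 ≤ s) : s - τhi < tt (Kidx tt s) ∧ 0 ≤ tt (Kidx tt s) := by
  have h1 := Kidx_spec tt hτlo ht0 hstep hs
  have h2 := hstep' (Kidx tt s)
  constructor
  · linarith
  · have := times_lb tt ht0 hstep (Kidx tt s)
    nlinarith [hτlo.le, Nat.cast_nonneg (α := ℝ) (Kidx tt s)]

end Times

section Sys
variable {n : ℕ} {τlo τhi alo ahi : ℝ}
  {x : Fin n → ℝ → ℝ} {t : Fin n → ℕ → ℝ} {N : Fin n → ℕ → Finset (Fin n)}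
  {a : Fin n → ℕ → Fin n → ℝ}

/-- target value of agent `i` on its `k`-th interval -/
noncomputable def cval (x : Fin n → ℝ → ℝ) (t : Fin n → ℕ → ℝ) (N : Fin n → ℕ → Finset (Fin n))
    (a : Fin n → ℕ → Fin n → ℝ) (i : Fin n) (k : ℕ) : ℝ :=
  if (N i k).Nonempty then
    ∑ j ∈ N i k, a i k j / (∑ l ∈ N i k, a i k l) * x j (t i k)
  else x i (t i k)

lemma sum_pos' (halo : 0 < alo) {i : Fin n} {k : ℕ}
    (hweight : ∀ j ∈ N i k, a i k j ∈ Set.Icc alo ahi)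
    (hne : (N i k).Nonempty) : 0 < ∑ l ∈ N i k, a i k l :=
  Finset.sum_pos (fun l hl => halo.trans_le (hweight l hl).1) hne

lemma wsum_one (halo : 0 < alo) {i : Fin n} {k : ℕ}
    (hweight : ∀ j ∈ N i k, a i k j ∈ Set.Icc alo ahi)
    (hne : (N i k).Nonempty) :
    ∑ j ∈ N i k, a i k j / (∑ l ∈ N i k, a i k l) = 1 := by
  rw [← Finset.sum_div]
  exact div_self (sum_pos' halo hweight hne).ne'

lemma sol_formula (hcont : ∀ i, Continuous (x i)) (halo : 0 < alo)
    (hweight : ∀ i k, ∀ j ∈ N i k, a i k j ∈ Set.Icc alo ahi)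
    (hode : ∀ i k, ∀ s ∈ Set.Ico (t i k) (t i (k + 1)),
      HasDerivWithinAt (x i)
        (if (N i k).Nonempty then
            ∑ j ∈ N i k, a i k j / (∑ l ∈ N i k, a i k l) *
              (x j (t i k) - x i s)
          else 0)
        (Set.Ici s) s)
    (i : Fin n) (k : ℕ) {s : ℝ} (hs : s ∈ Set.Icc (t i k) (t i (k + 1))) :
    x i s = cval x t N a i k
      + (x i (t i k) - cval x t N a i k) * Real.exp (t i k - s) := by
  by_cases hne : (N i k).Nonempty
  · set c := cval x t N a i k with hc
    have key : ∀ u ∈ Set.Ico (t i k) (t i (k + 1)),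
        HasDerivWithinAt (fun v => (x i v - c) * Real.exp (v - t i k)) 0 (Set.Ici u) u := by
      intro u hu
      have hd := hode i k u hu
      rw [if_pos hne] at hd
      have hsum := wsum_one halo (hweight i k) hne
      have hderiv_eq : (∑ j ∈ N i k, a i k j / (∑ l ∈ N i k, a i k l) *
          (x j (t i k) - x i u)) = c - x i u := by
        have : (∑ j ∈ N i k, a i k j / (∑ l ∈ N i k, a i k l) *
            (x j (t i k) - x i u)) =
            (∑ j ∈ N i k, a i k j / (∑ l ∈ N i k, a i k l) * x j (t i k)) -
            (∑ j ∈ N i k, a i k j / (∑ l ∈ N i k, a i k l)) * x i u := by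
          rw [Finset.sum_mul, ← Finset.sum_sub_distrib]
          exact Finset.sum_congr rfl (fun j hj => by ring)
        rw [this, hsum, hc, cval, if_pos hne]
        ring
      rw [hderiv_eq] at hd
      have h1 : HasDerivWithinAt (fun v => x i v - c) (c - x i u) (Set.Ici u) u :=
        hd.sub_const c
      have h2 : HasDerivWithinAt (fun v => Real.exp (v - t i k))
          (Real.exp (u - t i k)) (Set.Ici u) u := by
        exact (((hasDerivAt_id' u).sub_const (t i k)).exp.hasDerivWithinAt).congr_deriv
          (by ring)
      have := h1.mul h2
      exact this.congr_deriv (by ring)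
    have hgc : ContinuousOn (fun v => (x i v - c) * Real.exp (v - t i k))
        (Set.Icc (t i k) (t i (k + 1))) :=
      (((hcont i).sub continuous_const).mul
        (Real.continuous_exp.comp (continuous_id.sub continuous_const))).continuousOn
    have hconst := constant_of_has_deriv_right_zero hgc key s hs
    simp only [sub_self, Real.exp_zero, mul_one] at hconst
    have hE : Real.exp (s - t i k) * Real.exp (t i k - s) = 1 := by
      rw [← Real.exp_add]; ring_nf; exact Real.exp_zero
    have h2 := congrArg (· * Real.exp (t i k - s)) hconst
    rw [mul_assoc, hE, mul_one] at h2
    linarith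
  · have hconst : ∀ u ∈ Set.Icc (t i k) (t i (k + 1)), x i u = x i (t i k) := by
      apply constant_of_has_deriv_right_zero ((hcont i).continuousOn)
      intro u hu
      have := hode i k u hu
      rwa [if_neg hne] at this
    rw [hconst s hs, cval, if_neg hne]
    ring

lemma ub_decay (hcont : ∀ i, Continuous (x i)) (halo : 0 < alo)
    (hweight : ∀ i k, ∀ j ∈ N i k, a i k j ∈ Set.Icc alo ahi)
    (hode : ∀ i k, ∀ s ∈ Set.Ico (t i k) (t i (k + 1)),
      HasDerivWithinAt (x i)
        (if (N i k).Nonempty then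
            ∑ j ∈ N i k, a i k j / (∑ l ∈ N i k, a i k l) *
              (x j (t i k) - x i s)
          else 0)
        (Set.Ici s) s)
    (i : Fin n) (k : ℕ) {s M' g : ℝ} (hs : s ∈ Set.Icc (t i k) (t i (k + 1)))
    (hself : x i (t i k) ≤ M' - g) (hcv : cval x t N a i k ≤ M') :
    x i s ≤ M' - g * Real.exp (t i k - s) := by
  have hf := sol_formula hcont halo hweight hode i k hs
  have he1 : Real.exp (t i k - s) ≤ 1 := Real.exp_le_one_iff.mpr (by linarith [hs.1])
  have he0 : (0:ℝ) < Real.exp (t i k - s) := Real.exp_pos _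
  nlinarith [hf]

lemma ub_step (hcont : ∀ i, Continuous (x i)) (halo : 0 < alo)
    (hweight : ∀ i k, ∀ j ∈ N i k, a i k j ∈ Set.Icc alo ahi)
    (hode : ∀ i k, ∀ s ∈ Set.Ico (t i k) (t i (k + 1)),
      HasDerivWithinAt (x i)
        (if (N i k).Nonempty then
            ∑ j ∈ N i k, a i k j / (∑ l ∈ N i k, a i k l) *
              (x j (t i k) - x i s)
          else 0)
        (Set.Ici s) s)
    (i : Fin n) (k : ℕ) {M' h : ℝ} (hτ : τlo ≤ t i (k + 1) - t i k) (hτlo : 0 < τlo)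
    (hself : x i (t i k) ≤ M') (hcv : cval x t N a i k ≤ M' - h) (hh : 0 ≤ h) :
    x i (t i (k + 1)) ≤ M' - (1 - Real.exp (-τlo)) * h := by
  have hf := sol_formula hcont halo hweight hode i k
    (s := t i (k+1)) ⟨by linarith, le_refl _⟩
  have he1 : Real.exp (t i k - t i (k+1)) ≤ Real.exp (-τlo) :=
    Real.exp_le_exp.mpr (by linarith)
  have he2 : Real.exp (-τlo) < 1 := Real.exp_lt_one_iff.mpr (by linarith)
  have he0 : (0:ℝ) < Real.exp (t i k - t i (k+1)) := Real.exp_pos _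
  nlinarith [hf]

lemma cval_le (halo : 0 < alo) {i : Fin n} {k : ℕ}
    (hweight : ∀ j ∈ N i k, a i k j ∈ Set.Icc alo ahi) {M' : ℝ}
    (hall : ∀ j ∈ N i k, x j (t i k) ≤ M') (hself : x i (t i k) ≤ M') :
    cval x t N a i k ≤ M' := by
  rw [cval]
  split_ifs with hne
  · have hS := sum_pos' halo hweight hne
    calc ∑ j ∈ N i k, a i k j / (∑ l ∈ N i k, a i k l) * x j (t i k)
        ≤ ∑ j ∈ N i k, a i k j / (∑ l ∈ N i k, a i k l) * M' := by
          apply Finset.sum_le_sum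
          intro j hj
          exact mul_le_mul_of_nonneg_left (hall j hj)
            (div_nonneg (halo.le.trans (hweight j hj).1) hS.le)
      _ = 1 * M' := by rw [← Finset.sum_mul, wsum_one halo hweight hne]
      _ = M' := one_mul M'
  · exact hself

lemma cval_pull (halo : 0 < alo) (haa : alo ≤ ahi) {i : Fin n} {k : ℕ}
    (hweight : ∀ j ∈ N i k, a i k j ∈ Set.Icc alo ahi) {p : Fin n} (hp : p ∈ N i k)
    {M' h : ℝ} (hh : 0 ≤ h)
    (hall : ∀ j ∈ N i k, x j (t i k) ≤ M') (hplow : x p (t i k) ≤ M' - h) :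
    cval x t N a i k ≤ M' - (alo / (n * ahi)) * h := by
  have hne : (N i k).Nonempty := ⟨p, hp⟩
  have hS := sum_pos' halo hweight hne
  have hn1 : 1 ≤ n := by
    rcases p with ⟨p, hpn⟩; omega
  have hahi : 0 < ahi := halo.trans_le haa
  have hnahi : 0 < (n:ℝ) * ahi := by
    have : (1:ℝ) ≤ n := by exact_mod_cast hn1
    nlinarith
  have hSle : (∑ l ∈ N i k, a i k l) ≤ (n:ℝ) * ahi := by
    calc (∑ l ∈ N i k, a i k l) ≤ ∑ _l ∈ N i k, ahi :=
          Finset.sum_le_sum (fun l hl => (hweight l hl).2)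
      _ = (N i k).card * ahi := by rw [Finset.sum_const, nsmul_eq_mul]
      _ ≤ (n:ℝ) * ahi := by
          have : (N i k).card ≤ n := by
            simpa using Finset.card_le_univ (N i k)
          have : ((N i k).card : ℝ) ≤ n := by exact_mod_cast this
          nlinarith
  have hwp : alo / ((n:ℝ) * ahi) ≤ a i k p / (∑ l ∈ N i k, a i k l) := by
    rw [div_le_div_iff₀ hnahi hS]
    nlinarith [(hweight p hp).1, hSle]
  have hwpos : ∀ j ∈ N i k, 0 ≤ a i k j / (∑ l ∈ N i k, a i k l) :=
    fun j hj => div_nonneg (halo.le.trans (hweight j hj).1) hS.le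
  rw [cval, if_pos hne]
  have hsplit : a i k p / (∑ l ∈ N i k, a i k l) * x p (t i k)
      + ∑ j ∈ (N i k).erase p, a i k j / (∑ l ∈ N i k, a i k l) * x j (t i k)
      = ∑ j ∈ N i k, a i k j / (∑ l ∈ N i k, a i k l) * x j (t i k) :=
    Finset.add_sum_erase (N i k) (fun j => a i k j / (∑ l ∈ N i k, a i k l) * x j (t i k)) hp
  have hsplitw : a i k p / (∑ l ∈ N i k, a i k l)
      + ∑ j ∈ (N i k).erase p, a i k j / (∑ l ∈ N i k, a i k l)
      = 1 := by
    rw [Finset.add_sum_erase (N i k) (fun j => a i k j / (∑ l ∈ N i k, a i k l)) hp]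
    exact wsum_one halo hweight hne
  have herase : (∑ j ∈ (N i k).erase p, a i k j / (∑ l ∈ N i k, a i k l) * x j (t i k))
      ≤ (∑ j ∈ (N i k).erase p, a i k j / (∑ l ∈ N i k, a i k l)) * M' := by
    rw [Finset.sum_mul]
    apply Finset.sum_le_sum
    intro j hj
    exact mul_le_mul_of_nonneg_left (hall j (Finset.mem_of_mem_erase hj))
      (hwpos j (Finset.mem_of_mem_erase hj))
  have hppart : a i k p / (∑ l ∈ N i k, a i k l) * x p (t i k)
      ≤ a i k p / (∑ l ∈ N i k, a i k l) * (M' - h) :=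
    mul_le_mul_of_nonneg_left hplow (hwpos p hp)
  have hEeq : (∑ j ∈ (N i k).erase p, a i k j / (∑ l ∈ N i k, a i k l))
      = 1 - a i k p / (∑ l ∈ N i k, a i k l) := by linarith
  rw [hEeq] at herase
  nlinarith [hsplit, herase, hppart, mul_le_mul_of_nonneg_right hwp hh]
end Sys

section Env
variable {n : ℕ} {τlo τhi alo ahi : ℝ}
  {x : Fin n → ℝ → ℝ} {t : Fin n → ℕ → ℝ} {N : Fin n → ℕ → Finset (Fin n)}
  {a : Fin n → ℕ → Fin n → ℝ}

noncomputable def Msup (n : ℕ) (τhi : ℝ) (x : Fin n → ℝ → ℝ) (t0 : ℝ) : ℝ :=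
  sSup (⋃ i : Fin n, x i '' Set.Icc (max 0 (t0 - τhi)) t0)

lemma Msup_bddAbove (hcont : ∀ i, Continuous (x i)) (t0 : ℝ) :
    BddAbove (⋃ i : Fin n, x i '' Set.Icc (max 0 (t0 - τhi)) t0) :=
  (isCompact_iUnion fun i => isCompact_Icc.image (hcont i)).bddAbove

lemma le_Msup (hcont : ∀ i, Continuous (x i)) {t0 s : ℝ} (i : Fin n)
    (h1 : max 0 (t0 - τhi) ≤ s) (h2 : s ≤ t0) : x i s ≤ Msup n τhi x t0 :=
  le_csSup (Msup_bddAbove hcont t0) (Set.mem_iUnion.mpr ⟨i, ⟨s, ⟨h1, h2⟩, rfl⟩⟩)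

lemma Msup_le (hn : 1 ≤ n) (hτhi : 0 ≤ τhi) {t0 M' : ℝ} (ht0 : 0 ≤ t0)
    (h : ∀ i : Fin n, ∀ s, max 0 (t0 - τhi) ≤ s → s ≤ t0 → x i s ≤ M') :
    Msup n τhi x t0 ≤ M' := by
  apply csSup_le
  · exact ⟨x ⟨0, hn⟩ t0, Set.mem_iUnion.mpr ⟨⟨0, hn⟩,
      ⟨t0, ⟨max_le ht0 (by linarith), le_refl t0⟩, rfl⟩⟩⟩
  · rintro y hy
    obtain ⟨i, hy⟩ := Set.mem_iUnion.mp hy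
    obtain ⟨s, hs, rfl⟩ := hy
    exact h i s hs.1 hs.2

lemma envelope (hn : 1 ≤ n) (hτlo : 0 < τlo) (hττ : τlo ≤ τhi) (halo : 0 < alo)
    (hcont : ∀ i, Continuous (x i)) (ht0' : ∀ i, t i 0 = 0)
    (hstep : ∀ i k, τlo ≤ t i (k + 1) - t i k ∧ t i (k + 1) - t i k ≤ τhi)
    (hweight : ∀ i k, ∀ j ∈ N i k, a i k j ∈ Set.Icc alo ahi)
    (hode : ∀ i k, ∀ s ∈ Set.Ico (t i k) (t i (k + 1)),
      HasDerivWithinAt (x i)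
        (if (N i k).Nonempty then
            ∑ j ∈ N i k, a i k j / (∑ l ∈ N i k, a i k l) *
              (x j (t i k) - x i s)
          else 0)
        (Set.Ici s) s)
    (t0 : ℝ) (ht0 : 0 ≤ t0) :
    ∀ (i : Fin n) (s : ℝ), max 0 (t0 - τhi) ≤ s → x i s ≤ Msup n τhi x t0 := by
  haveI : Nonempty (Fin n) := ⟨⟨0, hn⟩⟩
  set lo := max 0 (t0 - τhi) with hlodef
  set M' := Msup n τhi x t0 with hMdef
  have hlo0 : (0:ℝ) ≤ lo := le_max_left _ _
  have hlot0 : lo ≤ t0 := max_le ht0 (by linarith)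
  by_contra hbad
  push_neg at hbad
  obtain ⟨i0, s0, hs0lo, hs0⟩ := hbad
  set Bad := {s : ℝ | lo ≤ s ∧ ∃ i, M' < x i s} with hBaddef
  have hBadne : Bad.Nonempty := ⟨s0, hs0lo, i0, hs0⟩
  have hBadbdd : BddBelow Bad := ⟨lo, fun s hs => hs.1⟩
  set B := sInf Bad with hBdef
  have hBlo : lo ≤ B := le_csInf hBadne (fun s hs => hs.1)
  have hmem_le : ∀ (i : Fin n) (s : ℝ), lo ≤ s → s ≤ t0 → x i s ≤ M' :=
    fun i s h1 h2 => le_Msup hcont i h1 h2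
  have hBt0 : t0 ≤ B := by
    apply le_csInf hBadne
    intro s hs
    by_contra hlt
    push_neg at hlt
    obtain ⟨i, hi⟩ := hs.2
    exact absurd (hmem_le i s hs.1 hlt.le) (not_le.mpr hi)
  have hB0 : (0:ℝ) ≤ B := hlo0.trans hBlo
  have hgoodlt : ∀ s, lo ≤ s → s < B → ∀ i, x i s ≤ M' := by
    intro s hls hsB i
    by_contra hgt
    push_neg at hgt
    exact absurd (csInf_le hBadbdd ⟨hls, i, hgt⟩) (not_le.mpr hsB)
  have hgoodB : ∀ i, x i B ≤ M' := by
    intro i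
    rcases eq_or_lt_of_le hBt0 with he | hlt'
    · exact hmem_le i B hBlo he.ge
    · have hclosed : IsClosed {s : ℝ | x i s ≤ M'} :=
        isClosed_le (hcont i) continuous_const
      have hsub : Set.Ico lo B ⊆ {s | x i s ≤ M'} := fun s hs => hgoodlt s hs.1 hs.2 i
      have hsub2 : Set.Icc lo B ⊆ {s | x i s ≤ M'} := by
        rw [← closure_Ico (show lo ≠ B by intro h; rw [h] at hlot0; linarith)]
        exact hclosed.closure_subset_iff.mpr hsub
      exact hsub2 ⟨hBlo, le_refl B⟩
  set B' := Finset.univ.inf' Finset.univ_nonempty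
    (fun i : Fin n => t i (Kidx (t i) B + 1)) with hB'def
  have hBB' : B < B' := by
    rw [Finset.lt_inf'_iff]
    intro i _
    exact (Kidx_spec (t i) hτlo (ht0' i) (fun k => (hstep i k).1) hB0).2
  have hgood2 : ∀ s, B ≤ s → s ≤ B' → ∀ i, x i s ≤ M' := by
    intro s hBs hsB' i
    have hspec := Kidx_spec (t i) hτlo (ht0' i) (fun k => (hstep i k).1) hB0
    set k := Kidx (t i) B with hkdef
    have hsIcc : s ∈ Set.Icc (t i k) (t i (k + 1)) :=
      ⟨hspec.1.trans hBs, hsB'.trans (Finset.inf'_le _ (Finset.mem_univ i))⟩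
    have htik_lo : lo ≤ t i k := by
      have h1 : (0:ℝ) ≤ t i k :=
        (Kidx_start_lb (t i) hτlo (ht0' i) (fun k => (hstep i k).1)
          (fun k => (hstep i k).2) hB0).2
      have hk0 : Kidx (t i) t0 ≤ k :=
        Kidx_mono (t i) hτlo (ht0' i) (fun k => (hstep i k).1) ht0 hBt0
      have h2 : t0 - τhi < t i (Kidx (t i) t0) :=
        (Kidx_start_lb (t i) hτlo (ht0' i) (fun k => (hstep i k).1)
          (fun k => (hstep i k).2) ht0).1
      have h3 : t i (Kidx (t i) t0) ≤ t i k :=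
        (times_strictMono (t i) hτlo (fun k => (hstep i k).1)).monotone hk0
      exact max_le (by linarith) (by linarith)
    have hgood_tik : ∀ j, x j (t i k) ≤ M' := by
      intro j
      rcases lt_or_eq_of_le hspec.1 with h | h
      · exact hgoodlt _ htik_lo h j
      · rw [h]; exact hgoodB j
    have hcv : cval x t N a i k ≤ M' :=
      cval_le halo (hweight i k) (fun j _ => hgood_tik j) (hgood_tik i)
    have := ub_decay hcont halo hweight hode i k hsIcc (g := 0)
      (by simpa using hgood_tik i) hcv
    simpa using this
  have hfin : B' ≤ B := by
    apply le_csInf hBadne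
    intro s hs
    by_contra hlt
    push_neg at hlt
    obtain ⟨i, hi⟩ := hs.2
    rcases lt_or_ge s B with h | h
    · exact absurd (hgoodlt s hs.1 h i) (not_le.mpr hi)
    · exact absurd (hgood2 s h hlt.le i) (not_le.mpr hi)
  linarith

lemma Msup_mono (hn : 1 ≤ n) (hτlo : 0 < τlo) (hττ : τlo ≤ τhi) (halo : 0 < alo)
    (hcont : ∀ i, Continuous (x i)) (ht0' : ∀ i, t i 0 = 0)
    (hstep : ∀ i k, τlo ≤ t i (k + 1) - t i k ∧ t i (k + 1) - t i k ≤ τhi)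
    (hweight : ∀ i k, ∀ j ∈ N i k, a i k j ∈ Set.Icc alo ahi)
    (hode : ∀ i k, ∀ s ∈ Set.Ico (t i k) (t i (k + 1)),
      HasDerivWithinAt (x i)
        (if (N i k).Nonempty then
            ∑ j ∈ N i k, a i k j / (∑ l ∈ N i k, a i k l) *
              (x j (t i k) - x i s)
          else 0)
        (Set.Ici s) s)
    {t0 t1 : ℝ} (h0 : 0 ≤ t0) (h01 : t0 ≤ t1) :
    Msup n τhi x t1 ≤ Msup n τhi x t0 := by
  apply Msup_le hn (by linarith) (by linarith)
  intro i s hs1 _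
  exact envelope hn hτlo hττ halo hcont ht0' hstep hweight hode t0 h0 i s
    (le_trans (max_le_max (le_refl 0) (by linarith)) hs1)

lemma decay (hn : 1 ≤ n) (hτlo : 0 < τlo) (hττ : τlo ≤ τhi) (halo : 0 < alo)
    (hcont : ∀ i, Continuous (x i)) (ht0' : ∀ i, t i 0 = 0)
    (hstep : ∀ i k, τlo ≤ t i (k + 1) - t i k ∧ t i (k + 1) - t i k ≤ τhi)
    (hweight : ∀ i k, ∀ j ∈ N i k, a i k j ∈ Set.Icc alo ahi)
    (hode : ∀ i k, ∀ s ∈ Set.Ico (t i k) (t i (k + 1)),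
      HasDerivWithinAt (x i)
        (if (N i k).Nonempty then
            ∑ j ∈ N i k, a i k j / (∑ l ∈ N i k, a i k l) *
              (x j (t i k) - x i s)
          else 0)
        (Set.Ici s) s)
    (t0 : ℝ) (ht00 : 0 ≤ t0) (i : Fin n) (k : ℕ)
    (htik : max 0 (t0 - τhi) ≤ t i k) {g : ℝ}
    (hg : x i (t i k) ≤ Msup n τhi x t0 - g) :
    ∀ s, t i k ≤ s → x i s ≤ Msup n τhi x t0 - g * Real.exp (t i k - s) := by
  set M' := Msup n τhi x t0 with hMdef
  have hmono := (times_strictMono (t i) hτlo (fun k => (hstep i k).1)).monotone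
  have henv := envelope hn hτlo hττ halo hcont ht0' hstep hweight hode t0 ht00
  have main : ∀ m : ℕ, ∀ s ∈ Set.Icc (t i (k + m)) (t i (k + m + 1)),
      x i s ≤ M' - g * Real.exp (t i k - s) := by
    intro m
    induction m with
    | zero =>
      intro s hs
      simp only [Nat.add_zero] at hs
      exact ub_decay hcont halo hweight hode i k hs hg
        (cval_le halo (hweight i k)
          (fun j _ => henv j (t i k) htik) (henv i (t i k) htik))
    | succ m ih =>
      intro s hs
      have hmm : k ≤ k + m + 1 := by omega
      have htik' : max 0 (t0 - τhi) ≤ t i (k + m + 1) := htik.trans (hmono hmm)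
      have hend : x i (t i (k + m + 1)) ≤ M' - g * Real.exp (t i k - t i (k + m + 1)) :=
        ih (t i (k + m + 1)) ⟨hmono (by omega), le_refl _⟩
      have hcv : cval x t N a i (k + m + 1) ≤ M' :=
        cval_le halo (hweight i (k + m + 1))
          (fun j _ => henv j _ htik') (henv i _ htik')
      have hs' : s ∈ Set.Icc (t i (k + m + 1)) (t i (k + m + 1 + 1)) := by
        convert hs using 3 <;> omega
      have := ub_decay hcont halo hweight hode i (k + m + 1) hs' hend hcv
      calc x i s ≤ M' - g * Real.exp (t i k - t i (k + m + 1))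
            * Real.exp (t i (k + m + 1) - s) := this
        _ = M' - g * Real.exp (t i k - s) := by
            rw [mul_assoc, ← Real.exp_add]; ring_nf
  intro s hsk
  have htik0 : (0:ℝ) ≤ t i k := le_trans (le_max_left _ _) htik
  have hs0 : (0:ℝ) ≤ s := htik0.trans hsk
  set kk := Kidx (t i) s with hkkdef
  have hspec := Kidx_spec (t i) hτlo (ht0' i) (fun k => (hstep i k).1) hs0
  have hkk : k ≤ kk := Kidx_ge (t i) hτlo (ht0' i) (fun k => (hstep i k).1) hs0 hsk
  have hkkeq : k + (kk - k) = kk := by omega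
  have := main (kk - k) s (by rw [hkkeq]; exact ⟨hspec.1, hspec.2.le⟩)
  exact this
end Env

lemma crossingFinset {α : Type*} {R : α → α → Prop} {S : Finset α} {b : α} {a : α}
    (hab : Relation.ReflTransGen R a b) (ha : a ∈ S) (hb : b ∉ S) :
    ∃ p ∈ S, ∃ q, q ∉ S ∧ R p q := by
  induction hab with
  | refl => exact absurd ha hb
  | @tail y z hay hyz ih =>
    by_cases hy : y ∈ S
    · exact ⟨y, hy, z, hb, hyz⟩
    · exact ih hy

section Contr
variable {n : ℕ} {τlo τhi alo ahi : ℝ}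
  {x : Fin n → ℝ → ℝ} {t : Fin n → ℕ → ℝ} {N : Fin n → ℕ → Finset (Fin n)}
  {a : Fin n → ℕ → Fin n → ℝ}

set_option maxHeartbeats 1000000 in
lemma contraction_upper (hn : 1 ≤ n) (hτlo : 0 < τlo) (hττ : τlo ≤ τhi)
    (halo : 0 < alo) (haa : alo ≤ ahi)
    (hcont : ∀ i, Continuous (x i)) (ht0' : ∀ i, t i 0 = 0)
    (hstep : ∀ i k, τlo ≤ t i (k + 1) - t i k ∧ t i (k + 1) - t i k ≤ τhi)
    (hweight : ∀ i k, ∀ j ∈ N i k, a i k j ∈ Set.Icc alo ahi)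
    (hode : ∀ i k, ∀ s ∈ Set.Ico (t i k) (t i (k + 1)),
      HasDerivWithinAt (x i)
        (if (N i k).Nonempty then
            ∑ j ∈ N i k, a i k j / (∑ l ∈ N i k, a i k l) *
              (x j (t i k) - x i s)
          else 0)
        (Set.Ici s) s)
    (T : ℝ) (hT : 0 ≤ T)
    (t0 : ℝ) (ht00 : 0 ≤ t0)
    (r : Fin n) (u : ℕ → ℝ)
    (hu0 : t0 + (T + 2 * τhi) ≤ u 0)
    (hustep : ∀ j, u j + (T + 2 * τhi) ≤ u (j + 1))
    (hroot : ∀ j, j + 1 < n → ∀ v : Fin n,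
      Relation.ReflTransGen
        (fun p q : Fin n => ∃ s ∈ Set.Icc (u j) (u j + T), ∃ k : ℕ,
          s ∈ Set.Ico (t q k) (t q (k + 1)) ∧ p ∈ N q k) r v)
    (D : ℝ) (hD : 0 ≤ D)
    (hrlow : x r (t r (Kidx (t r) t0)) ≤ Msup n τhi x t0 - D / 2) :
    ∀ (i : Fin n) (s : ℝ), u (n - 1) + (T + τhi) ≤ s →
      x i s ≤ Msup n τhi x t0
        - D / 2 * Real.exp (-τhi) * ((1 - Real.exp (-τlo)) * (alo / (n * ahi))) ^ (n - 1)
          * Real.exp (t0 - s) := by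
  have hτhi : 0 < τhi := lt_of_lt_of_le hτlo hττ
  set M' := Msup n τhi x t0 with hM'def
  set β := alo / ((n : ℝ) * ahi) with hβdef
  set θ := (1 - Real.exp (-τlo)) * β with hθdef
  have hahi : 0 < ahi := halo.trans_le haa
  have hnR : (1:ℝ) ≤ (n:ℝ) := by exact_mod_cast hn
  have hβpos : 0 < β := div_pos halo (by nlinarith)
  have hβle1 : β ≤ 1 := by
    rw [hβdef, div_le_one (by nlinarith)]; nlinarith
  have hexplt1 : Real.exp (-τlo) < 1 := Real.exp_lt_one_iff.mpr (by linarith)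
  have hexppos : (0:ℝ) < Real.exp (-τlo) := Real.exp_pos _
  have hθpos : 0 < θ := mul_pos (by linarith) hβpos
  have hθle1 : θ ≤ 1 := by nlinarith
  have henv := envelope hn hτlo hττ halo hcont ht0' hstep hweight hode t0 ht00
  have henv' : ∀ (j : Fin n) (s : ℝ), t0 ≤ s → x j s ≤ M' :=
    fun j s h => henv j s (le_trans (max_le ht00 (by linarith)) h)
  have hu_mono : Monotone u :=
    monotone_nat_of_le_succ (fun j => by have := hustep j; linarith)
  have hu_ge : ∀ j, t0 + (T + 2 * τhi) ≤ u j :=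
    fun j => le_trans hu0 (hu_mono (Nat.zero_le j))
  set w : ℕ → ℝ := fun j => if j = 0 then t0 else u (j - 1) + (T + τhi) with hwdef
  have hw0 : w 0 = t0 := by simp [hwdef]
  have hwsucc : ∀ j, w (j + 1) = u j + (T + τhi) := fun j => by simp [hwdef]
  have hwget0 : ∀ j, t0 ≤ w j := by
    intro j
    cases j with
    | zero => rw [hw0]
    | succ j => rw [hwsucc]; have := hu_ge j; linarith
  have hw_mono : Monotone w := by
    apply monotone_nat_of_le_succ
    intro j
    cases j with
    | zero => rw [hw0, hwsucc]; have := hu_ge 0; linarith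
    | succ j => rw [hwsucc, hwsucc]; have := hustep j; linarith
  have hwu : ∀ j, w j + τhi ≤ u j := by
    intro j
    cases j with
    | zero => rw [hw0]; have := hu_ge 0; linarith
    | succ j => rw [hwsucc]; have := hustep j; linarith
  -- main induction
  have claim : ∀ j : ℕ, ∃ S : Finset (Fin n), r ∈ S ∧ min (j + 1) n ≤ S.card ∧
      ∀ q ∈ S, ∀ s : ℝ, w j ≤ s →
        x q s ≤ M' - D / 2 * Real.exp (-τhi) * θ ^ j * Real.exp (t0 - s) := by
    intro j
    induction j with
    | zero =>
      refine ⟨{r}, Finset.mem_singleton_self r, by simp, ?_⟩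
      intro q hq s hws
      rw [Finset.mem_singleton] at hq
      subst hq
      rw [hw0] at hws
      set k0 := Kidx (t q) t0 with hk0def
      have hspec0 := Kidx_spec (t q) hτlo (ht0' q) (fun k => (hstep q k).1) ht00
      have hstart := Kidx_start_lb (t q) hτlo (ht0' q) (fun k => (hstep q k).1)
        (fun k => (hstep q k).2) ht00
      have htrk0 : max 0 (t0 - τhi) ≤ t q k0 := max_le hstart.2 hstart.1.le
      have hdec := decay hn hτlo hττ halo hcont ht0' hstep hweight hode t0 ht00
        q k0 htrk0 hrlow s (le_trans hspec0.1 hws)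
      have hE : Real.exp (-τhi) * Real.exp (t0 - s) ≤ Real.exp (t q k0 - s) := by
        rw [← Real.exp_add]
        exact Real.exp_le_exp.mpr (by linarith [hstart.1])
      have hmul : D / 2 * (Real.exp (-τhi) * Real.exp (t0 - s))
          ≤ D / 2 * Real.exp (t q k0 - s) :=
        mul_le_mul_of_nonneg_left hE (by linarith)
      calc x q s ≤ M' - D / 2 * Real.exp (t q k0 - s) := hdec
        _ ≤ M' - D / 2 * Real.exp (-τhi) * θ ^ 0 * Real.exp (t0 - s) := by
            simp only [pow_zero, mul_one]
            nlinarith [hmul]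
    | succ j ih =>
      obtain ⟨S, hrS, hScard, hSbound⟩ := ih
      have hpow : θ ^ (j + 1) ≤ θ ^ j :=
        pow_le_pow_of_le_one hθpos.le hθle1 (Nat.le_succ j)
      have hweaken : ∀ q ∈ S, ∀ s : ℝ, w (j + 1) ≤ s →
          x q s ≤ M' - D / 2 * Real.exp (-τhi) * θ ^ (j + 1) * Real.exp (t0 - s) := by
        intro q hq s hws
        have h1 := hSbound q hq s (le_trans (hw_mono (Nat.le_succ j)) hws)
        have h2 : D / 2 * Real.exp (-τhi) * θ ^ (j + 1) * Real.exp (t0 - s)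
            ≤ D / 2 * Real.exp (-τhi) * θ ^ j * Real.exp (t0 - s) := by
          apply mul_le_mul_of_nonneg_right _ (Real.exp_nonneg _)
          exact mul_le_mul_of_nonneg_left hpow (by positivity)
        linarith
      by_cases hSU : S = Finset.univ
      · refine ⟨S, hrS, ?_, hweaken⟩
        have : S.card = n := by rw [hSU, Finset.card_univ, Fintype.card_fin]
        omega
      · -- find a crossing edge in window j
        have hcard_lt : S.card < n := by
          have h1 : S.card ≤ n := by
            have := Finset.card_le_univ S
            simpa [Finset.card_univ] using this
          rcases eq_or_lt_of_le h1 with h | h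
          · exact absurd (Finset.eq_univ_of_card S (by simp [h])) hSU
          · exact h
        have hjn : j + 1 < n := by omega
        obtain ⟨v, hv⟩ : ∃ v, v ∉ S := by
          by_contra hall
          push_neg at hall
          exact hSU (Finset.eq_univ_iff_forall.mpr hall)
        obtain ⟨p, hpS, q, hqS, s', hs'win, k, hs'k, hpN⟩ :=
          crossingFinset (hroot j hjn v) hrS hv
        -- time bookkeeping
        have hq_step := hstep q k
        have htqk_lt : t q k ≤ s' := hs'k.1
        have htqk_gt : s' - τhi < t q k := by
          have := hs'k.2
          linarith [hq_step.2]
        have hwjtqk : w j ≤ t q k := by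
          have := hwu j
          have := hs'win.1
          linarith
        have ht0tqk : t0 ≤ t q k := le_trans (hwget0 j) hwjtqk
        have htqk_env : max 0 (t0 - τhi) ≤ t q k :=
          max_le (le_trans ht00 ht0tqk) (by linarith)
        have htq1_env : max 0 (t0 - τhi) ≤ t q (k + 1) :=
          le_trans htqk_env (by linarith [hq_step.1])
        set G := D / 2 * Real.exp (-τhi) * θ ^ j * Real.exp (t0 - t q k) with hGdef
        have hG0 : 0 ≤ G := by positivity
        have hpbound : x p (t q k) ≤ M' - G := hSbound p hpS (t q k) hwjtqk
        have hcv : cval x t N a q k ≤ M' - β * G := by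
          have := cval_pull halo haa (hweight q k) hpN hG0
            (fun j' _ => henv' j' (t q k) ht0tqk) hpbound
          rw [hβdef]
          exact this
        have hq_end : x q (t q (k + 1)) ≤ M' - (1 - Real.exp (-τlo)) * (β * G) :=
          ub_step hcont halo hweight hode q k hq_step.1 hτlo
            (henv' q (t q k) ht0tqk) hcv (by positivity)
        have hq_end' : x q (t q (k + 1)) ≤ M' - θ * G := by
          rw [hθdef]; linarith [hq_end]
        have hdec := decay hn hτlo hττ halo hcont ht0' hstep hweight hode t0 ht00
          q (k + 1) htq1_env hq_end'
        refine ⟨insert q S, Finset.mem_insert_of_mem hrS, ?_, ?_⟩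
        · rw [Finset.card_insert_of_notMem hqS]
          omega
        · intro q' hq' s hws
          rcases Finset.mem_insert.mp hq' with hq'' | hq''
          · subst hq''
            have htq1s : t q' (k + 1) ≤ s := by
              have h1 : t q' (k + 1) ≤ t q' k + τhi := by linarith [hq_step.2]
              have h2 : t q' k + τhi ≤ s' + τhi := by linarith
              have h3 : s' + τhi ≤ u j + T + τhi := by linarith [hs'win.2]
              have h4 := hwsucc j
              linarith [hws, h4]
            have hbound := hdec s htq1s
            have hEE : D / 2 * Real.exp (-τhi) * θ ^ (j + 1) * Real.exp (t0 - s)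
                ≤ θ * G * Real.exp (t q' (k + 1) - s) := by
              have hGE : θ * G * Real.exp (t q' (k + 1) - s)
                  = D / 2 * Real.exp (-τhi) * θ ^ (j + 1)
                    * (Real.exp (t0 - t q' k) * Real.exp (t q' (k + 1) - s)) := by
                rw [hGdef]; ring
              rw [hGE]
              apply mul_le_mul_of_nonneg_left _ (by positivity)
              rw [← Real.exp_add]
              exact Real.exp_le_exp.mpr (by linarith [hq_step.1])
            linarith
          · exact hweaken q' hq'' s hws
  -- conclude
  intro i s hs
  obtain ⟨S, hrS, hScard, hSbound⟩ := claim (n - 1)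
  have hSU : S = Finset.univ := by
    apply Finset.eq_univ_of_card
    rw [Fintype.card_fin]
    have h1 : S.card ≤ n := by
      have := Finset.card_le_univ S
      simpa [Finset.card_univ] using this
    omega
  have hiS : i ∈ S := by rw [hSU]; exact Finset.mem_univ i
  apply hSbound i hiS s
  rcases Nat.eq_zero_or_pos (n - 1) with h | h
  · rw [h, hw0]
    have := hu_ge (n - 1)
    linarith
  · have : w (n - 1) = u (n - 2) + (T + τhi) := by
      have hh : n - 1 = (n - 2) + 1 := by omega
      rw [hh, hwsucc]
    rw [this]
    have := hu_mono (show n - 2 ≤ n - 1 by omega)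
    linarith
end Contr

section Gap
variable {n : ℕ} {τlo τhi alo ahi : ℝ}
  {x : Fin n → ℝ → ℝ} {t : Fin n → ℕ → ℝ} {N : Fin n → ℕ → Finset (Fin n)}
  {a : Fin n → ℕ → Fin n → ℝ}

lemma hode_neg
    (hode : ∀ i k, ∀ s ∈ Set.Ico (t i k) (t i (k + 1)),
      HasDerivWithinAt (x i)
        (if (N i k).Nonempty then
            ∑ j ∈ N i k, a i k j / (∑ l ∈ N i k, a i k l) *
              (x j (t i k) - x i s)
          else 0)
        (Set.Ici s) s) :
    ∀ i k, ∀ s ∈ Set.Ico (t i k) (t i (k + 1)),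
      HasDerivWithinAt (fun u => -(x i u))
        (if (N i k).Nonempty then
            ∑ j ∈ N i k, a i k j / (∑ l ∈ N i k, a i k l) *
              (-(x j (t i k)) - -(x i s))
          else 0)
        (Set.Ici s) s := by
  intro i k s hs
  have h := (hode i k s hs).neg
  refine h.congr_deriv ?_
  split_ifs with hne
  · rw [← Finset.sum_neg_distrib]
    exact Finset.sum_congr rfl (fun j hj => by ring)
  · simp

set_option maxHeartbeats 1000000 in
lemma gap_contract (hn : 1 ≤ n) (hτlo : 0 < τlo) (hττ : τlo ≤ τhi)
    (halo : 0 < alo) (haa : alo ≤ ahi)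
    (hcont : ∀ i, Continuous (x i)) (ht0' : ∀ i, t i 0 = 0)
    (hstep : ∀ i k, τlo ≤ t i (k + 1) - t i k ∧ t i (k + 1) - t i k ≤ τhi)
    (hweight : ∀ i k, ∀ j ∈ N i k, a i k j ∈ Set.Icc alo ahi)
    (hode : ∀ i k, ∀ s ∈ Set.Ico (t i k) (t i (k + 1)),
      HasDerivWithinAt (x i)
        (if (N i k).Nonempty then
            ∑ j ∈ N i k, a i k j / (∑ l ∈ N i k, a i k l) *
              (x j (t i k) - x i s)
          else 0)
        (Set.Ici s) s)
    (T : ℝ) (hT : 0 ≤ T)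
    (hspan : ∀ t0 : ℝ, 0 ≤ t0 → ∃ root : Fin n, ∀ v : Fin n,
      Relation.ReflTransGen
        (fun p q : Fin n => ∃ s ∈ Set.Icc t0 (t0 + T), ∃ k : ℕ,
          s ∈ Set.Ico (t q k) (t q (k + 1)) ∧ p ∈ N q k)
        root v)
    (t0 : ℝ) (ht00 : 0 ≤ t0) :
    Msup n τhi x (t0 + (T + 2 * τhi) * (n * n + 1))
        + Msup n τhi (fun i s => -(x i s)) (t0 + (T + 2 * τhi) * (n * n + 1))
      ≤ (1 - 1 / 2 * Real.exp (-τhi)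
            * ((1 - Real.exp (-τlo)) * (alo / (n * ahi))) ^ (n - 1)
            * Real.exp (-((T + 2 * τhi) * (n * n + 1))))
          * (Msup n τhi x t0 + Msup n τhi (fun i s => -(x i s)) t0) := by
  have hτhi : 0 < τhi := lt_of_lt_of_le hτlo hττ
  set Λ : ℝ := T + 2 * τhi with hΛdef
  have hΛpos : 0 < Λ := by rw [hΛdef]; linarith
  set L : ℝ := Λ * (n * n + 1) with hLdef
  have hnn1 : (1:ℝ) ≤ ((n:ℝ) * n + 1) := by
    have h00 : (0:ℝ) ≤ (n:ℝ) * n := by positivity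
    linarith
  have hLpos : 0 < L := by rw [hLdef]; nlinarith
  set xneg : Fin n → ℝ → ℝ := fun i s => -(x i s) with hxnegdef
  have hcontneg : ∀ i, Continuous (xneg i) := fun i => (hcont i).neg
  have hodeneg := hode_neg hode
  set η : ℝ := 1 / 2 * Real.exp (-τhi)
      * ((1 - Real.exp (-τlo)) * (alo / (n * ahi))) ^ (n - 1) * Real.exp (-L) with hηdef
  -- choose the windows by pigeonhole
  have hwin0 : ∀ idx : ℕ, (0:ℝ) ≤ t0 + Λ * (idx + 1) := by
    intro idx
    have : (0:ℝ) ≤ (idx:ℝ) + 1 := by positivity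
    nlinarith
  set ρ : ℕ → Fin n := fun idx => (hspan (t0 + Λ * (idx + 1)) (hwin0 idx)).choose with hρdef
  have hρspec : ∀ idx : ℕ, ∀ v : Fin n,
      Relation.ReflTransGen
        (fun p q : Fin n => ∃ s ∈ Set.Icc (t0 + Λ * (idx + 1)) (t0 + Λ * (idx + 1) + T),
          ∃ k : ℕ, s ∈ Set.Ico (t q k) (t q (k + 1)) ∧ p ∈ N q k)
        (ρ idx) v :=
    fun idx => (hspan (t0 + Λ * (idx + 1)) (hwin0 idx)).choose_spec
  haveI : Nonempty (Fin n) := ⟨⟨0, hn⟩⟩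
  obtain ⟨r, _, hrfiber⟩ :
      ∃ r ∈ (Finset.univ : Finset (Fin n)),
        n ≤ ((Finset.range (n * n)).filter fun idx => ρ idx = r).card := by
    apply Finset.exists_le_card_fiber_of_mul_le_card_of_maps_to
      (fun idx _ => Finset.mem_univ (ρ idx)) Finset.univ_nonempty
    simp [Finset.card_range, Finset.card_univ]
  obtain ⟨J, hJsub, hJcard⟩ :=
    Finset.exists_subset_card_eq hrfiber
  set eJ := J.orderEmbOfFin hJcard with heJdef
  have heJmem : ∀ j : Fin n, eJ j ∈ J := fun j => J.orderEmbOfFin_mem hJcard j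
  have heJroot : ∀ j : Fin n, ρ (eJ j) = r := by
    intro j
    have := hJsub (heJmem j)
    simp only [Finset.mem_filter] at this
    exact this.2
  have heJlt : ∀ j : Fin n, eJ j < n * n := by
    intro j
    have := hJsub (heJmem j)
    simp only [Finset.mem_filter, Finset.mem_range] at this
    exact this.1
  -- the index map g and window starts u
  set g : ℕ → ℕ := fun j => if h : j < n then (eJ ⟨j, h⟩ : ℕ)
      else (eJ ⟨n - 1, by omega⟩ : ℕ) + (j - (n - 1)) with hgdef
  have hgsucc : ∀ j, g j + 1 ≤ g (j + 1) := by
    intro j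
    by_cases h1 : j + 1 < n
    · have h0 : j < n := by omega
      rw [hgdef]
      simp only [dif_pos h0, dif_pos h1]
      have : (⟨j, h0⟩ : Fin n) < ⟨j + 1, h1⟩ := by simp [Fin.lt_def]
      exact eJ.strictMono this
    · by_cases h0 : j < n
      · have hj : j = n - 1 := by omega
        rw [hgdef]
        simp only [dif_pos h0, dif_neg h1]
        have : (⟨j, h0⟩ : Fin n) = ⟨n - 1, by omega⟩ := by
          simp [Fin.ext_iff, hj]
        rw [this]
        omega
      · rw [hgdef]
        simp only [dif_neg h0, dif_neg h1]
        omega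
  set u : ℕ → ℝ := fun j => t0 + Λ * (g j + 1) with hudef
  have hu0 : t0 + Λ ≤ u 0 := by
    rw [hudef]
    simp only
    have : (0:ℝ) ≤ (g 0 : ℝ) := Nat.cast_nonneg _
    nlinarith
  have hustep : ∀ j, u j + Λ ≤ u (j + 1) := by
    intro j
    rw [hudef]
    simp only
    have := hgsucc j
    have : ((g j : ℝ) + 1) ≤ (g (j + 1) : ℝ) := by exact_mod_cast this
    nlinarith
  have hroot : ∀ j, j + 1 < n → ∀ v : Fin n,
      Relation.ReflTransGen
        (fun p q : Fin n => ∃ s ∈ Set.Icc (u j) (u j + T), ∃ k : ℕ,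
          s ∈ Set.Ico (t q k) (t q (k + 1)) ∧ p ∈ N q k) r v := by
    intro j hj v
    have hjn : j < n := by omega
    have hgj : g j = (eJ ⟨j, hjn⟩ : ℕ) := by rw [hgdef]; simp [dif_pos hjn]
    have huj : u j = t0 + Λ * ((eJ ⟨j, hjn⟩ : ℕ) + 1) := by
      rw [hudef]; simp [hgj]
    rw [huj]
    have := hρspec (eJ ⟨j, hjn⟩) v
    rwa [heJroot ⟨j, hjn⟩] at this
  have hun1 : u (n - 1) + (T + τhi) ≤ t0 + L - τhi := by
    have hn1 : n - 1 < n := by omega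
    have hgn1 : g (n - 1) = (eJ ⟨n - 1, hn1⟩ : ℕ) := by rw [hgdef]; simp [dif_pos hn1]
    have hlt := heJlt ⟨n - 1, hn1⟩
    have hltR : ((g (n-1) : ℝ) + 1) ≤ ((n:ℝ) * n) := by
      rw [hgn1]
      have : ((eJ ⟨n - 1, hn1⟩ : ℕ) : ℝ) + 1 ≤ ((n * n : ℕ) : ℝ) := by
        exact_mod_cast Nat.succ_le_of_lt hlt
      push_cast at this ⊢
      linarith
    rw [hudef, hLdef]
    simp only
    rw [hΛdef]
    nlinarith [hltR, hτhi, hT]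
  -- the two-sided setup
  set M0 := Msup n τhi x t0 with hM0def
  set m0 := Msup n τhi xneg t0 with hm0def
  set D := M0 + m0 with hDdef
  set k0 := Kidx (t r) t0 with hk0def
  have hspec0 := Kidx_spec (t r) hτlo (ht0' r) (fun k => (hstep r k).1) ht00
  have hstart := Kidx_start_lb (t r) hτlo (ht0' r) (fun k => (hstep r k).1)
    (fun k => (hstep r k).2) ht00
  have htrk0 : max 0 (t0 - τhi) ≤ t r k0 := max_le hstart.2 hstart.1.le
  have hup : x r (t r k0) ≤ M0 := le_Msup hcont r htrk0 hspec0.1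
  have hdn : xneg r (t r k0) ≤ m0 := le_Msup hcontneg r htrk0 hspec0.1
  have hD0 : 0 ≤ D := by
    have : -(x r (t r k0)) ≤ m0 := hdn
    rw [hDdef]; linarith
  have hθpow_pos : 0 < ((1 - Real.exp (-τlo)) * (alo / (n * ahi))) ^ (n - 1) := by
    apply pow_pos
    apply mul_pos
    · have : Real.exp (-τlo) < 1 := Real.exp_lt_one_iff.mpr (by linarith)
      linarith
    · apply div_pos halo
      have : (1:ℝ) ≤ (n:ℝ) := by exact_mod_cast hn
      nlinarith
  have hηpos : 0 < η := by
    rw [hηdef]; positivity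
  have hLτ : 0 ≤ t0 + L := by linarith
  have hthr : ∀ s : ℝ, max 0 (t0 + L - τhi) ≤ s → u (n - 1) + (T + τhi) ≤ s := by
    intro s hs
    have := le_trans (le_max_right 0 (t0 + L - τhi)) hs
    linarith [hun1]
  have hexp_lb : ∀ s : ℝ, s ≤ t0 + L → Real.exp (-L) ≤ Real.exp (t0 - s) := by
    intro s hs
    exact Real.exp_le_exp.mpr (by linarith)
  -- case split on root position
  rcases le_or_gt (x r (t r k0)) (M0 - D / 2) with hcase | hcase
  · -- upper contraction for x
    have hconc := contraction_upper hn hτlo hττ halo haa hcont ht0' hstep hweight hode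
      T hT t0 ht00 r u hu0 hustep hroot D hD0
      (by rw [← hk0def, ← hM0def]; exact hcase)
    have hMup : Msup n τhi x (t0 + L) ≤ M0 - η * D := by
      apply Msup_le hn hτhi.le hLτ
      intro i s hs1 hs2
      have h1 := hconc i s (hthr s hs1)
      have h2 : η * D ≤ D / 2 * Real.exp (-τhi)
          * ((1 - Real.exp (-τlo)) * (alo / (n * ahi))) ^ (n - 1) * Real.exp (t0 - s) := by
        rw [hηdef]
        have h3 := hexp_lb s hs2
        have hC : (0:ℝ) ≤ D / 2 * Real.exp (-τhi)
            * ((1 - Real.exp (-τlo)) * (alo / (n * ahi))) ^ (n - 1) := by positivity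
        nlinarith [mul_le_mul_of_nonneg_left h3 hC]
      exact h1.trans (sub_le_sub_left h2 _)
    have hmup : Msup n τhi xneg (t0 + L) ≤ m0 :=
      Msup_mono hn hτlo hττ halo hcontneg ht0' hstep hweight hodeneg ht00 (by linarith)
    have hring : (1 - η) * D = D - η * D := by ring
    rw [hring]
    linarith [hMup, hmup, hDdef.le, hDdef.ge]
  · -- lower contraction via xneg
    have hcase' : xneg r (t r k0) ≤ Msup n τhi xneg t0 - D / 2 := by
      rw [hxnegdef, ← hm0def]
      simp only
      rw [hDdef] at hcase ⊢
      linarith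
    have hconc := contraction_upper hn hτlo hττ halo haa hcontneg ht0' hstep hweight
      hodeneg T hT t0 ht00 r u hu0 hustep hroot D hD0
      (by rw [← hk0def]; exact hcase')
    have hmup : Msup n τhi xneg (t0 + L) ≤ m0 - η * D := by
      apply Msup_le hn hτhi.le hLτ
      intro i s hs1 hs2
      have h1 := hconc i s (hthr s hs1)
      have h2 : η * D ≤ D / 2 * Real.exp (-τhi)
          * ((1 - Real.exp (-τlo)) * (alo / (n * ahi))) ^ (n - 1) * Real.exp (t0 - s) := by
        rw [hηdef]
        have h3 := hexp_lb s hs2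
        have hC : (0:ℝ) ≤ D / 2 * Real.exp (-τhi)
            * ((1 - Real.exp (-τlo)) * (alo / (n * ahi))) ^ (n - 1) := by positivity
        nlinarith [mul_le_mul_of_nonneg_left h3 hC]
      rw [← hm0def] at h1
      exact h1.trans (sub_le_sub_left h2 _)
    have hMup : Msup n τhi x (t0 + L) ≤ M0 :=
      Msup_mono hn hτlo hττ halo hcont ht0' hstep hweight hode ht00 (by linarith)
    have hring : (1 - η) * D = D - η * D := by ring
    rw [hring]
    linarith [hMup, hmup, hDdef.le, hDdef.ge]
end Gap

set_option maxHeartbeats 1000000 in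
/-- Asynchronous delay-free consensus: if there is `T ≥ 0` such that the union of the
communication topology `G⁰` over every interval `[t0, t0 + T]` (with `t0 ≥ 0`)
contains a spanning tree, then the system solves a consensus problem. -/
theorem asynchronous_delayfree_consensus
    (n : ℕ) (hn : 1 ≤ n)
    (τlo τhi : ℝ) (hτlo : 0 < τlo) (hττ : τlo ≤ τhi)
    (alo ahi : ℝ) (halo : 0 < alo) (haa : alo ≤ ahi)
    (x : Fin n → ℝ → ℝ)
    (t : Fin n → ℕ → ℝ)
    (N : Fin n → ℕ → Finset (Fin n))
    (a : Fin n → ℕ → Fin n → ℝ)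
    (hcont : ∀ i, Continuous (x i))
    (ht0 : ∀ i, t i 0 = 0)
    (hstep : ∀ i k, τlo ≤ t i (k + 1) - t i k ∧ t i (k + 1) - t i k ≤ τhi)
    (hNself : ∀ i k, i ∉ N i k)
    (hweight : ∀ i k, ∀ j ∈ N i k, a i k j ∈ Set.Icc alo ahi)
    (hode : ∀ i k, ∀ s ∈ Set.Ico (t i k) (t i (k + 1)),
      HasDerivWithinAt (x i)
        (if (N i k).Nonempty then
            ∑ j ∈ N i k, a i k j / (∑ l ∈ N i k, a i k l) *
              (x j (t i k) - x i s)
          else 0)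
        (Set.Ici s) s)
    (T : ℝ) (hT : 0 ≤ T)
    (hspan : ∀ t0 : ℝ, 0 ≤ t0 → ∃ root : Fin n, ∀ v : Fin n,
      Relation.ReflTransGen
        (fun p q : Fin n => ∃ s ∈ Set.Icc t0 (t0 + T), ∃ k : ℕ,
          s ∈ Set.Ico (t q k) (t q (k + 1)) ∧ p ∈ N q k)
        root v) :
    ∃ c : ℝ, ∀ i, Tendsto (x i) atTop (𝓝 c) := by
  have hτhi : 0 < τhi := lt_of_lt_of_le hτlo hττ
  have hahi : 0 < ahi := halo.trans_le haa
  have hnR : (1:ℝ) ≤ (n:ℝ) := by exact_mod_cast hn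
  set xneg : Fin n → ℝ → ℝ := fun i s => -(x i s) with hxnegdef
  have hcontneg : ∀ i, Continuous (xneg i) := fun i => (hcont i).neg
  have hodeneg := hode_neg hode
  set L : ℝ := (T + 2 * τhi) * ((n:ℝ) * n + 1) with hLdef
  have hnn1 : (1:ℝ) ≤ ((n:ℝ) * n + 1) := by
    have h00 : (0:ℝ) ≤ (n:ℝ) * n := by positivity
    linarith
  have hLpos : 0 < L := by rw [hLdef]; nlinarith
  set η : ℝ := 1 / 2 * Real.exp (-τhi)
      * ((1 - Real.exp (-τlo)) * (alo / (n * ahi))) ^ (n - 1) * Real.exp (-L) with hηdef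
  have hβpos : 0 < alo / ((n:ℝ) * ahi) := div_pos halo (by nlinarith)
  have hβle1 : alo / ((n:ℝ) * ahi) ≤ 1 := by
    rw [div_le_one (by nlinarith)]; nlinarith
  have hexplt1 : Real.exp (-τlo) < 1 := Real.exp_lt_one_iff.mpr (by linarith)
  have hexppos : (0:ℝ) < Real.exp (-τlo) := Real.exp_pos _
  have hθpos : 0 < (1 - Real.exp (-τlo)) * (alo / ((n:ℝ) * ahi)) :=
    mul_pos (by linarith) hβpos
  have hθle1 : (1 - Real.exp (-τlo)) * (alo / ((n:ℝ) * ahi)) ≤ 1 := by nlinarith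
  have hηpos : 0 < η := by rw [hηdef]; positivity
  have hηle : η ≤ 1 / 2 := by
    have h1 : Real.exp (-τhi) ≤ 1 := Real.exp_le_one_iff.mpr (by linarith)
    have h2 : ((1 - Real.exp (-τlo)) * (alo / ((n:ℝ) * ahi))) ^ (n - 1) ≤ 1 :=
      pow_le_one₀ hθpos.le hθle1
    have h2' : (0:ℝ) ≤ ((1 - Real.exp (-τlo)) * (alo / ((n:ℝ) * ahi))) ^ (n - 1) :=
      pow_nonneg hθpos.le _
    have h3 : Real.exp (-L) ≤ 1 := Real.exp_le_one_iff.mpr (by linarith)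
    have h3' : (0:ℝ) ≤ Real.exp (-L) := (Real.exp_pos _).le
    have hP2 : ((1 - Real.exp (-τlo)) * (alo / ((n:ℝ) * ahi))) ^ (n - 1)
        * Real.exp (-L) ≤ 1 := by nlinarith
    have hP2' : (0:ℝ) ≤ ((1 - Real.exp (-τlo)) * (alo / ((n:ℝ) * ahi))) ^ (n - 1)
        * Real.exp (-L) := by positivity
    have hP3 : Real.exp (-τhi)
        * (((1 - Real.exp (-τlo)) * (alo / ((n:ℝ) * ahi))) ^ (n - 1)
          * Real.exp (-L)) ≤ 1 := by nlinarith [Real.exp_pos (-τhi)]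
    rw [hηdef]
    nlinarith [hP3]
  -- gap contraction and monotonicity
  have hgapc : ∀ t0 : ℝ, 0 ≤ t0 →
      Msup n τhi x (t0 + L) + Msup n τhi xneg (t0 + L)
        ≤ (1 - η) * (Msup n τhi x t0 + Msup n τhi xneg t0) := by
    intro t0 htt0
    exact gap_contract hn hτlo hττ halo haa hcont ht0 hstep hweight hode T hT hspan t0 htt0
  have hsandwich : ∀ t0 : ℝ, 0 ≤ t0 → ∀ i : Fin n, ∀ s : ℝ, t0 ≤ s →
      -(Msup n τhi xneg t0) ≤ x i s ∧ x i s ≤ Msup n τhi x t0 := by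
    intro t0 htt0 i s hs
    have hmaxs : max 0 (t0 - τhi) ≤ s := max_le (htt0.trans hs) (by linarith)
    constructor
    · have := envelope hn hτlo hττ halo hcontneg ht0 hstep hweight hodeneg t0 htt0 i s hmaxs
      simp only [hxnegdef] at this
      linarith
    · exact envelope hn hτlo hττ halo hcont ht0 hstep hweight hode t0 htt0 i s hmaxs
  have hgap0 : ∀ t0 : ℝ, 0 ≤ t0 → 0 ≤ Msup n τhi x t0 + Msup n τhi xneg t0 := by
    intro t0 htt0
    have := hsandwich t0 htt0 ⟨0, hn⟩ t0 le_rfl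
    linarith [this.1, this.2]
  have hmono : ∀ t0 t1 : ℝ, 0 ≤ t0 → t0 ≤ t1 →
      Msup n τhi x t1 + Msup n τhi xneg t1
        ≤ Msup n τhi x t0 + Msup n τhi xneg t0 := by
    intro t0 t1 h0 h01
    have h1 := Msup_mono hn hτlo hττ halo hcont ht0 hstep hweight hode h0 h01
    have h2 := Msup_mono hn hτlo hττ halo hcontneg ht0 hstep hweight hodeneg h0 h01
    linarith
  have hiter : ∀ k : ℕ, Msup n τhi x (k * L) + Msup n τhi xneg (k * L)
      ≤ (1 - η) ^ k * (Msup n τhi x 0 + Msup n τhi xneg 0) := by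
    intro k
    induction k with
    | zero => simp
    | succ k ih =>
      have hkL : (0:ℝ) ≤ (k:ℝ) * L := by positivity
      have heq : ((k:ℝ) + 1) * L = (k:ℝ) * L + L := by ring
      have hstep' := hgapc ((k:ℝ) * L) hkL
      have h1η : (0:ℝ) ≤ 1 - η := by linarith
      calc Msup n τhi x (((k:ℕ) + 1 : ℕ) * L) + Msup n τhi xneg (((k:ℕ) + 1 : ℕ) * L)
          = Msup n τhi x ((k:ℝ) * L + L) + Msup n τhi xneg ((k:ℝ) * L + L) := by
            push_cast; rw [heq]
        _ ≤ (1 - η) * (Msup n τhi x ((k:ℝ) * L) + Msup n τhi xneg ((k:ℝ) * L)) := hstep'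
        _ ≤ (1 - η) * ((1 - η) ^ k * (Msup n τhi x 0 + Msup n τhi xneg 0)) :=
            mul_le_mul_of_nonneg_left ih h1η
        _ = (1 - η) ^ (k + 1) * (Msup n τhi x 0 + Msup n τhi xneg 0) := by ring
  have hsmall : ∀ ε : ℝ, 0 < ε → ∃ t1 : ℝ, 0 ≤ t1 ∧
      Msup n τhi x t1 + Msup n τhi xneg t1 < ε := by
    intro ε hε
    have h1η : (0:ℝ) ≤ 1 - η := by linarith
    have h1η' : (1 - η) < 1 := by linarith
    have htend : Tendsto (fun k : ℕ => (1 - η) ^ k * (Msup n τhi x 0 + Msup n τhi xneg 0))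
        atTop (𝓝 0) := by
      have := tendsto_pow_atTop_nhds_zero_of_lt_one h1η h1η'
      simpa using this.mul_const (Msup n τhi x 0 + Msup n τhi xneg 0)
    have hev := htend.eventually (gt_mem_nhds hε)
    obtain ⟨k, hk⟩ := hev.exists
    refine ⟨k * L, by positivity, ?_⟩
    exact lt_of_le_of_lt (hiter k) hk
  -- Cauchy and limit for agent 0
  set i0 : Fin n := ⟨0, hn⟩ with hi0def
  have hcauchy : Cauchy (Filter.map (x i0) atTop) := by
    rw [Metric.cauchy_iff]
    refine ⟨Filter.map_neBot, ?_⟩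
    intro ε hε
    obtain ⟨t1, ht1, hlt⟩ := hsmall (ε / 2) (by linarith)
    refine ⟨x i0 '' Set.Ici t1, ?_, ?_⟩
    · rw [Filter.mem_map]
      exact Filter.mem_of_superset (Filter.Ici_mem_atTop t1) (fun s hs => ⟨s, hs, rfl⟩)
    · rintro y ⟨sy, hsy, rfl⟩ z ⟨sz, hsz, rfl⟩
      have h1 := hsandwich t1 ht1 i0 sy hsy
      have h2 := hsandwich t1 ht1 i0 sz hsz
      rw [Real.dist_eq, abs_sub_lt_iff]
      constructor <;> linarith [h1.1, h1.2, h2.1, h2.2]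
  obtain ⟨c, hc⟩ := CompleteSpace.complete hcauchy
  refine ⟨c, ?_⟩
  intro i
  have hT0 : Tendsto (x i0) atTop (𝓝 c) := hc
  rw [Metric.tendsto_atTop] at hT0 ⊢
  intro ε hε
  obtain ⟨t1, ht1, hlt⟩ := hsmall (ε / 2) (by linarith)
  obtain ⟨t2, ht2⟩ := hT0 (ε / 2) (by linarith)
  refine ⟨max t1 t2, ?_⟩
  intro s hs
  have hs1 : t1 ≤ s := le_trans (le_max_left _ _) hs
  have hs2 : t2 ≤ s := le_trans (le_max_right _ _) hs
  have h1 := hsandwich t1 ht1 i s hs1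
  have h0 := hsandwich t1 ht1 i0 s hs1
  have h2 := ht2 s hs2
  rw [Real.dist_eq] at h2 ⊢
  have htri : |x i s - c| ≤ |x i s - x i0 s| + |x i0 s - c| := abs_sub_le _ _ _
  have hdiff : |x i s - x i0 s| ≤ Msup n τhi x t1 + Msup n τhi xneg t1 := by
    rw [abs_le]
    constructor <;> linarith [h1.1, h1.2, h0.1, h0.2]
  linarith
end

section
/- Let A be a stochastic n×n real matrix such that the digraph on {1,…,n} with an edge from i to j iff i ≠ j and A_{ji} > 0 contains a spanning tree, and let 0 < τ̌ ≤ τ̂ be reals. Then there exists a vector f ∈ ℝ^n with f ≥ 0, Σ_i f_i = 1 and f^T A = f^T such that for every sequence (h_k)_{k∈ℕ} with h_k ∈ [τ̌, τ̂] for all k, the left products P_q = (e^{−h_{q−1}} I + (1 − e^{−h_{q−1}}) A) ⋯ (e^{−h_0} I + (1 − e^{−h_0}) A) converge entrywise, as q → ∞, to the rank-one matrix 1 f^T all of whose rows equal f^T. In particular, for every initial state x(0) ∈ ℝ^n the synchronous system reaches consensus on the group decision value f^T x(0), which is uniquely determined by A and x(0) (independently of the update times). -/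
/-!
A synchronous step is the lazy matrix `e • 1 + (1 - e) • A` with `e = exp (-h)` confined to a
compact subinterval of `(0, 1)`, so every step dominates `c • (1 + A)` entrywise for one fixed
`c > 0`. As `1 + A` has a positive diagonal and a spanning tree rooted at `r`, a fixed power
`(1 + A) ^ M` has a positive column `r`; hence every product of `M` consecutive steps has its
column `r` bounded below by some `δ > 0`, and such a stochastic matrix contracts the spread
`max x - min x` of a vector by the factor `1 - δ` (Doeblin). The spread of `P q x` thus tends to
zero while its maximum decreases and its minimum increases, which gives consensus. The common
limit row `f` of the constant sequence is a stationary distribution of `A`, hence of every step,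
so `fᵀ P q = fᵀ`; in the limit `fᵀ P q → (∑ i, f i) • g = g` for the limit row `g` of any
admissible sequence, whence `g = f`.
-/

open Filter Topology Finset Matrix

section LeftProduct

variable {α : Type*} [Monoid α]

def leftProd (b : ℕ → α) : ℕ → α
  | 0 => 1
  | m + 1 => b m * leftProd b m

theorem leftProd_add (b : ℕ → α) (q : ℕ) :
    ∀ m, leftProd b (q + m) = leftProd (fun k => b (q + k)) m * leftProd b q
  | 0 => by simp [leftProd]
  | m + 1 => by
    rw [← add_assoc, leftProd, leftProd_add b q m, leftProd, mul_assoc]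

theorem leftProd_const (a : α) : ∀ m, leftProd (fun _ => a) m = a ^ m
  | 0 => (pow_zero a).symm
  | m + 1 => by rw [leftProd, leftProd_const a m, pow_succ']

theorem leftProd_mem {S : Submonoid α} {b : ℕ → α} (hb : ∀ k, b k ∈ S) : ∀ m, leftProd b m ∈ S
  | 0 => S.one_mem
  | m + 1 => S.mul_mem (hb m) (leftProd_mem hb m)

theorem eq_leftProd {b P : ℕ → α} (h0 : P 0 = 1) (hsucc : ∀ q, P (q + 1) = b q * P q) :
    P = leftProd b := by
  funext q
  induction q with
  | zero => exact h0
  | succ q ih => rw [hsucc, ih, leftProd]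

end LeftProduct

variable {ι : Type*}

section Entries

variable [Fintype ι] [Nonempty ι] {x : ι → ℝ}

def maxEntry (x : ι → ℝ) : ℝ := univ.sup' univ_nonempty x

def minEntry (x : ι → ℝ) : ℝ := univ.inf' univ_nonempty x

theorem le_maxEntry (x : ι → ℝ) (i : ι) : x i ≤ maxEntry x := le_sup' x (mem_univ i)

theorem minEntry_le (x : ι → ℝ) (i : ι) : minEntry x ≤ x i := inf'_le x (mem_univ i)

theorem maxEntry_le {M : ℝ} (h : ∀ i, x i ≤ M) : maxEntry x ≤ M := sup'_le _ _ fun i _ => h i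

theorem le_minEntry {m : ℝ} (h : ∀ i, m ≤ x i) : m ≤ minEntry x := le_inf' _ _ fun i _ => h i

theorem minEntry_le_maxEntry (x : ι → ℝ) : minEntry x ≤ maxEntry x :=
  (minEntry_le x (Classical.arbitrary ι)).trans (le_maxEntry x _)

end Entries

theorem le_mul_apply_of_nonneg [Fintype ι] {A C : Matrix ι ι ℝ} (hA : ∀ i j, 0 ≤ A i j)
    (hC : ∀ i j, 0 ≤ C i j) (i k j : ι) : A i k * C k j ≤ (A * C) i j := by
  rw [mul_apply]
  exact single_le_sum (f := fun k => A i k * C k j)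
    (fun k _ => mul_nonneg (hA i k) (hC k j)) (mem_univ k)

section Contraction

variable [Fintype ι] [DecidableEq ι] {B : Matrix ι ι ℝ} {x : ι → ℝ} {δ : ℝ} {r i : ι}

theorem le_mulVec_apply_of_le_col (hB : B ∈ rowStochastic ℝ ι) (hδ : δ ≤ B i r) {m : ℝ}
    (hm : ∀ k, m ≤ x k) : δ * x r + (1 - δ) * m ≤ (B *ᵥ x) i := by
  have hcentred : (B *ᵥ x) i - m = ∑ k, B i k * (x k - m) := by
    simp only [mulVec, dotProduct, mul_sub, sum_sub_distrib, ← sum_mul,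
      sum_row_of_mem_rowStochastic hB, one_mul]
  have hcol : δ * (x r - m) ≤ B i r * (x r - m) :=
    mul_le_mul_of_nonneg_right hδ (sub_nonneg.2 (hm r))
  have hsingle : B i r * (x r - m) ≤ ∑ k, B i k * (x k - m) :=
    single_le_sum (fun k _ => mul_nonneg (hB.1 i k) (sub_nonneg.2 (hm k))) (mem_univ r)
  linarith

theorem mulVec_apply_le_of_le_col (hB : B ∈ rowStochastic ℝ ι) (hδ : δ ≤ B i r) {M : ℝ}
    (hM : ∀ k, x k ≤ M) : (B *ᵥ x) i ≤ δ * x r + (1 - δ) * M := by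
  have := le_mulVec_apply_of_le_col hB hδ (x := -x) (m := -M) fun k => neg_le_neg (hM k)
  rw [mulVec_neg] at this
  simp only [Pi.neg_apply] at this
  linarith

variable [Nonempty ι]

theorem maxEntry_mulVec_le (hB : B ∈ rowStochastic ℝ ι) (x : ι → ℝ) :
    maxEntry (B *ᵥ x) ≤ maxEntry x :=
  maxEntry_le fun i => by simpa using mulVec_apply_le_of_le_col hB (hB.1 i i) (le_maxEntry x)

theorem minEntry_le_minEntry_mulVec (hB : B ∈ rowStochastic ℝ ι) (x : ι → ℝ) :
    minEntry x ≤ minEntry (B *ᵥ x) :=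
  le_minEntry fun i => by simpa using le_mulVec_apply_of_le_col hB (hB.1 i i) (minEntry_le x)

theorem maxEntry_sub_minEntry_mulVec_le (hB : B ∈ rowStochastic ℝ ι) (hδ : ∀ i, δ ≤ B i r)
    (x : ι → ℝ) :
    maxEntry (B *ᵥ x) - minEntry (B *ᵥ x) ≤ (1 - δ) * (maxEntry x - minEntry x) := by
  have hmax : maxEntry (B *ᵥ x) ≤ δ * x r + (1 - δ) * maxEntry x :=
    maxEntry_le fun i => mulVec_apply_le_of_le_col hB (hδ i) (le_maxEntry x)
  have hmin : δ * x r + (1 - δ) * minEntry x ≤ minEntry (B *ᵥ x) :=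
    le_minEntry fun i => le_mulVec_apply_of_le_col hB (hδ i) (minEntry_le x)
  linarith

end Contraction

section Convergence

theorem tendsto_zero_of_antitone_of_le_mul {u : ℕ → ℝ} (hu : Antitone u) (h0 : ∀ q, 0 ≤ u q)
    {δ : ℝ} (hδ : 0 < δ) {M : ℕ} (hM : ∀ q, u (q + M) ≤ (1 - δ) * u q) :
    Tendsto u atTop (𝓝 0) := by
  have hL := tendsto_atTop_ciInf hu ⟨0, by rintro _ ⟨q, rfl⟩; exact h0 q⟩
  have hL0 : 0 ≤ ⨅ q, u q := le_ciInf h0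
  have hLle : ⨅ q, u q ≤ (1 - δ) * ⨅ q, u q :=
    le_of_tendsto_of_tendsto' (hL.comp (tendsto_add_atTop_nat M)) (hL.const_mul _) hM
  rwa [show ⨅ q, u q = 0 by nlinarith] at hL

theorem exists_tendsto_of_antitone_of_monotone {a b : ℕ → ℝ} (ha : Antitone a) (hb : Monotone b)
    (hba : ∀ q, b q ≤ a q) (h : Tendsto (fun q => a q - b q) atTop (𝓝 0)) :
    ∃ c, Tendsto a atTop (𝓝 c) ∧ Tendsto b atTop (𝓝 c) := by
  have hac := tendsto_atTop_ciInf ha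
    ⟨b 0, by rintro _ ⟨q, rfl⟩; exact (hb (Nat.zero_le q)).trans (hba q)⟩
  exact ⟨_, hac, by simpa using hac.sub h⟩

variable [Fintype ι] [DecidableEq ι] [Nonempty ι] {B : ℕ → Matrix ι ι ℝ}

theorem exists_tendsto_leftProd_mulVec_of_window (hB : ∀ k, B k ∈ rowStochastic ℝ ι) {M : ℕ}
    {δ : ℝ} (hδ : 0 < δ) {r : ι} (hwin : ∀ q i, δ ≤ leftProd (fun k => B (q + k)) M i r)
    (x : ι → ℝ) : ∃ c, ∀ i, Tendsto (fun q => (leftProd B q *ᵥ x) i) atTop (𝓝 c) := by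
  set v := fun q => leftProd B q *ᵥ x
  have hsucc : ∀ q, v (q + 1) = B q *ᵥ v q := fun q => by simp [v, leftProd, mulVec_mulVec]
  have hwindow : ∀ q, v (q + M) = leftProd (fun k => B (q + k)) M *ᵥ v q := fun q => by
    simp [v, leftProd_add, mulVec_mulVec]
  have ha : Antitone fun q => maxEntry (v q) := antitone_nat_of_succ_le fun q => by
    rw [hsucc]; exact maxEntry_mulVec_le (hB q) _
  have hb : Monotone fun q => minEntry (v q) := monotone_nat_of_le_succ fun q => by
    rw [hsucc]; exact minEntry_le_minEntry_mulVec (hB q) _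
  have hosc : Tendsto (fun q => maxEntry (v q) - minEntry (v q)) atTop (𝓝 0) :=
    tendsto_zero_of_antitone_of_le_mul (fun p q hpq => sub_le_sub (ha hpq) (hb hpq))
      (fun q => sub_nonneg.2 (minEntry_le_maxEntry _)) hδ fun q => by
        rw [hwindow]
        exact maxEntry_sub_minEntry_mulVec_le (leftProd_mem (S := rowStochastic ℝ ι)
          (fun k => hB (q + k)) M) (hwin q) _
  obtain ⟨c, hac, hbc⟩ :=
    exists_tendsto_of_antitone_of_monotone ha hb (fun q => minEntry_le_maxEntry _) hosc
  exact ⟨c, fun i => tendsto_of_tendsto_of_tendsto_of_le_of_le hbc hac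
    (fun q => minEntry_le _ i) (fun q => le_maxEntry _ i)⟩

theorem exists_tendsto_leftProd_apply_of_window (hB : ∀ k, B k ∈ rowStochastic ℝ ι) {M : ℕ}
    {δ : ℝ} (hδ : 0 < δ) {r : ι} (hwin : ∀ q i, δ ≤ leftProd (fun k => B (q + k)) M i r) :
    ∃ g : ι → ℝ, ∀ i j, Tendsto (fun q => leftProd B q i j) atTop (𝓝 (g j)) := by
  choose g hg using fun j => exists_tendsto_leftProd_mulVec_of_window hB hδ hwin (Pi.single j 1)
  exact ⟨g, fun i j => by simpa [mulVec_single_one] using hg j i⟩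

end Convergence

section Positivity

variable [Fintype ι] [DecidableEq ι] {C : Matrix ι ι ℝ} {c : ℝ}

theorem exists_forall_ge_pow_apply_pos (hC : ∀ i j, 0 ≤ C i j) (hdiag : ∀ i, 0 < C i i)
    {r v : ι} (hrv : Relation.ReflTransGen (fun i j => 0 < C j i) r v) :
    ∃ ℓ, ∀ m ≥ ℓ, 0 < (C ^ m) v r := by
  have step : ∀ {a b : ι} {m : ℕ}, 0 < C b a → 0 < (C ^ m) a r → 0 < (C ^ (m + 1)) b r :=
    fun hba har => (mul_pos hba har).trans_le <| by
      rw [pow_succ']; exact le_mul_apply_of_nonneg hC (pow_apply_nonneg hC _) _ _ _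
  induction hrv with
  | refl =>
    refine ⟨0, fun m _ => ?_⟩
    induction m with
    | zero => simp
    | succ m ih => exact step (hdiag r) (ih m.zero_le)
  | tail _ hab ih =>
    obtain ⟨ℓ, hℓ⟩ := ih
    refine ⟨ℓ + 1, fun m hm => ?_⟩
    obtain ⟨m, rfl⟩ := Nat.exists_eq_add_of_le' (Nat.one_le_of_lt hm)
    exact step hab (hℓ m (by omega))

theorem exists_pow_apply_pos (hC : ∀ i j, 0 ≤ C i j) (hdiag : ∀ i, 0 < C i i) {r : ι}
    (hreach : ∀ v, Relation.ReflTransGen (fun i j => 0 < C j i) r v) :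
    ∃ M, ∀ v, 0 < (C ^ M) v r := by
  choose ℓ hℓ using fun v => exists_forall_ge_pow_apply_pos hC hdiag (hreach v)
  exact ⟨univ.sup ℓ, fun v => hℓ v _ (le_sup (mem_univ v))⟩

theorem pow_apply_le_leftProd_apply (hc : 0 ≤ c) (hC : ∀ i j, 0 ≤ C i j)
    {B : ℕ → Matrix ι ι ℝ} (hBC : ∀ k i j, c * C i j ≤ B k i j) :
    ∀ (m : ℕ) (i j : ι), c ^ m * (C ^ m) i j ≤ leftProd B m i j
  | 0, i, j => by simp [leftProd]
  | m + 1, i, j => by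
    rw [pow_succ', pow_succ', leftProd, mul_apply, mul_apply, mul_sum]
    refine sum_le_sum fun k _ => ?_
    calc c * c ^ m * (C i k * (C ^ m) k j) = c * C i k * (c ^ m * (C ^ m) k j) := by ring
      _ ≤ B m i k * leftProd B m k j :=
        mul_le_mul (hBC m i k) (pow_apply_le_leftProd_apply hc hC hBC m k j)
          (mul_nonneg (pow_nonneg hc m) (pow_apply_nonneg hC m k j))
          ((mul_nonneg hc (hC i k)).trans (hBC m i k))

variable [Nonempty ι]

theorem exists_pos_le_leftProd_apply (hc : 0 < c) (hC : ∀ i j, 0 ≤ C i j)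
    (hdiag : ∀ i, 0 < C i i) {r : ι}
    (hreach : ∀ v, Relation.ReflTransGen (fun i j => 0 < C j i) r v) :
    ∃ M δ, 0 < δ ∧ ∀ B : ℕ → Matrix ι ι ℝ, (∀ k i j, c * C i j ≤ B k i j) →
      ∀ v, δ ≤ leftProd B M v r := by
  obtain ⟨M, hM⟩ := exists_pow_apply_pos hC hdiag hreach
  obtain ⟨v₀, hv₀⟩ := Finite.exists_min fun v => (C ^ M) v r
  refine ⟨M, c ^ M * (C ^ M) v₀ r, mul_pos (pow_pos hc M) (hM v₀), fun B hBC v => ?_⟩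
  exact (mul_le_mul_of_nonneg_left (hv₀ v) (pow_nonneg hc.le M)).trans
    (pow_apply_le_leftProd_apply hc.le hC hBC M v r)

theorem exists_tendsto_leftProd_apply (hc : 0 < c) (hC : ∀ i j, 0 ≤ C i j)
    (hdiag : ∀ i, 0 < C i i) {r : ι}
    (hreach : ∀ v, Relation.ReflTransGen (fun i j => 0 < C j i) r v)
    {B : ℕ → Matrix ι ι ℝ} (hB : ∀ k, B k ∈ rowStochastic ℝ ι)
    (hBC : ∀ k i j, c * C i j ≤ B k i j) :
    ∃ g : ι → ℝ, ∀ i j, Tendsto (fun q => leftProd B q i j) atTop (𝓝 (g j)) := by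
  obtain ⟨M, δ, hδ, hwin⟩ := exists_pos_le_leftProd_apply hc hC hdiag hreach
  exact exists_tendsto_leftProd_apply_of_window hB hδ fun q => hwin _ fun k => hBC (q + k)

end Positivity

section FixedVector

variable [Fintype ι] [DecidableEq ι] {B : ℕ → Matrix ι ι ℝ} {f g : ι → ℝ}

theorem mem_stdSimplex_of_tendsto_leftProd (hB : ∀ k, B k ∈ rowStochastic ℝ ι) {i : ι}
    (hg : ∀ j, Tendsto (fun q => leftProd B q i j) atTop (𝓝 (g j))) : g ∈ stdSimplex ℝ ι := by
  refine (isClosed_stdSimplex ℝ ι).mem_of_tendsto (tendsto_pi_nhds.2 hg) (Eventually.of_forall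
    fun q => ?_)
  have hP := leftProd_mem (S := rowStochastic ℝ ι) hB q
  exact ⟨fun j => hP.1 i j, sum_row_of_mem_rowStochastic hP i⟩

theorem vecMul_eq_self_of_tendsto_pow {A : Matrix ι ι ℝ} {i : ι}
    (hg : ∀ j, Tendsto (fun q => (A ^ q) i j) atTop (𝓝 (g j))) : g ᵥ* A = g := by
  have hrow : Tendsto (fun q => (A ^ q) i) atTop (𝓝 g) := tendsto_pi_nhds.2 hg
  have hnext : Tendsto (fun q => (A ^ q) i ᵥ* A) atTop (𝓝 (g ᵥ* A)) :=
    ((continuous_id.matrix_vecMul continuous_const).tendsto g).comp hrow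
  have hsucc : ∀ q, (A ^ (q + 1)) i = (A ^ q) i ᵥ* A := fun q => by rw [pow_succ]; rfl
  refine tendsto_nhds_unique hnext ?_
  simpa only [Function.comp_def, hsucc] using hrow.comp (tendsto_add_atTop_nat 1)

theorem eq_of_tendsto_leftProd (hf : ∑ i, f i = 1) (hfB : ∀ k, f ᵥ* B k = f)
    (hg : ∀ i j, Tendsto (fun q => leftProd B q i j) atTop (𝓝 (g j))) : g = f := by
  have hinv : ∀ q, f ᵥ* leftProd B q = f := fun q => by
    induction q with
    | zero => exact vecMul_one f
    | succ q ih => rw [leftProd, ← vecMul_vecMul, hfB, ih]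
  funext j
  have hlim : Tendsto (fun q => (f ᵥ* leftProd B q) j) atTop (𝓝 (∑ i, f i * g j)) :=
    tendsto_finsetSum _ fun i _ => (hg i j).const_mul (f i)
  rw [← sum_mul, hf, one_mul] at hlim
  simp only [hinv] at hlim
  exact tendsto_nhds_unique hlim tendsto_const_nhds

end FixedVector

section Lazy

variable [DecidableEq ι] {A : Matrix ι ι ℝ} {e c : ℝ}

def lazy (e : ℝ) (A : Matrix ι ι ℝ) : Matrix ι ι ℝ := e • 1 + (1 - e) • A

theorem mul_one_add_apply_le_lazy_apply (hA : ∀ i j, 0 ≤ A i j) (hce : c ≤ e) (hc1 : c ≤ 1 - e)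
    (i j : ι) : c * (1 + A) i j ≤ lazy e A i j := by
  simp only [lazy, Matrix.add_apply, Matrix.smul_apply, smul_eq_mul, mul_add]
  exact add_le_add (mul_le_mul_of_nonneg_right hce (zero_le_one_elem i j))
    (mul_le_mul_of_nonneg_right hc1 (hA i j))

variable [Fintype ι]

theorem lazy_mem_rowStochastic (hA : A ∈ rowStochastic ℝ ι) (he0 : 0 ≤ e) (he1 : e ≤ 1) :
    lazy e A ∈ rowStochastic ℝ ι :=
  convex_rowStochastic (one_mem _) hA he0 (sub_nonneg.2 he1) (add_sub_cancel e 1)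

theorem vecMul_lazy_eq_self_iff {f : ι → ℝ} (he : e ≠ 1) : f ᵥ* lazy e A = f ↔ f ᵥ* A = f := by
  have key : f ᵥ* lazy e A - f = (1 - e) • (f ᵥ* A - f) := by
    rw [lazy, vecMul_add, vecMul_smul, vecMul_smul, vecMul_one]
    module
  rw [← sub_eq_zero, key, smul_eq_zero, sub_eq_zero, sub_eq_zero, or_iff_right he.symm]

variable [Nonempty ι]

theorem exists_tendsto_leftProd_lazy (hA : A ∈ rowStochastic ℝ ι)
    (hspan : ∃ r, ∀ v, Relation.ReflTransGen (fun i j => i ≠ j ∧ 0 < A j i) r v)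
    {a b : ℝ} (ha : 0 < a) (hb : b < 1) {e : ℕ → ℝ} (he : ∀ k, e k ∈ Set.Icc a b) :
    ∃ g : ι → ℝ, ∀ i j,
      Tendsto (fun q => leftProd (fun k => lazy (e k) A) q i j) atTop (𝓝 (g j)) := by
  obtain ⟨r, hr⟩ := hspan
  have hreach : ∀ v, Relation.ReflTransGen (fun i j => 0 < (1 + A) j i) r v := fun v =>
    Relation.ReflTransGen.mono (fun i j (hij : i ≠ j ∧ 0 < A j i) => by
      simpa [Matrix.add_apply, one_apply_ne' hij.1] using hij.2) r v (hr v)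
  refine exists_tendsto_leftProd_apply (lt_min ha (sub_pos.2 hb))
    (fun i j => add_nonneg (zero_le_one_elem i j) (hA.1 i j))
    (fun i => add_pos_of_pos_of_nonneg (by simp) (hA.1 i i)) hreach
    (fun k => lazy_mem_rowStochastic hA (ha.le.trans (he k).1) ((he k).2.trans hb.le))
    fun k => mul_one_add_apply_le_lazy_apply hA.1 ((min_le_left _ _).trans (he k).1)
      ((min_le_right _ _).trans (by linarith [(he k).2]))

end Lazy

/-- Synchronous consensus with fixed topology: if the digraph of the stochastic matrix `A`
contains a spanning tree, then the left products of the synchronous iteration matrices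
converge to a rank-one matrix `𝟙 fᵀ`, where `f` is a nonnegative left fixed vector of `A`
summing to `1`; hence consensus is reached on the group decision value `fᵀ x(0)`. -/
theorem synchronous_consensus_spanning_tree
    (n : ℕ) (hn : 1 ≤ n)
    (A : Matrix (Fin n) (Fin n) ℝ)
    (hnonneg : ∀ i j, 0 ≤ A i j)
    (hrow : ∀ i, ∑ j, A i j = 1)
    (hspan : ∃ root : Fin n, ∀ v : Fin n,
      Relation.ReflTransGen (fun i j : Fin n => i ≠ j ∧ 0 < A j i) root v)
    (τlo τhi : ℝ) (hτlo : 0 < τlo) (hττ : τlo ≤ τhi) :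
    ∃ f : Fin n → ℝ,
      (∀ i, 0 ≤ f i) ∧ (∑ i, f i = 1) ∧ (∀ j, ∑ i, f i * A i j = f j) ∧
      ∀ h : ℕ → ℝ, (∀ k, h k ∈ Set.Icc τlo τhi) →
        ∀ P : ℕ → Matrix (Fin n) (Fin n) ℝ,
          P 0 = 1 →
          (∀ q, P (q + 1) =
            (Real.exp (-h q) • (1 : Matrix (Fin n) (Fin n) ℝ)
              + (1 - Real.exp (-h q)) • A) * P q) →
          (∀ i j, Tendsto (fun q => P q i j) atTop (𝓝 (f j))) ∧
          ∀ x0 : Fin n → ℝ, ∀ i,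
            Tendsto (fun q => (P q).mulVec x0 i) atTop (𝓝 (∑ j, f j * x0 j)) := by
  have : Nonempty (Fin n) := ⟨⟨0, hn⟩⟩
  have hA : A ∈ rowStochastic ℝ (Fin n) := mem_rowStochastic_iff_sum.2 ⟨hnonneg, hrow⟩
  have hlt : Real.exp (-τlo) < 1 := Real.exp_lt_one_iff.2 (neg_neg_of_pos hτlo)
  have hexp : ∀ h : ℕ → ℝ, (∀ k, h k ∈ Set.Icc τlo τhi) →
      ∀ k, Real.exp (-h k) ∈ Set.Icc (Real.exp (-τhi)) (Real.exp (-τlo)) := fun h hh k =>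
    ⟨Real.exp_le_exp.2 (neg_le_neg (hh k).2), Real.exp_le_exp.2 (neg_le_neg (hh k).1)⟩
  have consensus := fun h hh =>
    exists_tendsto_leftProd_lazy hA hspan (Real.exp_pos _) hlt (hexp h hh)
  obtain ⟨f, hf⟩ := consensus (fun _ => τlo) fun _ => ⟨le_rfl, hττ⟩
  have hfA : f ᵥ* A = f := (vecMul_lazy_eq_self_iff hlt.ne).1 <|
    vecMul_eq_self_of_tendsto_pow (i := ⟨0, hn⟩) fun j => by
      simpa only [leftProd_const] using hf ⟨0, hn⟩ j
  obtain ⟨hf0, hf1⟩ := mem_stdSimplex_of_tendsto_leftProd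
    (fun _ => lazy_mem_rowStochastic hA (Real.exp_pos _).le hlt.le) (hf ⟨0, hn⟩)
  refine ⟨f, hf0, hf1, fun j => congrFun hfA j, fun h hh P hP0 hP => ?_⟩
  obtain rfl : P = leftProd fun k => lazy (Real.exp (-h k)) A := eq_leftProd hP0 hP
  obtain ⟨g, hg⟩ := consensus h hh
  obtain rfl : g = f := eq_of_tendsto_leftProd hf1
    (fun k => (vecMul_lazy_eq_self_iff ((hexp h hh k).2.trans_lt hlt).ne).2 hfA) hg
  exact ⟨hg, fun x0 i =>
    ((continuous_id.dotProduct continuous_const).tendsto g).comp (tendsto_pi_nhds.2 (hg i))⟩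
end

section
/- Let A be a stochastic n×n real matrix such that the digraph on {1,…,n} with an edge from i to j iff i ≠ j and A_{ji} > 0 does NOT contain a spanning tree, and let 0 < τ̌ ≤ τ̂ be reals. Then for every sequence (h_k)_{k∈ℕ} with h_k ∈ [τ̌, τ̂] for all k, there exists an initial vector x0 ∈ ℝ^n such that the sequence P_q x0, where P_q = (e^{−h_{q−1}} I + (1 − e^{−h_{q−1}}) A) ⋯ (e^{−h_0} I + (1 − e^{−h_0}) A), does not converge to c·1 for any c ∈ ℝ; i.e., the synchronous system does not solve a consensus problem. -/
/-!
Take a vertex `u` whose set of ancestors is minimal, so that every ancestor of `u` is reachable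
from `u`. Since no vertex is a root, some `z` is not reachable from `u`, and then `u` and `z` have
no common ancestor. On the rows indexed by an ancestor set, `A` vanishes outside that set and
sums to `1`, so every lazy step `e • 1 + (1 - e) • A` keeps a vector constant on the set.
Starting from the indicator of the ancestors of `u`, the iterates stay `1` at `u` and `0` at `z`.
-/

open Filter Topology Matrix

namespace Relation

variable {α : Type*} {r : α → α → Prop}

theorem exists_minimal_reflTransGen [Finite α] [Nonempty α] :
    ∃ u, ∀ w, ReflTransGen r w u → ReflTransGen r u w := by
  classical
  have := Fintype.ofFinite α
  let anc : α → Finset α := fun v => {w | ReflTransGen r w v}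
  obtain ⟨u, -, hmin⟩ :=
    Finset.exists_min_image Finset.univ (fun v => (anc v).card) Finset.univ_nonempty
  refine ⟨u, fun w hwu => ?_⟩
  have hsub : anc w ⊆ anc u := fun x hx => by
    simp only [anc, Finset.mem_filter, Finset.mem_univ, true_and] at hx ⊢
    exact hx.trans hwu
  have heq : anc w = anc u := Finset.eq_of_subset_of_card_le hsub (hmin w (Finset.mem_univ w))
  have hu : u ∈ anc w := by rw [heq]; simp [anc, ReflTransGen.refl]
  simpa [anc] using hu

theorem exists_forall_reflTransGen_imp_not_reflTransGen [Finite α] [Nonempty α]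
    (hroot : ¬ ∃ root, ∀ v, ReflTransGen r root v) :
    ∃ u z, ∀ w, ReflTransGen r w u → ¬ ReflTransGen r w z := by
  obtain ⟨u, hu⟩ := exists_minimal_reflTransGen (r := r)
  push Not at hroot
  obtain ⟨z, hz⟩ := hroot u
  exact ⟨u, z, fun w hwu hwz => hz ((hu w hwu).trans hwz)⟩

end Relation

namespace Matrix

theorem apply_eq_zero_of_reflTransGen {ι R : Type*} [Zero R] [PartialOrder R]
    {A : Matrix ι ι R} (hA : ∀ i j, 0 ≤ A i j) {v i j : ι}
    (hi : Relation.ReflTransGen (fun i j => i ≠ j ∧ 0 < A j i) i v)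
    (hj : ¬ Relation.ReflTransGen (fun i j => i ≠ j ∧ 0 < A j i) j v) :
    A i j = 0 := by
  rcases (hA i j).lt_or_eq with hpos | hzero
  · have hji : j ≠ i := fun h => hj (h ▸ hi)
    exact (hj (Relation.ReflTransGen.head ⟨hji, hpos⟩ hi)).elim
  · exact hzero.symm

theorem mulVec_apply_eq_of_forall_eq {ι R : Type*} [Fintype ι] [Semiring R]
    {M : Matrix ι ι R} {S : Set ι}
    (hM : ∀ i ∈ S, ∀ j ∉ S, M i j = 0) (hrow : ∀ i ∈ S, ∑ j, M i j = 1)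
    {y : ι → R} {c : R} (hy : ∀ j ∈ S, y j = c) {i : ι} (hi : i ∈ S) :
    (M *ᵥ y) i = c :=
  calc (M *ᵥ y) i = ∑ j, M i j * y j := rfl
    _ = ∑ j, M i j * c := Finset.sum_congr rfl fun j _ => by
        by_cases hj : j ∈ S
        · rw [hy j hj]
        · rw [hM i hi j hj, zero_mul, zero_mul]
    _ = c := by rw [← Finset.sum_mul, hrow i hi, one_mul]

variable {ι R : Type*} [Fintype ι] [DecidableEq ι] [Ring R]

theorem sum_smul_one_add_smul_apply {A : Matrix ι ι R} {i : ι}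
    (hrow : ∑ j, A i j = 1) (t : R) :
    ∑ j, (t • (1 : Matrix ι ι R) + (1 - t) • A) i j = 1 := by
  simp [Finset.sum_add_distrib, ← Finset.mul_sum, hrow, one_apply]

theorem mulVec_apply_eq_of_lazy_products {A : Matrix ι ι R} {S : Set ι}
    (hS : ∀ i ∈ S, ∀ j ∉ S, A i j = 0) (hrow : ∀ i ∈ S, ∑ j, A i j = 1)
    (t : ℕ → R) (P : ℕ → Matrix ι ι R) (hP0 : P 0 = 1)
    (hP : ∀ q, P (q + 1) = (t q • (1 : Matrix ι ι R) + (1 - t q) • A) * P q)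
    {x : ι → R} {c : R} (hx : ∀ j ∈ S, x j = c) (q : ℕ) :
    ∀ i ∈ S, (P q *ᵥ x) i = c := by
  induction q with
  | zero => simpa [hP0] using hx
  | succ q ih =>
    intro i hi
    rw [hP, ← mulVec_mulVec]
    refine mulVec_apply_eq_of_forall_eq (fun i hi j hj => ?_)
      (fun i hi => sum_smul_one_add_smul_apply (hrow i hi) _) ih hi
    have hij : i ≠ j := fun h => hj (h ▸ hi)
    simp [one_apply_ne hij, hS i hi j hj]

end Matrix

theorem synchronous_no_spanning_tree_no_consensus_general
    (n : ℕ) (hn : 1 ≤ n)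
    (A : Matrix (Fin n) (Fin n) ℝ)
    (hnonneg : ∀ i j, 0 ≤ A i j)
    (hrow : ∀ i, ∑ j, A i j = 1)
    (hnospan : ¬ ∃ root : Fin n, ∀ v : Fin n,
      Relation.ReflTransGen (fun i j : Fin n => i ≠ j ∧ 0 < A j i) root v)
    (τlo τhi : ℝ) :
    ∀ h : ℕ → ℝ, (∀ k, h k ∈ Set.Icc τlo τhi) →
      ∀ P : ℕ → Matrix (Fin n) (Fin n) ℝ,
        P 0 = 1 →
        (∀ q, P (q + 1) =
          (Real.exp (-h q) • (1 : Matrix (Fin n) (Fin n) ℝ)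
            + (1 - Real.exp (-h q)) • A) * P q) →
        ∃ x0 : Fin n → ℝ, ¬ ∃ c : ℝ, ∀ i,
          Tendsto (fun q => (P q).mulVec x0 i) atTop (𝓝 c) := by
  intro h _ P hP0 hP
  have : Nonempty (Fin n) := ⟨⟨0, hn⟩⟩
  obtain ⟨u, z, hdisj⟩ := Relation.exists_forall_reflTransGen_imp_not_reflTransGen hnospan
  let anc : Fin n → Set (Fin n) := fun v =>
    {w | Relation.ReflTransGen (fun i j : Fin n => i ≠ j ∧ 0 < A j i) w v}
  have hconst (v : Fin n) (x : Fin n → ℝ) (c : ℝ) (hx : ∀ j ∈ anc v, x j = c) (q : ℕ) :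
      (P q *ᵥ x) v = c :=
    Matrix.mulVec_apply_eq_of_lazy_products (S := anc v)
      (fun i hi j hj => Matrix.apply_eq_zero_of_reflTransGen hnonneg hi hj) (fun i _ => hrow i)
      _ P hP0 hP hx q v .refl
  let x0 : Fin n → ℝ := (anc u).indicator 1
  refine ⟨x0, fun ⟨c, hc⟩ => ?_⟩
  have h1 : (1 : ℝ) = c := tendsto_const_nhds_iff.1 <| by
    simpa only [hconst u x0 1 fun j hj => Set.indicator_of_mem hj _] using hc u
  have h0 : (0 : ℝ) = c := tendsto_const_nhds_iff.1 <| by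
    have hx0 (j : Fin n) (hj : j ∈ anc z) : x0 j = 0 :=
      Set.indicator_of_notMem (s := anc u) (hdisj j · hj) _
    simpa only [hconst z x0 0 hx0] using hc z
  exact one_ne_zero (h1.trans h0.symm)

/-- Necessity of the spanning-tree condition for the synchronous system: if the digraph of
the stochastic matrix `A` does not contain a spanning tree, then for every admissible
sequence of update-interval lengths there is an initial state from which the iterates do
not converge to a consensus vector. -/
theorem synchronous_no_spanning_tree_no_consensus
    (n : ℕ) (hn : 1 ≤ n)
    (A : Matrix (Fin n) (Fin n) ℝ)
    (hnonneg : ∀ i j, 0 ≤ A i j)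
    (hrow : ∀ i, ∑ j, A i j = 1)
    (hnospan : ¬ ∃ root : Fin n, ∀ v : Fin n,
      Relation.ReflTransGen (fun i j : Fin n => i ≠ j ∧ 0 < A j i) root v)
    (τlo τhi : ℝ) (hτlo : 0 < τlo) (hττ : τlo ≤ τhi) :
    ∀ h : ℕ → ℝ, (∀ k, h k ∈ Set.Icc τlo τhi) →
      ∀ P : ℕ → Matrix (Fin n) (Fin n) ℝ,
        P 0 = 1 →
        (∀ q, P (q + 1) =
          (Real.exp (-h q) • (1 : Matrix (Fin n) (Fin n) ℝ)
            + (1 - Real.exp (-h q)) • A) * P q) →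
        ∃ x0 : Fin n → ℝ, ¬ ∃ c : ℝ, ∀ i,
          Tendsto (fun q => (P q).mulVec x0 i) atTop (𝓝 c) :=
  synchronous_no_spanning_tree_no_consensus_general n hn A hnonneg hrow hnospan τlo τhi
end

section
/- Define τ_k = ln(2^{k+3}) for k ∈ ℕ and define x : ℕ → ℝ² by x(0) = (1, −1) and x(k+1) = (e^{−τ_k} x₁(k) + (1 − e^{−τ_k}) x₂(k), e^{−τ_k} x₂(k) + (1 − e^{−τ_k}) x₁(k)). Then |x₁(k) − x₂(k)| ≥ 1 for every k ∈ ℕ; consequently the two states never reach consensus (the differences do not converge to 0), even though the update rule at each step is the synchronous consensus iterate x(t_{k+1}) = (e^{−τ_k} I + (1 − e^{−τ_k}) A) x(t_k) with the stochastic matrix A = [[0,1],[1,0]] whose digraph is strongly connected. -/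
open Filter Topology

/-- Counterexample showing that an upper bound on the update intervals is necessary:
with unbounded update intervals `τ_k = ln 2^(k+3)` and the synchronous consensus iterate
for `A = [[0,1],[1,0]]`, the two states always stay at distance at least `1`, so their
difference does not converge to `0`. -/
theorem counterexample_unbounded_update_intervals
    (τ : ℕ → ℝ) (hτ : ∀ k, τ k = Real.log (2 ^ (k + 3)))
    (x : ℕ → ℝ × ℝ)
    (hx0 : x 0 = (1, -1))
    (hrec : ∀ k, x (k + 1) =
      (Real.exp (-τ k) * (x k).1 + (1 - Real.exp (-τ k)) * (x k).2,
       Real.exp (-τ k) * (x k).2 + (1 - Real.exp (-τ k)) * (x k).1)) :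
    (∀ k, 1 ≤ |(x k).1 - (x k).2|) ∧
      ¬ Tendsto (fun k => (x k).1 - (x k).2) atTop (𝓝 0) := by
  have hexp : ∀ k, Real.exp (-τ k) = ((2:ℝ) ^ (k + 3))⁻¹ := by
    intro k
    rw [hτ, Real.exp_neg, Real.exp_log (by positivity)]
  have key : ∀ k, 1 + ((2:ℝ) ^ k)⁻¹ ≤ |(x k).1 - (x k).2| := by
    intro k
    induction k with
    | zero => rw [hx0]; norm_num
    | succ n ih =>
      have hp : (1:ℝ) ≤ (2:ℝ) ^ n := one_le_pow₀ (by norm_num)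
      have hp0 : (0:ℝ) < (2:ℝ) ^ n := by positivity
      have h1 : (x (n + 1)).1 - (x (n + 1)).2
          = (2 * ((2:ℝ) ^ (n + 3))⁻¹ - 1) * ((x n).1 - (x n).2) := by
        rw [hrec n, hexp n]; ring
      have h3 : ((2:ℝ) ^ (n + 3)) = 8 * (2:ℝ) ^ n := by ring
      have h2 : |2 * ((2:ℝ) ^ (n + 3))⁻¹ - 1| = 1 - 2 * ((2:ℝ) ^ (n + 3))⁻¹ := by
        rw [abs_sub_comm, abs_of_nonneg]
        rw [h3]
        have : ((8:ℝ) * 2 ^ n)⁻¹ ≤ 1/8 := by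
          rw [inv_le_comm₀ (by positivity) (by norm_num)]
          nlinarith
        linarith
      rw [h1, abs_mul, h2, h3]
      have hinv : ((8:ℝ) * 2 ^ n)⁻¹ = (8 * (2:ℝ)^n)⁻¹ := rfl
      have h8 : ((8:ℝ) * 2 ^ n) * ((8:ℝ) * 2 ^ n)⁻¹ = 1 := by
        field_simp
      have hpow : ((2:ℝ) ^ (n + 1))⁻¹ * (2 * (2:ℝ)^n) = 1 := by
        rw [pow_succ]; field_simp
      have hcn : (0:ℝ) ≤ 1 - 2 * ((8:ℝ) * 2 ^ n)⁻¹ := by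
        nlinarith [h8]
      have habs := ih
      have hinvpos : (0:ℝ) < ((2:ℝ)^n)⁻¹ := by positivity
      have hinv2 : ((2:ℝ)^n) * ((2:ℝ)^n)⁻¹ = 1 := by field_simp
      nlinarith [mul_le_mul_of_nonneg_left habs hcn, h8, hinv2,
        mul_pos hp0 hinvpos]
  have h1 : ∀ k, 1 ≤ |(x k).1 - (x k).2| := by
    intro k
    have : (0:ℝ) < ((2:ℝ) ^ k)⁻¹ := by positivity
    linarith [key k]
  refine ⟨h1, fun h => ?_⟩
  have := Metric.tendsto_atTop.mp h 1 one_pos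
  obtain ⟨N, hN⟩ := this
  have := hN N le_rfl
  rw [Real.dist_eq, sub_zero] at this
  linarith [h1 N]
end

section
/- Let n ≥ 1 and let 0 < τ̌ ≤ τ̂ be reals. For each i ∈ {1,…,n} let (t^i_k)_{k∈ℕ} be a sequence of reals with t^i_0 = 0 and τ̌ ≤ t^i_{k+1} − t^i_k ≤ τ̂ for all k. Then for every i and every k ∈ ℕ, the set of real numbers { t ∈ [t^i_k, t^i_{k+1}) : t = t^j_s for some j ∈ {1,…,n} and s ∈ ℕ } has at most (⌊τ̂/τ̌⌋ + 1)(n − 1) + 1 elements, where ⌊τ̂/τ̌⌋ is the greatest integer not exceeding τ̂/τ̌. -/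
/-!
Fix an agent `j`. Its update times are at least `τ̌` apart, so those falling in a window of
length at most `τ̂` have indices in a block of at most `⌊τ̂/τ̌⌋ + 1` consecutive integers; for
agent `i` itself the window `[tⁱ_k, tⁱ_{k+1})` contains only `tⁱ_k`. Summing over the agents
gives the bound.
-/

open Set

section Sequence

variable {u : ℕ → ℝ} {τ : ℝ}

lemma natCast_mul_le_sub_of_le_sub_succ (hu : ∀ k, τ ≤ u (k + 1) - u k) (l m : ℕ) :
    m * τ ≤ u (l + m) - u l := by
  induction m with
  | zero => simp
  | succ m ih =>
    have := hu (l + m)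
    rw [← add_assoc]
    push_cast
    linarith

lemma sub_le_floor_of_mem_Ico (hτ : 0 < τ) (hu : ∀ k, τ ≤ u (k + 1) - u k) {a b : ℝ}
    {l l' : ℕ} (hl : u l ∈ Ico a b) (hl' : u l' ∈ Ico a b) (hle : l ≤ l') :
    l' - l ≤ ⌊(b - a) / τ⌋₊ := by
  apply Nat.le_floor
  have hgap := natCast_mul_le_sub_of_le_sub_succ hu l (l' - l)
  rw [Nat.add_sub_cancel' hle] at hgap
  rw [le_div_iff₀ hτ]
  linarith [hl.1, hl'.2]

lemma exists_preimage_Ico_subset_Icc (hτ : 0 < τ) (hu : ∀ k, τ ≤ u (k + 1) - u k) (a b : ℝ) :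
    ∃ m, u ⁻¹' Ico a b ⊆ Icc m (m + ⌊(b - a) / τ⌋₊) := by
  rcases (u ⁻¹' Ico a b).eq_empty_or_nonempty with hempty | hne
  · exact ⟨0, by simp [hempty]⟩
  · refine ⟨sInf (u ⁻¹' Ico a b), fun l hl => ⟨Nat.sInf_le hl, ?_⟩⟩
    have := sub_le_floor_of_mem_Ico hτ hu (Nat.sInf_mem hne) hl (Nat.sInf_le hl)
    omega

lemma finite_Ico_inter_range (hτ : 0 < τ) (hu : ∀ k, τ ≤ u (k + 1) - u k) (a b : ℝ) :
    (Ico a b ∩ range u).Finite := by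
  obtain ⟨m, hm⟩ := exists_preimage_Ico_subset_Icc hτ hu a b
  rw [← image_preimage_eq_inter_range]
  exact ((finite_Icc _ _).subset hm).image u

lemma ncard_Ico_inter_range_le (hτ : 0 < τ) (hu : ∀ k, τ ≤ u (k + 1) - u k) (a b : ℝ) :
    (Ico a b ∩ range u).ncard ≤ ⌊(b - a) / τ⌋₊ + 1 := by
  obtain ⟨m, hm⟩ := exists_preimage_Ico_subset_Icc hτ hu a b
  rw [← image_preimage_eq_inter_range]
  calc (u '' (u ⁻¹' Ico a b)).ncard ≤ (u ⁻¹' Ico a b).ncard := ncard_image_le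
        ((finite_Icc _ _).subset hm)
    _ ≤ (Icc m (m + ⌊(b - a) / τ⌋₊)).ncard := ncard_le_ncard hm (finite_Icc _ _)
    _ = ⌊(b - a) / τ⌋₊ + 1 := by
      rw [← Finset.coe_Icc, ncard_coe_finset, Nat.card_Icc]
      omega

lemma Ico_succ_inter_range_eq_singleton (hu : StrictMono u) (k : ℕ) :
    Ico (u k) (u (k + 1)) ∩ range u = {u k} := by
  ext s
  simp only [mem_inter_iff, mem_Ico, mem_range, mem_singleton_iff]
  constructor
  · rintro ⟨⟨hks, hsk⟩, l, rfl⟩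
    have : k ≤ l := hu.le_iff_le.mp hks
    have : l < k + 1 := hu.lt_iff_lt.mp hsk
    rw [show l = k by omega]
  · rintro rfl
    exact ⟨⟨le_rfl, hu (Nat.lt_succ_self k)⟩, k, rfl⟩

end Sequence

lemma Fintype.sum_le_mul_card_sub_one_add_one {ι : Type*} [Fintype ι] (f : ι → ℕ) (i : ι)
    (B : ℕ) (hi : f i ≤ 1) (hB : ∀ j ≠ i, f j ≤ B) :
    ∑ j, f j ≤ B * (Fintype.card ι - 1) + 1 := by
  classical
  have hrest := Finset.sum_le_card_nsmul ({i}ᶜ : Finset ι) f B (by simpa using hB)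
  rw [Finset.card_compl, Finset.card_singleton, smul_eq_mul] at hrest
  rw [Fintype.sum_eq_add_sum_compl i]
  linarith

theorem update_times_in_interval_bound_general
    (n : ℕ)
    (τlo τhi : ℝ) (hτlo : 0 < τlo)
    (t : Fin n → ℕ → ℝ)
    (hstep : ∀ i k, τlo ≤ t i (k + 1) - t i k ∧ t i (k + 1) - t i k ≤ τhi)
    (i : Fin n) (k : ℕ) :
    ({s : ℝ | s ∈ Set.Ico (t i k) (t i (k + 1)) ∧ ∃ j l, t j l = s}).Finite ∧
    ({s : ℝ | s ∈ Set.Ico (t i k) (t i (k + 1)) ∧ ∃ j l, t j l = s}).ncard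
      ≤ (Nat.floor (τhi / τlo) + 1) * (n - 1) + 1 := by
  have hlo j : ∀ l, τlo ≤ t j (l + 1) - t j l := fun l => (hstep j l).1
  have hunion : {s : ℝ | s ∈ Ico (t i k) (t i (k + 1)) ∧ ∃ j l, t j l = s}
      = ⋃ j, Ico (t i k) (t i (k + 1)) ∩ range (t j) := by
    ext s
    simp [mem_range]
  rw [hunion]
  refine ⟨finite_iUnion fun j => finite_Ico_inter_range hτlo (hlo j) _ _, ?_⟩
  have hwidth : ⌊(t i (k + 1) - t i k) / τlo⌋₊ ≤ ⌊τhi / τlo⌋₊ :=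
    Nat.floor_le_floor (div_le_div_of_nonneg_right (hstep i k).2 hτlo.le)
  have hown : (Ico (t i k) (t i (k + 1)) ∩ range (t i)).ncard = 1 := by
    rw [Ico_succ_inter_range_eq_singleton
      (strictMono_nat_of_lt_succ fun l => by linarith [hlo i l]) k, ncard_singleton]
  calc _ ≤ ∑ j, (Ico (t i k) (t i (k + 1)) ∩ range (t j)).ncard :=
        ncard_iUnion_le_of_fintype _
    _ ≤ (⌊τhi / τlo⌋₊ + 1) * (Fintype.card (Fin n) - 1) + 1 :=
      Fintype.sum_le_mul_card_sub_one_add_one _ i _ hown.le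
        fun j _ => (ncard_Ico_inter_range_le hτlo (hlo j) _ _).trans (by omega)
    _ = _ := by rw [Fintype.card_fin]

/-- In any interval `[tⁱ_k, tⁱ_{k+1})` between two consecutive update times of agent `i`,
the set of update times of all agents has at most `(⌊τ̂/τ̌⌋ + 1)(n - 1) + 1` elements. -/
theorem update_times_in_interval_bound
    (n : ℕ) (hn : 1 ≤ n)
    (τlo τhi : ℝ) (hτlo : 0 < τlo) (hττ : τlo ≤ τhi)
    (t : Fin n → ℕ → ℝ)
    (ht0 : ∀ i, t i 0 = 0)
    (hstep : ∀ i k, τlo ≤ t i (k + 1) - t i k ∧ t i (k + 1) - t i k ≤ τhi)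
    (i : Fin n) (k : ℕ) :
    ({s : ℝ | s ∈ Set.Ico (t i k) (t i (k + 1)) ∧ ∃ j l, t j l = s}).Finite ∧
    ({s : ℝ | s ∈ Set.Ico (t i k) (t i (k + 1)) ∧ ∃ j l, t j l = s}).ncard
      ≤ (Nat.floor (τhi / τlo) + 1) * (n - 1) + 1 :=
  update_times_in_interval_bound_general n τlo τhi hτlo t hstep i k
end

section
/- Let n ≥ 1, K ∈ ℕ, and 0 < τ̌ ≤ τ̂ be reals. Let (t^i_k)_{k∈ℕ} be a sequence of reals with t^i_0 = 0 and τ̌ ≤ t^i_{k+1} − t^i_k ≤ τ̂ for all k, and for each k ∈ ℕ let N(i,k) ⊆ {1,…,n}\{i} and, for each j ∈ N(i,k), let τ^k_{ij} ∈ [0, Kτ̌]. Then for every k ∈ ℕ, the set of real numbers ({t^i_{k'} : k' ∈ ℕ} ∪ {t^i_{k'} − τ^{k'}_{ij} : k' ∈ ℕ, j ∈ N(i,k')}) ∩ [t^i_k, t^i_{k+1}) has at most K(n − 1) + 1 elements. -/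
/-!
Update times are strictly increasing with gaps at least `τ̌`, so the only update time in
`[t_k, t_{k+1})` is `t_k`, and a delayed time `t_{k'} - τ` with `0 ≤ τ ≤ K τ̌` can only fall in
this window when `k ≤ k' ≤ k + K`; for `k' = k` it must be `t_k` itself. Hence the window holds
`t_k` and, for each of the `K` indices `k' = k + 1, …, k + K`, at most `n - 1` delayed times.
-/

open Finset

section StepBounds

variable {t : ℕ → ℝ} {τlo : ℝ}

theorem natCast_mul_le_sub_of_le_step (hstep : ∀ k, τlo ≤ t (k + 1) - t k) (a m : ℕ) :
    m * τlo ≤ t (a + m) - t a := by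
  induction m with
  | zero => simp
  | succ m ih =>
    have := hstep (a + m)
    rw [← add_assoc]
    push_cast
    linarith

theorem strictMono_of_pos_le_step (hτ : 0 < τlo) (hstep : ∀ k, τlo ≤ t (k + 1) - t k) :
    StrictMono t :=
  strictMono_nat_of_lt_succ fun k => by linarith [hstep k]

theorem index_mem_Icc_of_sub_mem_Ico (hτ : 0 < τlo) (hstep : ∀ k, τlo ≤ t (k + 1) - t k)
    {K k k' : ℕ} {d : ℝ} (hd0 : 0 ≤ d) (hdK : d ≤ K * τlo)
    (hs : t k' - d ∈ Set.Ico (t k) (t (k + 1))) : k' ∈ Icc k (k + K) := by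
  have hmono := strictMono_of_pos_le_step hτ hstep
  obtain ⟨hlo, hhi⟩ := hs
  refine mem_Icc.2 ⟨?_, ?_⟩
  · by_contra! h
    linarith [hmono h]
  · by_contra! h
    have hfar : t (k + 1 + K) ≤ t k' := hmono.monotone (by omega)
    linarith [natCast_mul_le_sub_of_le_step hstep (k + 1) K]

theorem index_eq_of_mem_Ico (hτ : 0 < τlo) (hstep : ∀ k, τlo ≤ t (k + 1) - t k) {k k' : ℕ}
    (hs : t k' ∈ Set.Ico (t k) (t (k + 1))) : k' = k := by
  simpa using index_mem_Icc_of_sub_mem_Ico (K := 0) hτ hstep le_rfl (by simp) (by simpa using hs)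

end StepBounds

section DelayedTimes

variable {ι : Type*}

noncomputable def delayedTimesWindow (t : ℕ → ℝ) (N : ℕ → Finset ι) (τd : ℕ → ι → ℝ)
    (k K : ℕ) : Finset ℝ :=
  insert (t k) ((Icc (k + 1) (k + K)).biUnion fun k' => (N k').image fun j => t k' - τd k' j)

theorem card_delayedTimesWindow_le {t : ℕ → ℝ} {N : ℕ → Finset ι} {τd : ℕ → ι → ℝ} {m : ℕ}
    (hN : ∀ k', #(N k') ≤ m) (k K : ℕ) : #(delayedTimesWindow t N τd k K) ≤ K * m + 1 := by
  have hunion : #((Icc (k + 1) (k + K)).biUnion fun k' => (N k').image fun j => t k' - τd k' j)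
      ≤ K * m := by
    refine (card_biUnion_le_card_mul _ _ m fun k' _ => card_image_le.trans (hN k')).trans ?_
    simp
  exact (card_insert_le _ _).trans (by omega)

theorem subset_delayedTimesWindow {t : ℕ → ℝ} {τlo : ℝ} (hτ : 0 < τlo)
    (hstep : ∀ k, τlo ≤ t (k + 1) - t k) {K : ℕ} {N : ℕ → Finset ι} {τd : ℕ → ι → ℝ}
    (hdelay : ∀ k, ∀ j ∈ N k, τd k j ∈ Set.Icc (0 : ℝ) (K * τlo)) (k : ℕ) :
    {s : ℝ | ((∃ k', t k' = s) ∨ ∃ k', ∃ j ∈ N k', t k' - τd k' j = s) ∧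
      s ∈ Set.Ico (t k) (t (k + 1))} ⊆ delayedTimesWindow t N τd k K := by
  rintro s ⟨⟨k', rfl⟩ | ⟨k', j, hj, rfl⟩, hs⟩
  · simp [delayedTimesWindow, index_eq_of_mem_Ico hτ hstep hs]
  · obtain ⟨hd0, hdK⟩ := hdelay k' j hj
    obtain ⟨hk, hkK⟩ := mem_Icc.1 (index_mem_Icc_of_sub_mem_Ico hτ hstep hd0 hdK hs)
    rcases hk.eq_or_lt with rfl | hk
    · have : τd k j = 0 := by linarith [hs.1]
      simp [delayedTimesWindow, this]
    · refine mem_coe.2 (mem_insert_of_mem (mem_biUnion.2 ⟨k', mem_Icc.2 ⟨hk, hkK⟩, ?_⟩))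
      exact mem_image_of_mem _ hj

end DelayedTimes

theorem delayed_times_single_agent_bound_general
    (n : ℕ) (K : ℕ)
    (τlo τhi : ℝ) (hτlo : 0 < τlo)
    (i : Fin n)
    (t : ℕ → ℝ)
    (hstep : ∀ k, τlo ≤ t (k + 1) - t k ∧ t (k + 1) - t k ≤ τhi)
    (N : ℕ → Finset (Fin n)) (hNself : ∀ k, i ∉ N k)
    (τd : ℕ → Fin n → ℝ)
    (hdelay : ∀ k, ∀ j ∈ N k, τd k j ∈ Set.Icc (0 : ℝ) ((K : ℝ) * τlo))
    (k : ℕ) :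
    ({s : ℝ | ((∃ k', t k' = s) ∨ ∃ k', ∃ j ∈ N k', t k' - τd k' j = s) ∧
        s ∈ Set.Ico (t k) (t (k + 1))}).Finite ∧
    ({s : ℝ | ((∃ k', t k' = s) ∨ ∃ k', ∃ j ∈ N k', t k' - τd k' j = s) ∧
        s ∈ Set.Ico (t k) (t (k + 1))}).ncard ≤ K * (n - 1) + 1 := by
  have hsub := subset_delayedTimesWindow hτlo (fun k => (hstep k).1) hdelay k
  have hN : ∀ k', #(N k') ≤ n - 1 := fun k' => by
    have := card_lt_univ_of_notMem (hNself k')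
    simp only [Fintype.card_fin] at this
    omega
  refine ⟨(delayedTimesWindow t N τd k K).finite_toSet.subset hsub, ?_⟩
  calc _ ≤ (delayedTimesWindow t N τd k K : Set ℝ).ncard := Set.ncard_le_ncard hsub
    _ = #(delayedTimesWindow t N τd k K) := Set.ncard_coe_finset _
    _ ≤ K * (n - 1) + 1 := card_delayedTimesWindow_le hN k K

/-- For a single agent `i` with update times `t_k` and delayed times `t_{k'} - τ^{k'}_{ij}`,
any interval `[t_k, t_{k+1})` contains at most `K(n - 1) + 1` of these times. -/
theorem delayed_times_single_agent_bound
    (n : ℕ) (hn : 1 ≤ n) (K : ℕ)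
    (τlo τhi : ℝ) (hτlo : 0 < τlo) (hττ : τlo ≤ τhi)
    (i : Fin n)
    (t : ℕ → ℝ) (ht0 : t 0 = 0)
    (hstep : ∀ k, τlo ≤ t (k + 1) - t k ∧ t (k + 1) - t k ≤ τhi)
    (N : ℕ → Finset (Fin n)) (hNself : ∀ k, i ∉ N k)
    (τd : ℕ → Fin n → ℝ)
    (hdelay : ∀ k, ∀ j ∈ N k, τd k j ∈ Set.Icc (0 : ℝ) ((K : ℝ) * τlo))
    (k : ℕ) :
    ({s : ℝ | ((∃ k', t k' = s) ∨ ∃ k', ∃ j ∈ N k', t k' - τd k' j = s) ∧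
        s ∈ Set.Ico (t k) (t (k + 1))}).Finite ∧
    ({s : ℝ | ((∃ k', t k' = s) ∨ ∃ k', ∃ j ∈ N k', t k' - τd k' j = s) ∧
        s ∈ Set.Ico (t k) (t (k + 1))}).ncard ≤ K * (n - 1) + 1 :=
  delayed_times_single_agent_bound_general n K τlo τhi hτlo i t hstep N hNself τd hdelay k
end

section
/- Let n ≥ 1, K ∈ ℕ, and 0 < τ̌ ≤ τ̂ be reals. For each i ∈ {1,…,n} let (t^i_k)_{k∈ℕ} be a sequence of reals with t^i_0 = 0 and τ̌ ≤ t^i_{k+1} − t^i_k ≤ τ̂ for all k, and for each k ∈ ℕ let N(i,k) ⊆ {1,…,n}\{i} and, for each j ∈ N(i,k), let τ^k_{ij} ∈ [0, Kτ̌]. Let T ⊆ ℝ be the set of all update times and all delayed times: T = {t^i_k : i, k} ∪ {t^i_k − τ^k_{ij} : i, k, j ∈ N(i,k)}. Then for every i and every k ∈ ℕ, the set T ∩ [t^i_k, t^i_{k+1}) has at most m̌ · n · (K(n − 1) + 1) elements, where m̌ = (⌊τ̂/τ̌⌋ + 1)(n − 1) + 1. -/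
private lemma nat_set_card_le_of_diff (D : ℕ) (S : Set ℕ)
    (h : ∀ a ∈ S, ∀ b ∈ S, b ≤ a + D) : S.Finite ∧ S.ncard ≤ D + 1 := by
  rcases S.eq_empty_or_nonempty with rfl | hne
  · simp
  · have hm : sInf S ∈ S := Nat.sInf_mem hne
    have hsub : S ⊆ Set.Icc (sInf S) (sInf S + D) := fun b hb => ⟨Nat.sInf_le hb, h _ hm _ hb⟩
    refine ⟨(Set.finite_Icc _ _).subset hsub, ?_⟩
    calc S.ncard ≤ (Set.Icc (sInf S) (sInf S + D)).ncard :=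
          Set.ncard_le_ncard hsub (Set.finite_Icc _ _)
      _ ≤ D + 1 := by
          rw [← Finset.coe_Icc, Set.ncard_coe_finset, Nat.card_Icc]
          omega

private lemma final_arith (f m K : ℕ) (hK : 1 ≤ K) :
    1 + m * (f + 1) + (m + 1) * ((f + K + 1) * m)
      ≤ ((f + 1) * m + 1) * (m + 1) * (K * m + 1) := by
  rcases Nat.eq_zero_or_pos m with rfl | hm
  · simp
  · set A := (f + 1) * m + 1 with hA
    have h1 : f + 2 ≤ A := by
      have := Nat.le_mul_of_pos_right (f + 1) hm
      omega
    have h2 : f ≤ f * K := Nat.le_mul_of_pos_right f hK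
    have hfK : f + K + 1 ≤ A * K := by
      have h3 : (f + 2) * K ≤ A * K := Nat.mul_le_mul_right K h1
      have h4 : (f + 2) * K = f * K + 2 * K := by ring
      omega
    have h3 : (m + 1) * ((f + K + 1) * m) ≤ (m + 1) * ((A * K) * m) :=
      Nat.mul_le_mul_left _ (Nat.mul_le_mul_right _ hfK)
    have h4 : A ≤ A * (m + 1) := Nat.le_mul_of_pos_right A (Nat.succ_pos m)
    calc 1 + m * (f + 1) + (m + 1) * ((f + K + 1) * m)
        = A + (m + 1) * ((f + K + 1) * m) := by rw [hA]; ring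
      _ ≤ A * (m + 1) + (m + 1) * ((A * K) * m) := Nat.add_le_add h4 h3
      _ = A * (m + 1) * (K * m + 1) := by ring
      _ = ((f + 1) * m + 1) * (m + 1) * (K * m + 1) := by rw [hA]

/-- For `n` agents with update times `tⁱ_k` and delayed times `tⁱ_k - τ^k_{ij}`, any
interval `[tⁱ_k, tⁱ_{k+1})` contains at most `m̌ · n · (K(n - 1) + 1)` of these times,
where `m̌ = (⌊τ̂/τ̌⌋ + 1)(n - 1) + 1`. -/
theorem delayed_times_all_agents_bound
    (n : ℕ) (hn : 1 ≤ n) (K : ℕ)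
    (τlo τhi : ℝ) (hτlo : 0 < τlo) (hττ : τlo ≤ τhi)
    (t : Fin n → ℕ → ℝ)
    (ht0 : ∀ i, t i 0 = 0)
    (hstep : ∀ i k, τlo ≤ t i (k + 1) - t i k ∧ t i (k + 1) - t i k ≤ τhi)
    (N : Fin n → ℕ → Finset (Fin n))
    (hNself : ∀ i k, i ∉ N i k)
    (τd : Fin n → ℕ → Fin n → ℝ)
    (hdelay : ∀ i k, ∀ j ∈ N i k, τd i k j ∈ Set.Icc (0 : ℝ) ((K : ℝ) * τlo))
    (i : Fin n) (k : ℕ) :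
    ({s : ℝ | ((∃ j k', t j k' = s) ∨ ∃ j k', ∃ l ∈ N j k', t j k' - τd j k' l = s) ∧
        s ∈ Set.Ico (t i k) (t i (k + 1))}).Finite ∧
    ({s : ℝ | ((∃ j k', t j k' = s) ∨ ∃ j k', ∃ l ∈ N j k', t j k' - τd j k' l = s) ∧
        s ∈ Set.Ico (t i k) (t i (k + 1))}).ncard
      ≤ ((Nat.floor (τhi / τlo) + 1) * (n - 1) + 1) * n * (K * (n - 1) + 1) := by
  classical
  set f := Nat.floor (τhi / τlo) with hf
  set a := t i k with ha
  set b := t i (k + 1) with hb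
  set S : Set ℝ := {s : ℝ | ((∃ j k', t j k' = s) ∨ ∃ j k', ∃ l ∈ N j k', t j k' - τd j k' l = s) ∧
        s ∈ Set.Ico a b} with hS
  -- growth of update times
  have hgrow : ∀ (j : Fin n) (k' m : ℕ), t j k' + m * τlo ≤ t j (k' + m) := by
    intro j k' m
    induction m with
    | zero => simp
    | succ m ih =>
      have h1 := (hstep j (k' + m)).1
      have : ((m : ℝ) + 1) * τlo = m * τlo + τlo := by ring
      push_cast
      rw [show k' + (m + 1) = (k' + m) + 1 by omega] at *
      push_cast at ih
      linarith
  have hba : τlo ≤ b - a ∧ b - a ≤ τhi := hstep i k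
  have hfloor_nonneg : (0 : ℝ) ≤ τhi / τlo := div_nonneg (by linarith) hτlo.le
  -- per-agent counting lemma
  have hcount : ∀ (j : Fin n) (c : ℝ) (D : ℕ), c - a ≤ τhi + D * τlo →
      {k' : ℕ | t j k' ∈ Set.Ico a c}.Finite ∧
      {k' : ℕ | t j k' ∈ Set.Ico a c}.ncard ≤ f + D + 1 := by
    intro j c D hL
    have h := nat_set_card_le_of_diff (f + D) {k' : ℕ | t j k' ∈ Set.Ico a c} ?_
    · exact ⟨h.1, h.2⟩
    · intro x hx y hy
      rcases le_or_gt y x with hxy | hxy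
      · omega
      · have hg := hgrow j x (y - x)
        rw [show x + (y - x) = y by omega] at hg
        have h1 : ((y - x : ℕ) : ℝ) * τlo ≤ t j y - t j x := by linarith
        have h2 : t j y - t j x < c - a := by
          have := hx.2
          have := hy.2
          have := hx.1
          have := hy.1
          simp only [Set.mem_Ico] at hx hy
          linarith [hx.1, hy.2]
        have h3 : ((y - x : ℕ) : ℝ) * τlo < τhi + D * τlo := by linarith
        have h4 : ((y - x : ℕ) : ℝ) < (τhi + D * τlo) / τlo := (lt_div_iff₀ hτlo).mpr h3
        have h5 : (τhi + D * τlo) / τlo = τhi / τlo + D := by field_simp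
        have h6 : y - x ≤ Nat.floor (τhi / τlo + (D : ℝ)) :=
          Nat.le_floor (by rw [← h5]; exact h4.le)
        rw [Nat.floor_add_natCast hfloor_nonneg] at h6
        omega
  have hA := fun j => hcount j b 0 (by push_cast; linarith [hba.2])
  have hB := fun j => hcount j (b + K * τlo) K (by linarith [hba.2])
  set FA : Fin n → Finset ℕ := fun j => (hA j).1.toFinset with hFA
  set FB : Fin n → Finset ℕ := fun j => (hB j).1.toFinset with hFB
  have hFAmem : ∀ j k', k' ∈ FA j ↔ t j k' ∈ Set.Ico a b := fun j k' =>
    (hA j).1.mem_toFinset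
  have hFBmem : ∀ j k', k' ∈ FB j ↔ t j k' ∈ Set.Ico a (b + K * τlo) := fun j k' =>
    (hB j).1.mem_toFinset
  have hFAcard : ∀ j, (FA j).card ≤ f + 1 := by
    intro j
    rw [← Set.ncard_coe_finset, hFA]
    rw [Set.Finite.coe_toFinset]
    simpa using (hA j).2
  have hFBcard : ∀ j, (FB j).card ≤ f + K + 1 := by
    intro j
    rw [← Set.ncard_coe_finset, hFB]
    rw [Set.Finite.coe_toFinset]
    exact (hB j).2
  -- the agent i itself contributes at most one update time
  have hmono : StrictMono (t i) := strictMono_nat_of_lt_succ fun m => by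
    have := (hstep i m).1; linarith
  have hFAi : FA i ⊆ {k} := by
    intro k' hk'
    rw [hFAmem] at hk'
    simp only [Finset.mem_singleton]
    rcases Nat.lt_trichotomy k' k with h | h | h
    · exact absurd hk'.1 (not_le.mpr (hmono h))
    · exact h
    · exact absurd hk'.2 (not_lt.mpr (hmono.monotone h))
  have hFAicard : (FA i).card ≤ 1 := by
    simpa using Finset.card_le_card hFAi
  set GU : Finset ℝ := Finset.univ.biUnion (fun j => (FA j).image (t j)) with hGU
  set GD : Finset ℝ := Finset.univ.biUnion
      (fun j => ((FB j) ×ˢ (Finset.univ.erase j)).image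
        (fun p : ℕ × Fin n => t j p.1 - τd j p.1 p.2)) with hGD
  have hcardErase : ∀ j : Fin n, (Finset.univ.erase j).card = n - 1 := by
    intro j
    rw [Finset.card_erase_of_mem (Finset.mem_univ j), Finset.card_univ, Fintype.card_fin]
  have hGUcard : GU.card ≤ 1 + (n - 1) * (f + 1) := by
    refine le_trans Finset.card_biUnion_le ?_
    rw [← Finset.sum_erase_add _ _ (Finset.mem_univ i)]
    have h1 : ((FA i).image (t i)).card ≤ 1 :=
      le_trans Finset.card_image_le hFAicard
    have h2 : ∑ j ∈ Finset.univ.erase i, ((FA j).image (t j)).card ≤ (n - 1) * (f + 1) := by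
      refine le_trans (Finset.sum_le_card_nsmul _ _ (f + 1)
        (fun j _ => le_trans Finset.card_image_le (hFAcard j))) ?_
      rw [hcardErase i, smul_eq_mul]
    omega
  have hGDcard : GD.card ≤ n * ((f + K + 1) * (n - 1)) := by
    refine le_trans Finset.card_biUnion_le ?_
    refine le_trans (Finset.sum_le_card_nsmul _ _ ((f + K + 1) * (n - 1)) ?_) ?_
    · intro j _
      refine le_trans Finset.card_image_le ?_
      rw [Finset.card_product, hcardErase j]
      exact Nat.mul_le_mul_right _ (hFBcard j)
    · rw [Finset.card_univ, Fintype.card_fin, smul_eq_mul]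
  -- membership lemmas
  have hmemU : ∀ s : ℝ, (∃ j k', t j k' = s) → s ∈ Set.Ico a b → s ∈ GU := by
    rintro s ⟨j, k', rfl⟩ hs
    simp only [hGU, Finset.mem_biUnion, Finset.mem_univ, Finset.mem_image, true_and]
    exact ⟨j, k', (hFAmem j k').mpr hs, rfl⟩
  have hmemD : ∀ s : ℝ, (∃ j k', ∃ l ∈ N j k', t j k' - τd j k' l = s) →
      s ∈ Set.Ico a b → s ∈ GD := by
    rintro s ⟨j, k', l, hl, rfl⟩ hs
    simp only [hGD, Finset.mem_biUnion, Finset.mem_univ, Finset.mem_image, true_and]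
    refine ⟨j, ⟨k', l⟩, ?_, rfl⟩
    rw [Finset.mem_product]
    constructor
    · rw [hFBmem]
      obtain ⟨hd0, hdK⟩ := hdelay j k' l hl
      simp only [Set.mem_Ico] at hs ⊢
      constructor
      · linarith [hs.1]
      · linarith [hs.2]
    · exact Finset.mem_erase.mpr ⟨fun h => hNself j k' (h ▸ hl), Finset.mem_univ l⟩
  have hsub : S ⊆ ↑(GU ∪ GD) := by
    rintro s ⟨h1 | h2, hI⟩
    · exact Finset.mem_coe.mpr (Finset.mem_union_left _ (hmemU s h1 hI))
    · exact Finset.mem_coe.mpr (Finset.mem_union_right _ (hmemD s h2 hI))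
  have hSfin : S.Finite := Set.Finite.subset (Finset.finite_toSet _) hsub
  refine ⟨hSfin, ?_⟩
  rcases Nat.eq_zero_or_pos K with hK0 | hK1
  · -- K = 0 : all delays are zero, so every time is an update time
    subst hK0
    have hsub0 : S ⊆ ↑GU := by
      rintro s ⟨h1 | h2, hI⟩
      · exact Finset.mem_coe.mpr (hmemU s h1 hI)
      · obtain ⟨j, k', l, hl, rfl⟩ := h2
        obtain ⟨hd0, hdK⟩ := hdelay j k' l hl
        simp only [Nat.cast_zero, zero_mul] at hdK
        have hτ0 : τd j k' l = 0 := le_antisymm hdK hd0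
        exact Finset.mem_coe.mpr (hmemU _ ⟨j, k', by rw [hτ0]; ring⟩ hI)
    calc S.ncard ≤ (↑GU : Set ℝ).ncard :=
          Set.ncard_le_ncard hsub0 (Finset.finite_toSet _)
      _ = GU.card := Set.ncard_coe_finset _
      _ ≤ 1 + (n - 1) * (f + 1) := hGUcard
      _ ≤ ((f + 1) * (n - 1) + 1) * n * (0 * (n - 1) + 1) := by
          have : 1 + (n - 1) * (f + 1) = (f + 1) * (n - 1) + 1 := by ring
          rw [this, zero_mul, zero_add, mul_one]
          exact Nat.le_mul_of_pos_right _ hn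
  · calc S.ncard ≤ (↑(GU ∪ GD) : Set ℝ).ncard :=
          Set.ncard_le_ncard hsub (Finset.finite_toSet _)
      _ = (GU ∪ GD).card := Set.ncard_coe_finset _
      _ ≤ GU.card + GD.card := Finset.card_union_le _ _
      _ ≤ (1 + (n - 1) * (f + 1)) + n * ((f + K + 1) * (n - 1)) :=
          Nat.add_le_add hGUcard hGDcard
      _ ≤ ((f + 1) * (n - 1) + 1) * n * (K * (n - 1) + 1) := by
          obtain ⟨m, rfl⟩ : ∃ m, n = m + 1 := ⟨n - 1, by omega⟩
          simp only [Nat.add_sub_cancel]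
          have := final_arith f m K hK1
          calc 1 + m * (f + 1) + (m + 1) * ((f + K + 1) * m)
              ≤ ((f + 1) * m + 1) * (m + 1) * (K * m + 1) := this
            _ = ((f + 1) * m + 1) * (m + 1) * (K * m + 1) := rfl
end
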